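/- Limit lemma: for any divergence preorder ⊴ on results, any closed CBPV program ⊢ M : F(1+1), and any result R: result(M) ⊴ R if and only if M ⊴ⁱ R for every natural number i. -/

import Mathlib

set_option autoImplicit true
set_option maxHeartbeats 1000000

namespace GTTPaper

/-! ## Syntax of value and computation types.

Value types `A ::= ? | 0 | 1 | A + A | A × A | U B` and computation types
`B ::= ¿ | ⊤ | B & B | A → B | F A`, together with (co)recursive types
`μX.A`/`νY.B` and type variables, which are used only by the CBPV* fragment. -/

mutual
inductive VTy : Type
| dyn : VTy                      -- the dynamic value type ?
| zero : VTy
| one : VTy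
| sum : VTy → VTy → VTy
| prod : VTy → VTy → VTy
| U : CTy → VTy
| tvarV : Nat → VTy              -- value type variable (CBPV* only)
| mu : VTy → VTy                 -- recursive value type (CBPV* only)
inductive CTy : Type
| dync : CTy                     -- the dynamic computation type ¿
| top : CTy
| wth : CTy → CTy → CTy          -- lazy product B & B
| arr : VTy → CTy → CTy          -- A → B
| F : VTy → CTy
| tvarC : Nat → CTy              -- computation type variable (CBPV* only)
| nu : CTy → CTy                 -- corecursive computation type (CBPV* only)
end

def liftN (f : Nat → Nat) : Nat → Nat
| 0 => 0
| n+1 => f n + 1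

mutual
def renVTy (fv fc : Nat → Nat) : VTy → VTy
| .dyn => .dyn
| .zero => .zero
| .one => .one
| .sum A A' => .sum (renVTy fv fc A) (renVTy fv fc A')
| .prod A A' => .prod (renVTy fv fc A) (renVTy fv fc A')
| .U B => .U (renCTy fv fc B)
| .tvarV n => .tvarV (fv n)
| .mu A => .mu (renVTy (liftN fv) fc A)
def renCTy (fv fc : Nat → Nat) : CTy → CTy
| .dync => .dync
| .top => .top
| .wth B B' => .wth (renCTy fv fc B) (renCTy fv fc B')
| .arr A B => .arr (renVTy fv fc A) (renCTy fv fc B)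
| .F A => .F (renVTy fv fc A)
| .tvarC n => .tvarC (fc n)
| .nu B => .nu (renCTy fv (liftN fc) B)
end

def liftSubVV (σv : Nat → VTy) : Nat → VTy
| 0 => .tvarV 0
| n+1 => renVTy Nat.succ id (σv n)
def liftSubVC (σc : Nat → CTy) : Nat → CTy := fun n => renCTy Nat.succ id (σc n)
def liftSubCV (σv : Nat → VTy) : Nat → VTy := fun n => renVTy id Nat.succ (σv n)
def liftSubCC (σc : Nat → CTy) : Nat → CTy
| 0 => .tvarC 0
| n+1 => renCTy id Nat.succ (σc n)

mutual
def subVTy (σv : Nat → VTy) (σc : Nat → CTy) : VTy → VTy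
| .dyn => .dyn
| .zero => .zero
| .one => .one
| .sum A A' => .sum (subVTy σv σc A) (subVTy σv σc A')
| .prod A A' => .prod (subVTy σv σc A) (subVTy σv σc A')
| .U B => .U (subCTy σv σc B)
| .tvarV n => σv n
| .mu A => .mu (subVTy (liftSubVV σv) (liftSubVC σc) A)
def subCTy (σv : Nat → VTy) (σc : Nat → CTy) : CTy → CTy
| .dync => .dync
| .top => .top
| .wth B B' => .wth (subCTy σv σc B) (subCTy σv σc B')
| .arr A B => .arr (subVTy σv σc A) (subCTy σv σc B)
| .F A => .F (subVTy σv σc A)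
| .tvarC n => σc n
| .nu B => .nu (subCTy (liftSubCV σv) (liftSubCC σc) B)
end

/-- The one-step unfolding `A[μX.A/X]` of the recursive type `μX.A`. -/
def muUnfold (A : VTy) : VTy :=
  subVTy (fun n => match n with | 0 => .mu A | n+1 => .tvarV n) (fun n => .tvarC n) A
/-- The one-step unfolding `B[νY.B/Y]` of the corecursive type `νY.B`. -/
def nuUnfold (B : CTy) : CTy :=
  subCTy (fun n => .tvarV n) (fun n => match n with | 0 => .nu B | n+1 => .tvarC n) B

-- A "basic" (GTT) type: one not mentioning (co)recursive types or type variables.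
mutual
def VTy.basic : VTy → Prop
| .dyn => True
| .zero => True
| .one => True
| .sum A A' => A.basic ∧ A'.basic
| .prod A A' => A.basic ∧ A'.basic
| .U B => B.basic
| .tvarV _ => False
| .mu _ => False
def CTy.basic : CTy → Prop
| .dync => True
| .top => True
| .wth B B' => B.basic ∧ B'.basic
| .arr A B => A.basic ∧ B.basic
| .F A => A.basic
| .tvarC _ => False
| .nu _ => False
end

/-! ## Type dynamism A ⊑ A', B ⊑ B' : the least reflexive transitive congruence
with `A ⊑ ?` and `B ⊑ ¿` for every (GTT) type. -/

mutual
inductive VDyn : VTy → VTy → Prop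
| refl (A : VTy) : VDyn A A
| trans : VDyn A A' → VDyn A' A'' → VDyn A A''
| dyn : VTy.basic A → VDyn A .dyn
| sum : VDyn A₁ A₁' → VDyn A₂ A₂' → VDyn (.sum A₁ A₂) (.sum A₁' A₂')
| prod : VDyn A₁ A₁' → VDyn A₂ A₂' → VDyn (.prod A₁ A₂) (.prod A₁' A₂')
| U : CDyn B B' → VDyn (.U B) (.U B')
inductive CDyn : CTy → CTy → Prop
| refl (B : CTy) : CDyn B B
| trans : CDyn B B' → CDyn B' B'' → CDyn B B''
| dync : CTy.basic B → CDyn B .dync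
| wth : CDyn B₁ B₁' → CDyn B₂ B₂' → CDyn (.wth B₁ B₂) (.wth B₁' B₂')
| arr : VDyn A A' → CDyn B B' → CDyn (.arr A B) (.arr A' B')
| F : VDyn A A' → CDyn (.F A) (.F A')
end

/-! ## Term syntax: complex values `V`, and computations/stacks `M`,`S`.

Terms are raw, with de Bruijn indices for value variables and a single
distinguished stack hole `•`.  The cast terms `⟨A'↢A⟩V` (`up`) and `⟨B↞B'⟩M`
(`dn`) record their types. -/

mutual
inductive Val : Type
| var : Nat → Val
| up : VTy → VTy → Val → Val          -- ⟨A'↢A⟩V  (up A A' V)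
| unit : Val                           -- ()
| inl : Val → Val
| inr : Val → Val
| pair : Val → Val → Val
| abortV : Val → Val                   -- abort V (complex value)
| caseV : Val → Val → Val → Val        -- case V of {x₁.W₁ | x₂.W₂} (branches bind 1 var)
| splitPV : Val → Val → Val            -- split V to (x,y).W  (body binds 2 vars: 1 = x, 0 = y)
| splitUV : Val → Val → Val            -- split V to ().W
| rollV : VTy → Val → Val              -- roll_{μX.A} V
| unrollPV : Val → Val → Val           -- pm V as roll x. W (body binds 1 var)
| thunk : Comp → Val
inductive Comp : Type
| hole : Comp                          -- the stack hole •
| err : Comp                           -- ℧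
| dn : CTy → CTy → Comp → Comp         -- ⟨B↞B'⟩M  (dn B B' M)
| force : Val → Comp
| ret : Val → Comp
| bind : Comp → Comp → Comp            -- bind M (x. N)
| lam : Comp → Comp                    -- λx.M
| app : Comp → Val → Comp
| unitC : Comp                         -- {}
| pairC : Comp → Comp → Comp           -- ⟨M₁, M₂⟩
| fst : Comp → Comp                    -- π
| snd : Comp → Comp                    -- π'
| abortC : Val → Comp                 -- abort V (computation)
| caseC : Val → Comp → Comp → Comp     -- case V of {x₁.M₁ | x₂.M₂}
| splitPC : Val → Comp → Comp
| splitUC : Val → Comp → Comp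
| unrollPC : Val → Comp → Comp
| rollC : CTy → Comp → Comp            -- roll_{νY.B} M
| unrollC : Comp → Comp
end

/-! ### Renaming, substitution and plugging of stacks. -/

mutual
def renV (f : Nat → Nat) : Val → Val
| .var n => .var (f n)
| .up A A' V => .up A A' (renV f V)
| .unit => .unit
| .inl V => .inl (renV f V)
| .inr V => .inr (renV f V)
| .pair V W => .pair (renV f V) (renV f W)
| .abortV V => .abortV (renV f V)
| .caseV V W₁ W₂ => .caseV (renV f V) (renV (liftN f) W₁) (renV (liftN f) W₂)
| .splitPV V W => .splitPV (renV f V) (renV (liftN (liftN f)) W)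
| .splitUV V W => .splitUV (renV f V) (renV f W)
| .rollV T V => .rollV T (renV f V)
| .unrollPV V W => .unrollPV (renV f V) (renV (liftN f) W)
| .thunk M => .thunk (renC f M)
def renC (f : Nat → Nat) : Comp → Comp
| .hole => .hole
| .err => .err
| .dn B B' M => .dn B B' (renC f M)
| .force V => .force (renV f V)
| .ret V => .ret (renV f V)
| .bind M N => .bind (renC f M) (renC (liftN f) N)
| .lam M => .lam (renC (liftN f) M)
| .app M V => .app (renC f M) (renV f V)
| .unitC => .unitC
| .pairC M N => .pairC (renC f M) (renC f N)
| .fst M => .fst (renC f M)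
| .snd M => .snd (renC f M)
| .abortC V => .abortC (renV f V)
| .caseC V M₁ M₂ => .caseC (renV f V) (renC (liftN f) M₁) (renC (liftN f) M₂)
| .splitPC V M => .splitPC (renV f V) (renC (liftN (liftN f)) M)
| .splitUC V M => .splitUC (renV f V) (renC f M)
| .unrollPC V M => .unrollPC (renV f V) (renC (liftN f) M)
| .rollC T M => .rollC T (renC f M)
| .unrollC M => .unrollC (renC f M)
end

def liftSub (σ : Nat → Val) : Nat → Val
| 0 => .var 0
| n+1 => renV Nat.succ (σ n)

mutual
def subV (σ : Nat → Val) : Val → Val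
| .var n => σ n
| .up A A' V => .up A A' (subV σ V)
| .unit => .unit
| .inl V => .inl (subV σ V)
| .inr V => .inr (subV σ V)
| .pair V W => .pair (subV σ V) (subV σ W)
| .abortV V => .abortV (subV σ V)
| .caseV V W₁ W₂ => .caseV (subV σ V) (subV (liftSub σ) W₁) (subV (liftSub σ) W₂)
| .splitPV V W => .splitPV (subV σ V) (subV (liftSub (liftSub σ)) W)
| .splitUV V W => .splitUV (subV σ V) (subV σ W)
| .rollV T V => .rollV T (subV σ V)
| .unrollPV V W => .unrollPV (subV σ V) (subV (liftSub σ) W)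
| .thunk M => .thunk (subC σ M)
def subC (σ : Nat → Val) : Comp → Comp
| .hole => .hole
| .err => .err
| .dn B B' M => .dn B B' (subC σ M)
| .force V => .force (subV σ V)
| .ret V => .ret (subV σ V)
| .bind M N => .bind (subC σ M) (subC (liftSub σ) N)
| .lam M => .lam (subC (liftSub σ) M)
| .app M V => .app (subC σ M) (subV σ V)
| .unitC => .unitC
| .pairC M N => .pairC (subC σ M) (subC σ N)
| .fst M => .fst (subC σ M)
| .snd M => .snd (subC σ M)
| .abortC V => .abortC (subV σ V)
| .caseC V M₁ M₂ => .caseC (subV σ V) (subC (liftSub σ) M₁) (subC (liftSub σ) M₂)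
| .splitPC V M => .splitPC (subV σ V) (subC (liftSub (liftSub σ)) M)
| .splitUC V M => .splitUC (subV σ V) (subC σ M)
| .unrollPC V M => .unrollPC (subV σ V) (subC (liftSub σ) M)
| .rollC T M => .rollC T (subC σ M)
| .unrollC M => .unrollC (subC σ M)
end

def sub0 (V : Val) : Nat → Val
| 0 => V
| n+1 => .var n
/-- Single substitution `W[V/x₀]` in a value. -/
def sub0V (V : Val) (W : Val) : Val := subV (sub0 V) W
/-- Single substitution `M[V/x₀]` in a computation. -/
def sub0C (V : Val) (M : Comp) : Comp := subC (sub0 V) M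
def sub2 (V₁ V₂ : Val) : Nat → Val
| 0 => V₂
| 1 => V₁
| n+2 => .var n
/-- Substitution `M[V₁/x₁, V₂/x₀]` for the two variables bound by a pair split. -/
def sub2C (V₁ V₂ : Val) (M : Comp) : Comp := subC (sub2 V₁ V₂) M

mutual
def plugV (M : Comp) (d : Nat) : Val → Val
| .var n => .var n
| .up A A' V => .up A A' (plugV M d V)
| .unit => .unit
| .inl V => .inl (plugV M d V)
| .inr V => .inr (plugV M d V)
| .pair V W => .pair (plugV M d V) (plugV M d W)
| .abortV V => .abortV (plugV M d V)
| .caseV V W₁ W₂ => .caseV (plugV M d V) (plugV M (d+1) W₁) (plugV M (d+1) W₂)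
| .splitPV V W => .splitPV (plugV M d V) (plugV M (d+2) W)
| .splitUV V W => .splitUV (plugV M d V) (plugV M d W)
| .rollV T V => .rollV T (plugV M d V)
| .unrollPV V W => .unrollPV (plugV M d V) (plugV M (d+1) W)
| .thunk N => .thunk (plugC M d N)
def plugC (M : Comp) (d : Nat) : Comp → Comp
| .hole => renC (· + d) M
| .err => .err
| .dn B B' N => .dn B B' (plugC M d N)
| .force V => .force (plugV M d V)
| .ret V => .ret (plugV M d V)
| .bind N₁ N₂ => .bind (plugC M d N₁) (plugC M (d+1) N₂)
| .lam N => .lam (plugC M (d+1) N)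
| .app N V => .app (plugC M d N) (plugV M d V)
| .unitC => .unitC
| .pairC N₁ N₂ => .pairC (plugC M d N₁) (plugC M d N₂)
| .fst N => .fst (plugC M d N)
| .snd N => .snd (plugC M d N)
| .abortC V => .abortC (plugV M d V)
| .caseC V N₁ N₂ => .caseC (plugV M d V) (plugC M (d+1) N₁) (plugC M (d+1) N₂)
| .splitPC V N => .splitPC (plugV M d V) (plugC M (d+2) N)
| .splitUC V N => .splitUC (plugV M d V) (plugC M d N)
| .unrollPC V N => .unrollPC (plugV M d V) (plugC M (d+1) N)
| .rollC T N => .rollC T (plugC M d N)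
| .unrollC N => .unrollC (plugC M d N)
end

/-- `plug S M` plugs the computation `M` into the hole `•` of the stack `S`
(shifting the free variables of `M` past any binders of `S`). -/
def plug (S M : Comp) : Comp := plugC M 0 S

/-! ## Theories.

A `Policy` determines a particular theory over the shared syntax:
* `up`/`dn` say which primitive casts the theory has
  (GTT: all casts along type dynamism; GTT_G: only ground casts; CBPV*/CBPV: none),
* `recty` says whether (co)recursive types are present (CBPV*/CBPV only),
* `cx` says whether complex values and complex stacks are permitted
  (everywhere except operational CBPV). -/

structure Policy : Type where
  up : VTy → VTy → Prop
  dn : CTy → CTy → Prop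
  recty : Prop
  cx : Prop

abbrev Ctx := List VTy

/-- Pointwise type dynamism of contexts, `Φ : Γ ⊑ Γ'`. -/
def CtxDyn : Ctx → Ctx → Prop := List.Forall₂ VDyn

/-- Dynamism of stoups, `Ψ : Δ ⊑ Δ'`. -/
def StoupDyn : Option CTy → Option CTy → Prop
| none, none => True
| some B, some B' => CDyn B B'
| _, _ => False

/-- Stoup condition for the complex-stack forming rules: the rule forms a
complex stack when the stoup is nonempty, which requires `P.cx`. -/
def StoupOK (P : Policy) : Option CTy → Prop := fun Δ => Δ = none ∨ P.cx

/-! ## Typing: `Γ ⊢ V : A` and `Γ | Δ ⊢ M : B`. -/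

mutual
inductive VTyping (P : Policy) : Ctx → Val → VTy → Prop
| var {Γ : Ctx} {n : Nat} {A : VTy} :
    Γ[n]? = some A → VTyping P Γ (.var n) A
| up : P.up A A' → VTyping P Γ V A → VTyping P Γ (.up A A' V) A'
| unit : VTyping P Γ .unit .one
| inl : VTyping P Γ V A₁ → VTyping P Γ (.inl V) (.sum A₁ A₂)
| inr : VTyping P Γ V A₂ → VTyping P Γ (.inr V) (.sum A₁ A₂)
| pair : VTyping P Γ V₁ A₁ → VTyping P Γ V₂ A₂ → VTyping P Γ (.pair V₁ V₂) (.prod A₁ A₂)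
| abortV : P.cx → VTyping P Γ V .zero → VTyping P Γ (.abortV V) A
| caseV : P.cx → VTyping P Γ V (.sum A₁ A₂) → VTyping P (A₁::Γ) W₁ C →
    VTyping P (A₂::Γ) W₂ C → VTyping P Γ (.caseV V W₁ W₂) C
| splitPV : P.cx → VTyping P Γ V (.prod A₁ A₂) → VTyping P (A₂::A₁::Γ) W C →
    VTyping P Γ (.splitPV V W) C
| splitUV : P.cx → VTyping P Γ V .one → VTyping P Γ W C → VTyping P Γ (.splitUV V W) C
| rollV : P.recty → VTyping P Γ V (muUnfold A) → VTyping P Γ (.rollV (.mu A) V) (.mu A)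
| unrollPV : P.cx → P.recty → VTyping P Γ V (.mu A) →
    VTyping P ((muUnfold A)::Γ) W C → VTyping P Γ (.unrollPV V W) C
| thunk : CTyping P Γ none M B → VTyping P Γ (.thunk M) (.U B)
inductive CTyping (P : Policy) : Ctx → Option CTy → Comp → CTy → Prop
| hole : CTyping P Γ (some B) .hole B
| err : CTyping P Γ none .err B
| dn : P.dn B B' → CTyping P Γ Δ M B' → CTyping P Γ Δ (.dn B B' M) B
| force : VTyping P Γ V (.U B) → CTyping P Γ none (.force V) B
| ret : VTyping P Γ V A → CTyping P Γ none (.ret V) (.F A)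
| bind : CTyping P Γ Δ M (.F A) → CTyping P (A::Γ) none N B →
    CTyping P Γ Δ (.bind M N) B
| lam : StoupOK P Δ → CTyping P (A::Γ) Δ M B → CTyping P Γ Δ (.lam M) (.arr A B)
| app : CTyping P Γ Δ M (.arr A B) → VTyping P Γ V A → CTyping P Γ Δ (.app M V) B
| unitC : StoupOK P Δ → CTyping P Γ Δ .unitC .top
| pairC : StoupOK P Δ → CTyping P Γ Δ M₁ B₁ → CTyping P Γ Δ M₂ B₂ →
    CTyping P Γ Δ (.pairC M₁ M₂) (.wth B₁ B₂)
| fst : CTyping P Γ Δ M (.wth B₁ B₂) → CTyping P Γ Δ (.fst M) B₁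
| snd : CTyping P Γ Δ M (.wth B₁ B₂) → CTyping P Γ Δ (.snd M) B₂
| abortC : StoupOK P Δ → VTyping P Γ V .zero → CTyping P Γ Δ (.abortC V) B
| caseC : StoupOK P Δ → VTyping P Γ V (.sum A₁ A₂) → CTyping P (A₁::Γ) Δ M₁ B →
    CTyping P (A₂::Γ) Δ M₂ B → CTyping P Γ Δ (.caseC V M₁ M₂) B
| splitPC : StoupOK P Δ → VTyping P Γ V (.prod A₁ A₂) → CTyping P (A₂::A₁::Γ) Δ M B →
    CTyping P Γ Δ (.splitPC V M) B
| splitUC : StoupOK P Δ → VTyping P Γ V .one → CTyping P Γ Δ M B →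
    CTyping P Γ Δ (.splitUC V M) B
| unrollPC : StoupOK P Δ → P.recty → VTyping P Γ V (.mu A) →
    CTyping P ((muUnfold A)::Γ) Δ M B → CTyping P Γ Δ (.unrollPC V M) B
| rollC : P.recty → CTyping P Γ Δ M (nuUnfold B) → CTyping P Γ Δ (.rollC (.nu B) M) (.nu B)
| unrollC : P.recty → CTyping P Γ Δ M (.nu B) → CTyping P Γ Δ (.unrollC M) (nuUnfold B)
end

/-! ### Substitutions used to state the η laws. -/

/-- `E[inl x₁/x]` where `x` is variable 0 and `x₁` the freshly bound variable. -/
def etaSumL : Nat → Val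
| 0 => .inl (.var 0)
| n+1 => .var (n+2)
def etaSumR : Nat → Val
| 0 => .inr (.var 0)
| n+1 => .var (n+2)
/-- `E[(x₁,x₂)/x]` in the body of a pair split. -/
def etaProd : Nat → Val
| 0 => .pair (.var 1) (.var 0)
| n+1 => .var (n+3)
/-- `E[()/x]`. -/
def etaOne : Nat → Val
| 0 => .unit
| n+1 => .var (n+1)
/-- `E[roll y/x]`. -/
def etaMu (A : VTy) : Nat → Val
| 0 => .rollV (.mu A) (.var 0)
| n+1 => .var (n+2)

/-! ## Term dynamism.

`VLe P Γ Γ' V V' A A'` is the heterogeneous term dynamism judgement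
`Γ ⊑ Γ' ⊢ V ⊑ V' : A ⊑ A'`, and `CLe P Γ Γ' Δ Δ' M M' B B'` is
`Γ ⊑ Γ' | Δ ⊑ Δ' ⊢ M ⊑ M' : B ⊑ B'`.  It is the least relation closed under
reflexivity, transitivity, substitution and congruence for all term
constructors, together with the βη laws of each connective (in both
directions), the error axioms (℧ is a least element and stacks are strict in
errors), the universal-property axioms for the casts provided by the policy,
and the retract axioms. -/

mutual
inductive VLe (P : Policy) : Ctx → Ctx → Val → Val → VTy → VTy → Prop
-- structural rules
| refl : VTyping P Γ V A → VLe P Γ Γ V V A A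
| trans : VLe P Γ Γ' V V' A A' → VLe P Γ' Γ'' V' V'' A' A'' → VLe P Γ Γ'' V V'' A A''
| var {Γ Γ' : Ctx} {n : Nat} {A A' : VTy} : CtxDyn Γ Γ' →
    Γ[n]? = some A → Γ'[n]? = some A' → VLe P Γ Γ' (.var n) (.var n) A A'
| substVV : VLe P Γ Γ' V V' A A' → VLe P (A::Γ) (A'::Γ') W W' C C' →
    VLe P Γ Γ' (sub0V V W) (sub0V V' W') C C'
-- congruence rules
| inlCong : VLe P Γ Γ' V V' A₁ A₁' → VDyn A₂ A₂' →
    VLe P Γ Γ' (.inl V) (.inl V') (.sum A₁ A₂) (.sum A₁' A₂')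
| inrCong : VDyn A₁ A₁' → VLe P Γ Γ' V V' A₂ A₂' →
    VLe P Γ Γ' (.inr V) (.inr V') (.sum A₁ A₂) (.sum A₁' A₂')
| unitCong : CtxDyn Γ Γ' → VLe P Γ Γ' .unit .unit .one .one
| pairCong : VLe P Γ Γ' V₁ V₁' A₁ A₁' → VLe P Γ Γ' V₂ V₂' A₂ A₂' →
    VLe P Γ Γ' (.pair V₁ V₂) (.pair V₁' V₂') (.prod A₁ A₂) (.prod A₁' A₂')
| thunkCong : CLe P Γ Γ' none none M M' B B' →
    VLe P Γ Γ' (.thunk M) (.thunk M') (.U B) (.U B')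
| abortVCong : P.cx → VDyn C C' → VLe P Γ Γ' V V' .zero .zero →
    VLe P Γ Γ' (.abortV V) (.abortV V') C C'
| caseVCong : P.cx → VLe P Γ Γ' V V' (.sum A₁ A₂) (.sum A₁' A₂') →
    VLe P (A₁::Γ) (A₁'::Γ') W₁ W₁' C C' → VLe P (A₂::Γ) (A₂'::Γ') W₂ W₂' C C' →
    VLe P Γ Γ' (.caseV V W₁ W₂) (.caseV V' W₁' W₂') C C'
| splitPVCong : P.cx → VLe P Γ Γ' V V' (.prod A₁ A₂) (.prod A₁' A₂') →
    VLe P (A₂::A₁::Γ) (A₂'::A₁'::Γ') W W' C C' →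
    VLe P Γ Γ' (.splitPV V W) (.splitPV V' W') C C'
| splitUVCong : P.cx → VLe P Γ Γ' V V' .one .one → VLe P Γ Γ' W W' C C' →
    VLe P Γ Γ' (.splitUV V W) (.splitUV V' W') C C'
| rollVCong : P.recty → VLe P Γ Γ' V V' (muUnfold A) (muUnfold A) →
    VLe P Γ Γ' (.rollV (.mu A) V) (.rollV (.mu A) V') (.mu A) (.mu A)
| unrollPVCong : P.cx → P.recty → VLe P Γ Γ' V V' (.mu A) (.mu A) →
    VLe P ((muUnfold A)::Γ) ((muUnfold A)::Γ') W W' C C' →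
    VLe P Γ Γ' (.unrollPV V W) (.unrollPV V' W') C C'
-- universal property axioms for value upcasts
| upBound : P.up A A' → VLe P [A] [A] (.var 0) (.up A A' (.var 0)) A A'
| upBest : P.up A A' → VLe P [A] [A'] (.up A A' (.var 0)) (.var 0) A' A'
-- βη laws (value versions)
| sumVBetaL : P.cx → VTyping P Γ V A₁ → VTyping P (A₁::Γ) W₁ C → VTyping P (A₂::Γ) W₂ C →
    VLe P Γ Γ (.caseV (.inl V) W₁ W₂) (sub0V V W₁) C C
| sumVBetaL' : P.cx → VTyping P Γ V A₁ → VTyping P (A₁::Γ) W₁ C → VTyping P (A₂::Γ) W₂ C →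
    VLe P Γ Γ (sub0V V W₁) (.caseV (.inl V) W₁ W₂) C C
| sumVBetaR : P.cx → VTyping P Γ V A₂ → VTyping P (A₁::Γ) W₁ C → VTyping P (A₂::Γ) W₂ C →
    VLe P Γ Γ (.caseV (.inr V) W₁ W₂) (sub0V V W₂) C C
| sumVBetaR' : P.cx → VTyping P Γ V A₂ → VTyping P (A₁::Γ) W₁ C → VTyping P (A₂::Γ) W₂ C →
    VLe P Γ Γ (sub0V V W₂) (.caseV (.inr V) W₁ W₂) C C
| sumVEta : P.cx → VTyping P (.sum A₁ A₂ :: Γ) W C →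
    VLe P (.sum A₁ A₂ :: Γ) (.sum A₁ A₂ :: Γ) W
      (.caseV (.var 0) (subV etaSumL W) (subV etaSumR W)) C C
| sumVEta' : P.cx → VTyping P (.sum A₁ A₂ :: Γ) W C →
    VLe P (.sum A₁ A₂ :: Γ) (.sum A₁ A₂ :: Γ)
      (.caseV (.var 0) (subV etaSumL W) (subV etaSumR W)) W C C
| zeroVEta : P.cx → VTyping P (.zero :: Γ) W C →
    VLe P (.zero :: Γ) (.zero :: Γ) W (.abortV (.var 0)) C C
| zeroVEta' : P.cx → VTyping P (.zero :: Γ) W C →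
    VLe P (.zero :: Γ) (.zero :: Γ) (.abortV (.var 0)) W C C
| prodVBeta : P.cx → VTyping P Γ V₁ A₁ → VTyping P Γ V₂ A₂ → VTyping P (A₂::A₁::Γ) W C →
    VLe P Γ Γ (.splitPV (.pair V₁ V₂) W) (subV (sub2 V₁ V₂) W) C C
| prodVBeta' : P.cx → VTyping P Γ V₁ A₁ → VTyping P Γ V₂ A₂ → VTyping P (A₂::A₁::Γ) W C →
    VLe P Γ Γ (subV (sub2 V₁ V₂) W) (.splitPV (.pair V₁ V₂) W) C C
| prodVEta : P.cx → VTyping P (.prod A₁ A₂ :: Γ) W C →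
    VLe P (.prod A₁ A₂ :: Γ) (.prod A₁ A₂ :: Γ) W (.splitPV (.var 0) (subV etaProd W)) C C
| prodVEta' : P.cx → VTyping P (.prod A₁ A₂ :: Γ) W C →
    VLe P (.prod A₁ A₂ :: Γ) (.prod A₁ A₂ :: Γ) (.splitPV (.var 0) (subV etaProd W)) W C C
| oneVBeta : P.cx → VTyping P Γ W C → VLe P Γ Γ (.splitUV .unit W) W C C
| oneVBeta' : P.cx → VTyping P Γ W C → VLe P Γ Γ W (.splitUV .unit W) C C
| oneVEta : P.cx → VTyping P (.one :: Γ) W C →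
    VLe P (.one :: Γ) (.one :: Γ) W (.splitUV (.var 0) (subV etaOne W)) C C
| oneVEta' : P.cx → VTyping P (.one :: Γ) W C →
    VLe P (.one :: Γ) (.one :: Γ) (.splitUV (.var 0) (subV etaOne W)) W C C
| muVBeta : P.cx → P.recty → VTyping P Γ V (muUnfold A) → VTyping P ((muUnfold A)::Γ) W C →
    VLe P Γ Γ (.unrollPV (.rollV (.mu A) V) W) (sub0V V W) C C
| muVBeta' : P.cx → P.recty → VTyping P Γ V (muUnfold A) → VTyping P ((muUnfold A)::Γ) W C →
    VLe P Γ Γ (sub0V V W) (.unrollPV (.rollV (.mu A) V) W) C C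
| muVEta : P.cx → P.recty → VTyping P (.mu A :: Γ) W C →
    VLe P (.mu A :: Γ) (.mu A :: Γ) W (.unrollPV (.var 0) (subV (etaMu A) W)) C C
| muVEta' : P.cx → P.recty → VTyping P (.mu A :: Γ) W C →
    VLe P (.mu A :: Γ) (.mu A :: Γ) (.unrollPV (.var 0) (subV (etaMu A) W)) W C C
| uEta : VTyping P Γ V (.U B) → VLe P Γ Γ V (.thunk (.force V)) (.U B) (.U B)
| uEta' : VTyping P Γ V (.U B) → VLe P Γ Γ (.thunk (.force V)) V (.U B) (.U B)
inductive CLe (P : Policy) : Ctx → Ctx → Option CTy → Option CTy → Comp → Comp → CTy → CTy → Prop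
-- structural rules
| refl : CTyping P Γ Δ M B → CLe P Γ Γ Δ Δ M M B B
| trans : CLe P Γ Γ' Δ Δ' M M' B B' → CLe P Γ' Γ'' Δ' Δ'' M' M'' B' B'' →
    CLe P Γ Γ'' Δ Δ'' M M'' B B''
| hole : CtxDyn Γ Γ' → CDyn B B' → CLe P Γ Γ' (some B) (some B') .hole .hole B B'
| substVC : VLe P Γ Γ' V V' A A' → CLe P (A::Γ) (A'::Γ') Δ Δ' M M' B B' →
    CLe P Γ Γ' Δ Δ' (sub0C V M) (sub0C V' M') B B'
| plugCong : CLe P Γ Γ' Δ Δ' M M' B₁ B₁' →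
    CLe P Γ Γ' (some B₁) (some B₁') S S' B₂ B₂' →
    CLe P Γ Γ' Δ Δ' (plug S M) (plug S' M') B₂ B₂'
-- error axioms
| errBot : CtxDyn Γ Γ' → CDyn B B' → CTyping P Γ' none M' B' →
    CLe P Γ Γ' none none .err M' B B'
| errStrict : CTyping P Γ (some B) S B' → CLe P Γ Γ none none (plug S .err) .err B' B'
-- congruence rules
| forceCong : VLe P Γ Γ' V V' (.U B) (.U B') → CLe P Γ Γ' none none (.force V) (.force V') B B'
| retCong : VLe P Γ Γ' V V' A A' → CLe P Γ Γ' none none (.ret V) (.ret V') (.F A) (.F A')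
| bindCong : CLe P Γ Γ' Δ Δ' M M' (.F A) (.F A') → CLe P (A::Γ) (A'::Γ') none none N N' B B' →
    CLe P Γ Γ' Δ Δ' (.bind M N) (.bind M' N') B B'
| lamCong : StoupOK P Δ → VDyn A A' → CLe P (A::Γ) (A'::Γ') Δ Δ' M M' B B' →
    CLe P Γ Γ' Δ Δ' (.lam M) (.lam M') (.arr A B) (.arr A' B')
| appCong : CLe P Γ Γ' Δ Δ' M M' (.arr A B) (.arr A' B') → VLe P Γ Γ' V V' A A' →
    CLe P Γ Γ' Δ Δ' (.app M V) (.app M' V') B B'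
| unitCCong : StoupOK P Δ → CtxDyn Γ Γ' → StoupDyn Δ Δ' →
    CLe P Γ Γ' Δ Δ' .unitC .unitC .top .top
| pairCCong : StoupOK P Δ → CLe P Γ Γ' Δ Δ' M₁ M₁' B₁ B₁' → CLe P Γ Γ' Δ Δ' M₂ M₂' B₂ B₂' →
    CLe P Γ Γ' Δ Δ' (.pairC M₁ M₂) (.pairC M₁' M₂') (.wth B₁ B₂) (.wth B₁' B₂')
| fstCong : CLe P Γ Γ' Δ Δ' M M' (.wth B₁ B₂) (.wth B₁' B₂') →
    CLe P Γ Γ' Δ Δ' (.fst M) (.fst M') B₁ B₁'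
| sndCong : CLe P Γ Γ' Δ Δ' M M' (.wth B₁ B₂) (.wth B₁' B₂') →
    CLe P Γ Γ' Δ Δ' (.snd M) (.snd M') B₂ B₂'
| abortCCong : StoupOK P Δ → StoupDyn Δ Δ' → CDyn B B' → VLe P Γ Γ' V V' .zero .zero →
    CLe P Γ Γ' Δ Δ' (.abortC V) (.abortC V') B B'
| caseCCong : StoupOK P Δ → VLe P Γ Γ' V V' (.sum A₁ A₂) (.sum A₁' A₂') →
    CLe P (A₁::Γ) (A₁'::Γ') Δ Δ' M₁ M₁' B B' → CLe P (A₂::Γ) (A₂'::Γ') Δ Δ' M₂ M₂' B B' →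
    CLe P Γ Γ' Δ Δ' (.caseC V M₁ M₂) (.caseC V' M₁' M₂') B B'
| splitPCCong : StoupOK P Δ → VLe P Γ Γ' V V' (.prod A₁ A₂) (.prod A₁' A₂') →
    CLe P (A₂::A₁::Γ) (A₂'::A₁'::Γ') Δ Δ' M M' B B' →
    CLe P Γ Γ' Δ Δ' (.splitPC V M) (.splitPC V' M') B B'
| splitUCCong : StoupOK P Δ → VLe P Γ Γ' V V' .one .one → CLe P Γ Γ' Δ Δ' M M' B B' →
    CLe P Γ Γ' Δ Δ' (.splitUC V M) (.splitUC V' M') B B'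
| unrollPCCong : StoupOK P Δ → P.recty → VLe P Γ Γ' V V' (.mu A) (.mu A) →
    CLe P ((muUnfold A)::Γ) ((muUnfold A)::Γ') Δ Δ' M M' B B' →
    CLe P Γ Γ' Δ Δ' (.unrollPC V M) (.unrollPC V' M') B B'
| rollCCong : P.recty → CLe P Γ Γ' Δ Δ' M M' (nuUnfold B) (nuUnfold B) →
    CLe P Γ Γ' Δ Δ' (.rollC (.nu B) M) (.rollC (.nu B) M') (.nu B) (.nu B)
| unrollCCong : P.recty → CLe P Γ Γ' Δ Δ' M M' (.nu B) (.nu B) →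
    CLe P Γ Γ' Δ Δ' (.unrollC M) (.unrollC M') (nuUnfold B) (nuUnfold B)
-- universal property axioms for stack downcasts
| dnBound : P.dn B B' → CLe P [] [] (some B') (some B') (.dn B B' .hole) .hole B B'
| dnBest : P.dn B B' → CLe P [] [] (some B) (some B') .hole (.dn B B' .hole) B B
-- retract axioms for the casts into the dynamic types
| retractF : P.up A .dyn → P.dn (.F A) (.F .dyn) →
    CLe P [A] [A] none none
      (.dn (.F A) (.F .dyn) (.ret (.up A .dyn (.var 0)))) (.ret (.var 0)) (.F A) (.F A)
| retractU : P.up (.U B) (.U .dync) → P.dn B .dync →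
    CLe P [.U B] [.U B] none none
      (.dn B .dync (.force (.up (.U B) (.U .dync) (.var 0)))) (.force (.var 0)) B B
-- βη laws (computation versions)
| sumCBetaL : StoupOK P Δ → VTyping P Γ V A₁ → CTyping P (A₁::Γ) Δ M₁ B → CTyping P (A₂::Γ) Δ M₂ B →
    CLe P Γ Γ Δ Δ (.caseC (.inl V) M₁ M₂) (sub0C V M₁) B B
| sumCBetaL' : StoupOK P Δ → VTyping P Γ V A₁ → CTyping P (A₁::Γ) Δ M₁ B → CTyping P (A₂::Γ) Δ M₂ B →
    CLe P Γ Γ Δ Δ (sub0C V M₁) (.caseC (.inl V) M₁ M₂) B B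
| sumCBetaR : StoupOK P Δ → VTyping P Γ V A₂ → CTyping P (A₁::Γ) Δ M₁ B → CTyping P (A₂::Γ) Δ M₂ B →
    CLe P Γ Γ Δ Δ (.caseC (.inr V) M₁ M₂) (sub0C V M₂) B B
| sumCBetaR' : StoupOK P Δ → VTyping P Γ V A₂ → CTyping P (A₁::Γ) Δ M₁ B → CTyping P (A₂::Γ) Δ M₂ B →
    CLe P Γ Γ Δ Δ (sub0C V M₂) (.caseC (.inr V) M₁ M₂) B B
| sumCEta : StoupOK P Δ → CTyping P (.sum A₁ A₂ :: Γ) Δ M B →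
    CLe P (.sum A₁ A₂ :: Γ) (.sum A₁ A₂ :: Γ) Δ Δ M
      (.caseC (.var 0) (subC etaSumL M) (subC etaSumR M)) B B
| sumCEta' : StoupOK P Δ → CTyping P (.sum A₁ A₂ :: Γ) Δ M B →
    CLe P (.sum A₁ A₂ :: Γ) (.sum A₁ A₂ :: Γ) Δ Δ
      (.caseC (.var 0) (subC etaSumL M) (subC etaSumR M)) M B B
| zeroCEta : StoupOK P Δ → CTyping P (.zero :: Γ) Δ M B →
    CLe P (.zero :: Γ) (.zero :: Γ) Δ Δ M (.abortC (.var 0)) B B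
| zeroCEta' : StoupOK P Δ → CTyping P (.zero :: Γ) Δ M B →
    CLe P (.zero :: Γ) (.zero :: Γ) Δ Δ (.abortC (.var 0)) M B B
| prodCBeta : StoupOK P Δ → VTyping P Γ V₁ A₁ → VTyping P Γ V₂ A₂ → CTyping P (A₂::A₁::Γ) Δ M B →
    CLe P Γ Γ Δ Δ (.splitPC (.pair V₁ V₂) M) (sub2C V₁ V₂ M) B B
| prodCBeta' : StoupOK P Δ → VTyping P Γ V₁ A₁ → VTyping P Γ V₂ A₂ → CTyping P (A₂::A₁::Γ) Δ M B →
    CLe P Γ Γ Δ Δ (sub2C V₁ V₂ M) (.splitPC (.pair V₁ V₂) M) B B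
| prodCEta : StoupOK P Δ → CTyping P (.prod A₁ A₂ :: Γ) Δ M B →
    CLe P (.prod A₁ A₂ :: Γ) (.prod A₁ A₂ :: Γ) Δ Δ M (.splitPC (.var 0) (subC etaProd M)) B B
| prodCEta' : StoupOK P Δ → CTyping P (.prod A₁ A₂ :: Γ) Δ M B →
    CLe P (.prod A₁ A₂ :: Γ) (.prod A₁ A₂ :: Γ) Δ Δ (.splitPC (.var 0) (subC etaProd M)) M B B
| oneCBeta : StoupOK P Δ → CTyping P Γ Δ M B → CLe P Γ Γ Δ Δ (.splitUC .unit M) M B B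
| oneCBeta' : StoupOK P Δ → CTyping P Γ Δ M B → CLe P Γ Γ Δ Δ M (.splitUC .unit M) B B
| oneCEta : StoupOK P Δ → CTyping P (.one :: Γ) Δ M B →
    CLe P (.one :: Γ) (.one :: Γ) Δ Δ M (.splitUC (.var 0) (subC etaOne M)) B B
| oneCEta' : StoupOK P Δ → CTyping P (.one :: Γ) Δ M B →
    CLe P (.one :: Γ) (.one :: Γ) Δ Δ (.splitUC (.var 0) (subC etaOne M)) M B B
| muCBeta : StoupOK P Δ → P.recty → VTyping P Γ V (muUnfold A) → CTyping P ((muUnfold A)::Γ) Δ M B →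
    CLe P Γ Γ Δ Δ (.unrollPC (.rollV (.mu A) V) M) (sub0C V M) B B
| muCBeta' : StoupOK P Δ → P.recty → VTyping P Γ V (muUnfold A) → CTyping P ((muUnfold A)::Γ) Δ M B →
    CLe P Γ Γ Δ Δ (sub0C V M) (.unrollPC (.rollV (.mu A) V) M) B B
| muCEta : StoupOK P Δ → P.recty → CTyping P (.mu A :: Γ) Δ M B →
    CLe P (.mu A :: Γ) (.mu A :: Γ) Δ Δ M (.unrollPC (.var 0) (subC (etaMu A) M)) B B
| muCEta' : StoupOK P Δ → P.recty → CTyping P (.mu A :: Γ) Δ M B →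
    CLe P (.mu A :: Γ) (.mu A :: Γ) Δ Δ (.unrollPC (.var 0) (subC (etaMu A) M)) M B B
| uBeta : CTyping P Γ none M B → CLe P Γ Γ none none (.force (.thunk M)) M B B
| uBeta' : CTyping P Γ none M B → CLe P Γ Γ none none M (.force (.thunk M)) B B
| fBeta : VTyping P Γ V A → CTyping P (A::Γ) none N B →
    CLe P Γ Γ none none (.bind (.ret V) N) (sub0C V N) B B
| fBeta' : VTyping P Γ V A → CTyping P (A::Γ) none N B →
    CLe P Γ Γ none none (sub0C V N) (.bind (.ret V) N) B B
| fEta : CTyping P Γ (some (.F A)) M B →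
    CLe P Γ Γ (some (.F A)) (some (.F A)) M
      (.bind .hole (plug (renC Nat.succ M) (.ret (.var 0)))) B B
| fEta' : CTyping P Γ (some (.F A)) M B →
    CLe P Γ Γ (some (.F A)) (some (.F A))
      (.bind .hole (plug (renC Nat.succ M) (.ret (.var 0)))) M B B
| arrBeta : StoupOK P Δ → CTyping P (A::Γ) Δ M B → VTyping P Γ V A →
    CLe P Γ Γ Δ Δ (.app (.lam M) V) (sub0C V M) B B
| arrBeta' : StoupOK P Δ → CTyping P (A::Γ) Δ M B → VTyping P Γ V A →
    CLe P Γ Γ Δ Δ (sub0C V M) (.app (.lam M) V) B B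
| arrEta : StoupOK P Δ → CTyping P Γ Δ M (.arr A B) →
    CLe P Γ Γ Δ Δ M (.lam (.app (renC Nat.succ M) (.var 0))) (.arr A B) (.arr A B)
| arrEta' : StoupOK P Δ → CTyping P Γ Δ M (.arr A B) →
    CLe P Γ Γ Δ Δ (.lam (.app (renC Nat.succ M) (.var 0))) M (.arr A B) (.arr A B)
| wthBeta1 : StoupOK P Δ → CTyping P Γ Δ M₁ B₁ → CTyping P Γ Δ M₂ B₂ →
    CLe P Γ Γ Δ Δ (.fst (.pairC M₁ M₂)) M₁ B₁ B₁
| wthBeta1' : StoupOK P Δ → CTyping P Γ Δ M₁ B₁ → CTyping P Γ Δ M₂ B₂ →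
    CLe P Γ Γ Δ Δ M₁ (.fst (.pairC M₁ M₂)) B₁ B₁
| wthBeta2 : StoupOK P Δ → CTyping P Γ Δ M₁ B₁ → CTyping P Γ Δ M₂ B₂ →
    CLe P Γ Γ Δ Δ (.snd (.pairC M₁ M₂)) M₂ B₂ B₂
| wthBeta2' : StoupOK P Δ → CTyping P Γ Δ M₁ B₁ → CTyping P Γ Δ M₂ B₂ →
    CLe P Γ Γ Δ Δ M₂ (.snd (.pairC M₁ M₂)) B₂ B₂
| wthEta : StoupOK P Δ → CTyping P Γ Δ M (.wth B₁ B₂) →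
    CLe P Γ Γ Δ Δ M (.pairC (.fst M) (.snd M)) (.wth B₁ B₂) (.wth B₁ B₂)
| wthEta' : StoupOK P Δ → CTyping P Γ Δ M (.wth B₁ B₂) →
    CLe P Γ Γ Δ Δ (.pairC (.fst M) (.snd M)) M (.wth B₁ B₂) (.wth B₁ B₂)
| topEta : StoupOK P Δ → CTyping P Γ Δ M .top → CLe P Γ Γ Δ Δ M .unitC .top .top
| topEta' : StoupOK P Δ → CTyping P Γ Δ M .top → CLe P Γ Γ Δ Δ .unitC M .top .top
| nuBeta : P.recty → CTyping P Γ Δ M (nuUnfold B) →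
    CLe P Γ Γ Δ Δ (.unrollC (.rollC (.nu B) M)) M (nuUnfold B) (nuUnfold B)
| nuBeta' : P.recty → CTyping P Γ Δ M (nuUnfold B) →
    CLe P Γ Γ Δ Δ M (.unrollC (.rollC (.nu B) M)) (nuUnfold B) (nuUnfold B)
| nuEta : P.recty → CTyping P Γ Δ M (.nu B) →
    CLe P Γ Γ Δ Δ M (.rollC (.nu B) (.unrollC M)) (.nu B) (.nu B)
| nuEta' : P.recty → CTyping P Γ Δ M (.nu B) →
    CLe P Γ Γ Δ Δ (.rollC (.nu B) (.unrollC M)) M (.nu B) (.nu B)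
end

/-! ## Equi-dynamism and the particular theories. -/

/-- Homogeneous equi-dynamism of values, `Γ ⊢ V ⋈ V' : A`. -/
def VEquiv (P : Policy) (Γ : Ctx) (V V' : Val) (A : VTy) : Prop :=
  VLe P Γ Γ V V' A A ∧ VLe P Γ Γ V' V A A

/-- Homogeneous equi-dynamism of computations/stacks, `Γ | Δ ⊢ M ⋈ M' : B`. -/
def CEquiv (P : Policy) (Γ : Ctx) (Δ : Option CTy) (M M' : Comp) (B : CTy) : Prop :=
  CLe P Γ Γ Δ Δ M M' B B ∧ CLe P Γ Γ Δ Δ M' M B B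

/-- The theory GTT: primitive casts for every type dynamism, complex values and
stacks, no (co)recursive types. -/
def gttP : Policy :=
  { up := VDyn, dn := CDyn, recty := False, cx := True }

/-- Ground value types `G ::= 1 | ? × ? | 0 | ? + ? | U ¿`. -/
def isGroundV (A : VTy) : Prop :=
  A = .one ∨ A = .prod .dyn .dyn ∨ A = .zero ∨ A = .sum .dyn .dyn ∨ A = .U .dync

/-- Ground computation types `Ḡ ::= ? → ¿ | ⊤ | ¿ & ¿ | F ?`. -/
def isGroundC (B : CTy) : Prop :=
  B = .arr .dyn .dync ∨ B = .top ∨ B = .wth .dync .dync ∨ B = .F .dyn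

/-- The theory GTT_G: its only primitive casts are the upcasts `⟨?↢G⟩`,
the downcasts `⟨FG↞F?⟩`, the downcasts `⟨Ḡ↞¿⟩`, and the upcasts `⟨U¿↢UḠ⟩`
for ground types `G`, `Ḡ`. -/
def gttGP : Policy :=
  { up := fun A A' => (isGroundV A ∧ A' = .dyn) ∨
            (∃ B, isGroundC B ∧ A = .U B ∧ A' = .U .dync),
    dn := fun B B' => (isGroundC B ∧ B' = .dync) ∨
            (∃ A, isGroundV A ∧ B = .F A ∧ B' = .F .dyn),
    recty := False, cx := True }

/-- The theory CBPV*: call-by-push-value with complex values and complex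
stacks, (co)recursive types and error, and no casts. -/
def cbpvStarP : Policy :=
  { up := fun _ _ => False, dn := fun _ _ => False, recty := True, cx := True }

/-- Operational CBPV: as CBPV* but without complex values and complex stacks. -/
def cbpvP : Policy :=
  { up := fun _ _ => False, dn := fun _ _ => False, recty := True, cx := False }

/-! ## Universal properties of casts. -/

/-- `V` (with one free variable `x : A`) satisfies the universal property of an
upcast for `A ⊑ A'`:  `x : A ⊢ x ⊑ V : A ⊑ A'` and
`x ⊑ x' : A ⊑ A' ⊢ V ⊑ x' : A'`. -/
def UpcastUP (P : Policy) (A A' : VTy) (V : Val) : Prop :=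
  VTyping P [A] V A' ∧
  VLe P [A] [A] (.var 0) V A A' ∧
  VLe P [A] [A'] V (.var 0) A' A'

/-- `S` (a stack with hole `• : B'`) satisfies the universal property of a
downcast for `B ⊑ B'`:  `• : B' ⊢ S ⊑ • : B ⊑ B'` and
`• ⊑ •' : B ⊑ B' ⊢ • ⊑ S : B`. -/
def DowncastUP (P : Policy) (B B' : CTy) (S : Comp) : Prop :=
  CTyping P [] (some B') S B ∧
  CLe P [] [] (some B') (some B') S .hole B B' ∧
  CLe P [] [] (some B) (some B') .hole S B B

/-- A stack upcast for `B ⊑ B'`: a stack `• : B ⊢ S : B'` with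
`• : B ⊢ • ⊑ S : B ⊑ B'` and `• ⊑ •' : B ⊑ B' ⊢ S ⊑ •' : B'`. -/
def StackUpcast (P : Policy) (B B' : CTy) (S : Comp) : Prop :=
  CTyping P [] (some B) S B' ∧
  CLe P [] [] (some B) (some B) .hole S B B' ∧
  CLe P [] [] (some B) (some B') S .hole B' B'

/-- A value downcast for `A ⊑ A'`: a complex value `x : A' ⊢ V : A` with
`x : A' ⊢ V ⊑ x : A ⊑ A'` and `x ⊑ x' : A ⊑ A' ⊢ x ⊑ V[x'/x] : A`. -/
def ValueDowncast (P : Policy) (A A' : VTy) (V : Val) : Prop :=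
  VTyping P [A'] V A ∧
  VLe P [A'] [A'] V (.var 0) A A' ∧
  VLe P [A] [A'] (.var 0) V A A

/-! ## Dynamic-type-free types (the image of CBPV* inside GTT). -/

mutual
def VTy.noDyn : VTy → Prop
| .dyn => False
| .zero => True
| .one => True
| .sum A A' => A.noDyn ∧ A'.noDyn
| .prod A A' => A.noDyn ∧ A'.noDyn
| .U B => B.noDyn
| .tvarV _ => True
| .mu A => A.noDyn
def CTy.noDyn : CTy → Prop
| .dync => False
| .top => True
| .wth B B' => B.noDyn ∧ B'.noDyn
| .arr A B => A.noDyn ∧ B.noDyn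
| .F A => A.noDyn
| .tvarC _ => True
| .nu B => B.noDyn
end

def stoupNoDyn : Option CTy → Prop
| none => True
| some B => B.noDyn

/-! ## Operational semantics of CBPV. -/

/-- Simple (operational) evaluation stacks
`S ::= • | bind S (x.N) | S V | π S | π' S | unroll S`. -/
inductive IsStk : Comp → Prop
| hole : IsStk .hole
| bind : IsStk S → IsStk (.bind S N)
| app : IsStk S → IsStk (.app S V)
| fst : IsStk S → IsStk (.fst S)
| snd : IsStk S → IsStk (.snd S)
| unrollC : IsStk S → IsStk (.unrollC S)

/-- Small-step operational semantics `M ↦ᵢ M'`, where `i ∈ {0,1}` counts 1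
exactly for the unrolling steps of (co)recursive types. -/
inductive Step : Comp → Nat → Comp → Prop
| err : IsStk S → S ≠ .hole → Step (plug S .err) 0 .err
| caseL : IsStk S →
    Step (plug S (.caseC (.inl V) M₁ M₂)) 0 (plug S (sub0C V M₁))
| caseR : IsStk S →
    Step (plug S (.caseC (.inr V) M₁ M₂)) 0 (plug S (sub0C V M₂))
| splitP : IsStk S →
    Step (plug S (.splitPC (.pair V₁ V₂) M)) 0 (plug S (sub2C V₁ V₂ M))
| splitU : IsStk S → Step (plug S (.splitUC .unit M)) 0 (plug S M)
| unrollRollV : IsStk S →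
    Step (plug S (.unrollPC (.rollV T V) M)) 1 (plug S (sub0C V M))
| forceThunk : IsStk S → Step (plug S (.force (.thunk M))) 0 (plug S M)
| bindRet : IsStk S → Step (plug S (.bind (.ret V) N)) 0 (plug S (sub0C V N))
| appLam : IsStk S → Step (plug S (.app (.lam M) V)) 0 (plug S (sub0C V M))
| fstPair : IsStk S → Step (plug S (.fst (.pairC M₁ M₂))) 0 (plug S M₁)
| sndPair : IsStk S → Step (plug S (.snd (.pairC M₁ M₂))) 0 (plug S M₂)
| unrollRollC : IsStk S → Step (plug S (.unrollC (.rollC T M))) 1 (plug S M)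

/-- `M ⇒ⁱ N`: iterated stepping, adding up the indices. -/
inductive Evals : Comp → Nat → Comp → Prop
| refl (M : Comp) : Evals M 0 M
| step : Step M i M' → Evals M' j N → Evals M (i + j) N

/-- `M` diverges: every reduct of `M` can step again. -/
def Diverges (M : Comp) : Prop :=
  ∀ N n, Evals M n N → ∃ N' i, Step N i N'

/-- Possible results of a whole program `⊢ M : F(1+1)`:
divergence Ω, the error ℧, `ret true` and `ret false`. -/
inductive Res : Type
| omega : Res
| err : Res
| rtrue : Res
| rfalse : Res

/-- The booleans are `1+1` with `true = inl ()` and `false = inr ()`. -/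
def boolTy : VTy := .sum .one .one

def resComp : Res → Comp
| .omega => .err -- (unused: Ω is not a terminal term)
| .err => .err
| .rtrue => .ret (.inl .unit)
| .rfalse => .ret (.inr .unit)

/-- `result(M) = R`. -/
def ResultIs (M : Comp) (R : Res) : Prop :=
  (R = .omega ∧ Diverges M) ∨ (R ≠ .omega ∧ ∃ n, Evals M n (resComp R))

/-- A divergence preorder: a preorder on results with Ω a least element. -/
def DivPreorder (r : Res → Res → Prop) : Prop :=
  (∀ R, r R R) ∧ (∀ R₁ R₂ R₃, r R₁ R₂ → r R₂ R₃ → r R₁ R₃) ∧ (∀ R, r .omega R)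

/-- The finitization `M ⊴ⁱ R` of a divergence preorder `⊴`: either `M` can
take `i` (counted) steps, or `M` reaches a terminal result `R_M` in `j < i`
(counted) steps with `R_M ⊴ R`. -/
def dle (r : Res → Res → Prop) (i : Nat) (M : Comp) (R : Res) : Prop :=
  (∃ M', Evals M i M') ∨
  (∃ j, j < i ∧ ∃ Rm : Res, Rm ≠ .omega ∧ Evals M j (resComp Rm) ∧ r Rm R)

/-! ### Part A: renaming/substitution calculus -/

theorem liftN_ext {f g : Nat → Nat} (h : ∀ n, f n = g n) : ∀ n, liftN f n = liftN g n
  | 0 => rfl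
  | n+1 => by simp [liftN, h]

theorem liftN_comp (f g : Nat → Nat) : ∀ n, liftN f (liftN g n) = liftN (f ∘ g) n
  | 0 => rfl
  | _+1 => rfl

theorem liftN_id {f : Nat → Nat} (h : ∀ n, f n = n) : ∀ n, liftN f n = n
  | 0 => rfl
  | n+1 => by simp [liftN, h]

mutual
theorem rv_ext {f g : Nat → Nat} (h : ∀ n, f n = g n) : ∀ V, renV f V = renV g V
  | .var n => by simp [renV, h]
  | .up A A' V => by simp [renV]; exact rv_ext h V
  | .unit => rfl
  | .inl V => by simp [renV]; exact rv_ext h V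
  | .inr V => by simp [renV]; exact rv_ext h V
  | .pair V W => by simp [renV]; exact ⟨rv_ext h V, rv_ext h W⟩
  | .abortV V => by simp [renV]; exact rv_ext h V
  | .caseV V W₁ W₂ => by
      simp [renV]
      exact ⟨rv_ext h V, rv_ext (liftN_ext h) W₁, rv_ext (liftN_ext h) W₂⟩
  | .splitPV V W => by
      simp [renV]
      exact ⟨rv_ext h V, rv_ext (liftN_ext (liftN_ext h)) W⟩
  | .splitUV V W => by simp [renV]; exact ⟨rv_ext h V, rv_ext h W⟩
  | .rollV T V => by simp [renV]; exact rv_ext h V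
  | .unrollPV V W => by simp [renV]; exact ⟨rv_ext h V, rv_ext (liftN_ext h) W⟩
  | .thunk M => by simp [renV]; exact rc_ext h M

theorem rc_ext {f g : Nat → Nat} (h : ∀ n, f n = g n) : ∀ M, renC f M = renC g M
  | .hole => rfl
  | .err => rfl
  | .dn B B' M => by simp [renC]; exact rc_ext h M
  | .force V => by simp [renC]; exact rv_ext h V
  | .ret V => by simp [renC]; exact rv_ext h V
  | .bind M N => by simp [renC]; exact ⟨rc_ext h M, rc_ext (liftN_ext h) N⟩
  | .lam M => by simp [renC]; exact rc_ext (liftN_ext h) M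
  | .app M V => by simp [renC]; exact ⟨rc_ext h M, rv_ext h V⟩
  | .unitC => rfl
  | .pairC M N => by simp [renC]; exact ⟨rc_ext h M, rc_ext h N⟩
  | .fst M => by simp [renC]; exact rc_ext h M
  | .snd M => by simp [renC]; exact rc_ext h M
  | .abortC V => by simp [renC]; exact rv_ext h V
  | .caseC V M₁ M₂ => by
      simp [renC]
      exact ⟨rv_ext h V, rc_ext (liftN_ext h) M₁, rc_ext (liftN_ext h) M₂⟩
  | .splitPC V M => by
      simp [renC]; exact ⟨rv_ext h V, rc_ext (liftN_ext (liftN_ext h)) M⟩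
  | .splitUC V M => by simp [renC]; exact ⟨rv_ext h V, rc_ext h M⟩
  | .unrollPC V M => by simp [renC]; exact ⟨rv_ext h V, rc_ext (liftN_ext h) M⟩
  | .rollC T M => by simp [renC]; exact rc_ext h M
  | .unrollC M => by simp [renC]; exact rc_ext h M
end

mutual
theorem rv_id {f : Nat → Nat} (h : ∀ n, f n = n) : ∀ V, renV f V = V
  | .var n => by simp [renV, h]
  | .up A A' V => by simp [renV]; exact rv_id h V
  | .unit => rfl
  | .inl V => by simp [renV]; exact rv_id h V
  | .inr V => by simp [renV]; exact rv_id h V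
  | .pair V W => by simp [renV]; exact ⟨rv_id h V, rv_id h W⟩
  | .abortV V => by simp [renV]; exact rv_id h V
  | .caseV V W₁ W₂ => by
      simp [renV]
      exact ⟨rv_id h V, rv_id (liftN_id h) W₁, rv_id (liftN_id h) W₂⟩
  | .splitPV V W => by
      simp [renV]; exact ⟨rv_id h V, rv_id (liftN_id (liftN_id h)) W⟩
  | .splitUV V W => by simp [renV]; exact ⟨rv_id h V, rv_id h W⟩
  | .rollV T V => by simp [renV]; exact rv_id h V
  | .unrollPV V W => by simp [renV]; exact ⟨rv_id h V, rv_id (liftN_id h) W⟩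
  | .thunk M => by simp [renV]; exact rc_id h M

theorem rc_id {f : Nat → Nat} (h : ∀ n, f n = n) : ∀ M, renC f M = M
  | .hole => rfl
  | .err => rfl
  | .dn B B' M => by simp [renC]; exact rc_id h M
  | .force V => by simp [renC]; exact rv_id h V
  | .ret V => by simp [renC]; exact rv_id h V
  | .bind M N => by simp [renC]; exact ⟨rc_id h M, rc_id (liftN_id h) N⟩
  | .lam M => by simp [renC]; exact rc_id (liftN_id h) M
  | .app M V => by simp [renC]; exact ⟨rc_id h M, rv_id h V⟩
  | .unitC => rfl
  | .pairC M N => by simp [renC]; exact ⟨rc_id h M, rc_id h N⟩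
  | .fst M => by simp [renC]; exact rc_id h M
  | .snd M => by simp [renC]; exact rc_id h M
  | .abortC V => by simp [renC]; exact rv_id h V
  | .caseC V M₁ M₂ => by
      simp [renC]
      exact ⟨rv_id h V, rc_id (liftN_id h) M₁, rc_id (liftN_id h) M₂⟩
  | .splitPC V M => by
      simp [renC]; exact ⟨rv_id h V, rc_id (liftN_id (liftN_id h)) M⟩
  | .splitUC V M => by simp [renC]; exact ⟨rv_id h V, rc_id h M⟩
  | .unrollPC V M => by simp [renC]; exact ⟨rv_id h V, rc_id (liftN_id h) M⟩
  | .rollC T M => by simp [renC]; exact rc_id h M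
  | .unrollC M => by simp [renC]; exact rc_id h M
end

mutual
theorem rv_comp (f g : Nat → Nat) : ∀ V, renV f (renV g V) = renV (fun n => f (g n)) V
  | .var n => rfl
  | .up A A' V => by simp [renV]; exact rv_comp f g V
  | .unit => rfl
  | .inl V => by simp [renV]; exact rv_comp f g V
  | .inr V => by simp [renV]; exact rv_comp f g V
  | .pair V W => by simp [renV]; exact ⟨rv_comp f g V, rv_comp f g W⟩
  | .abortV V => by simp [renV]; exact rv_comp f g V
  | .caseV V W₁ W₂ => by
      simp [renV]
      refine ⟨rv_comp f g V, ?_, ?_⟩ <;>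
        rw [rv_comp (liftN f) (liftN g)] <;>
        exact rv_ext (fun n => liftN_comp f g n) _
  | .splitPV V W => by
      simp [renV]
      refine ⟨rv_comp f g V, ?_⟩
      rw [rv_comp (liftN (liftN f)) (liftN (liftN g))]
      exact rv_ext (fun n => by
        rw [liftN_comp (liftN f) (liftN g) n]
        exact liftN_ext (fun m => liftN_comp f g m) n) _
  | .splitUV V W => by simp [renV]; exact ⟨rv_comp f g V, rv_comp f g W⟩
  | .rollV T V => by simp [renV]; exact rv_comp f g V
  | .unrollPV V W => by
      simp [renV]
      refine ⟨rv_comp f g V, ?_⟩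
      rw [rv_comp (liftN f) (liftN g)]
      exact rv_ext (fun n => liftN_comp f g n) _
  | .thunk M => by simp [renV]; exact rc_comp f g M

theorem rc_comp (f g : Nat → Nat) : ∀ M, renC f (renC g M) = renC (fun n => f (g n)) M
  | .hole => rfl
  | .err => rfl
  | .dn B B' M => by simp [renC]; exact rc_comp f g M
  | .force V => by simp [renC]; exact rv_comp f g V
  | .ret V => by simp [renC]; exact rv_comp f g V
  | .bind M N => by
      simp [renC]
      refine ⟨rc_comp f g M, ?_⟩
      rw [rc_comp (liftN f) (liftN g)]
      exact rc_ext (fun n => liftN_comp f g n) _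
  | .lam M => by
      simp [renC]
      rw [rc_comp (liftN f) (liftN g)]
      exact rc_ext (fun n => liftN_comp f g n) _
  | .app M V => by simp [renC]; exact ⟨rc_comp f g M, rv_comp f g V⟩
  | .unitC => rfl
  | .pairC M N => by simp [renC]; exact ⟨rc_comp f g M, rc_comp f g N⟩
  | .fst M => by simp [renC]; exact rc_comp f g M
  | .snd M => by simp [renC]; exact rc_comp f g M
  | .abortC V => by simp [renC]; exact rv_comp f g V
  | .caseC V M₁ M₂ => by
      simp [renC]
      refine ⟨rv_comp f g V, ?_, ?_⟩ <;>
        rw [rc_comp (liftN f) (liftN g)] <;>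
        exact rc_ext (fun n => liftN_comp f g n) _
  | .splitPC V M => by
      simp [renC]
      refine ⟨rv_comp f g V, ?_⟩
      rw [rc_comp (liftN (liftN f)) (liftN (liftN g))]
      exact rc_ext (fun n => by
        rw [liftN_comp (liftN f) (liftN g) n]
        exact liftN_ext (fun m => liftN_comp f g m) n) _
  | .splitUC V M => by simp [renC]; exact ⟨rv_comp f g V, rc_comp f g M⟩
  | .unrollPC V M => by
      simp [renC]
      refine ⟨rv_comp f g V, ?_⟩
      rw [rc_comp (liftN f) (liftN g)]
      exact rc_ext (fun n => liftN_comp f g n) _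
  | .rollC T M => by simp [renC]; exact rc_comp f g M
  | .unrollC M => by simp [renC]; exact rc_comp f g M
end

theorem liftSub_ext {σ τ : Nat → Val} (h : ∀ n, σ n = τ n) : ∀ n, liftSub σ n = liftSub τ n
  | 0 => rfl
  | n+1 => by simp [liftSub, h]

mutual
theorem sv_ext {σ τ : Nat → Val} (h : ∀ n, σ n = τ n) : ∀ V, subV σ V = subV τ V
  | .var n => by simp [subV, h]
  | .up A A' V => by simp [subV]; exact sv_ext h V
  | .unit => rfl
  | .inl V => by simp [subV]; exact sv_ext h V
  | .inr V => by simp [subV]; exact sv_ext h V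
  | .pair V W => by simp [subV]; exact ⟨sv_ext h V, sv_ext h W⟩
  | .abortV V => by simp [subV]; exact sv_ext h V
  | .caseV V W₁ W₂ => by
      simp [subV]
      exact ⟨sv_ext h V, sv_ext (liftSub_ext h) W₁, sv_ext (liftSub_ext h) W₂⟩
  | .splitPV V W => by
      simp [subV]; exact ⟨sv_ext h V, sv_ext (liftSub_ext (liftSub_ext h)) W⟩
  | .splitUV V W => by simp [subV]; exact ⟨sv_ext h V, sv_ext h W⟩
  | .rollV T V => by simp [subV]; exact sv_ext h V
  | .unrollPV V W => by simp [subV]; exact ⟨sv_ext h V, sv_ext (liftSub_ext h) W⟩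
  | .thunk M => by simp [subV]; exact sc_ext h M

theorem sc_ext {σ τ : Nat → Val} (h : ∀ n, σ n = τ n) : ∀ M, subC σ M = subC τ M
  | .hole => rfl
  | .err => rfl
  | .dn B B' M => by simp [subC]; exact sc_ext h M
  | .force V => by simp [subC]; exact sv_ext h V
  | .ret V => by simp [subC]; exact sv_ext h V
  | .bind M N => by simp [subC]; exact ⟨sc_ext h M, sc_ext (liftSub_ext h) N⟩
  | .lam M => by simp [subC]; exact sc_ext (liftSub_ext h) M
  | .app M V => by simp [subC]; exact ⟨sc_ext h M, sv_ext h V⟩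
  | .unitC => rfl
  | .pairC M N => by simp [subC]; exact ⟨sc_ext h M, sc_ext h N⟩
  | .fst M => by simp [subC]; exact sc_ext h M
  | .snd M => by simp [subC]; exact sc_ext h M
  | .abortC V => by simp [subC]; exact sv_ext h V
  | .caseC V M₁ M₂ => by
      simp [subC]
      exact ⟨sv_ext h V, sc_ext (liftSub_ext h) M₁, sc_ext (liftSub_ext h) M₂⟩
  | .splitPC V M => by
      simp [subC]; exact ⟨sv_ext h V, sc_ext (liftSub_ext (liftSub_ext h)) M⟩
  | .splitUC V M => by simp [subC]; exact ⟨sv_ext h V, sc_ext h M⟩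
  | .unrollPC V M => by simp [subC]; exact ⟨sv_ext h V, sc_ext (liftSub_ext h) M⟩
  | .rollC T M => by simp [subC]; exact sc_ext h M
  | .unrollC M => by simp [subC]; exact sc_ext h M
end

theorem liftSub_liftN (σ : Nat → Val) (f : Nat → Nat) :
    ∀ n, liftSub σ (liftN f n) = liftSub (fun m => σ (f m)) n
  | 0 => rfl
  | _+1 => rfl

mutual
theorem sv_ren (σ : Nat → Val) (f : Nat → Nat) :
    ∀ V, subV σ (renV f V) = subV (fun n => σ (f n)) V
  | .var n => rfl
  | .up A A' V => by simp [renV, subV]; exact sv_ren σ f V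
  | .unit => rfl
  | .inl V => by simp [renV, subV]; exact sv_ren σ f V
  | .inr V => by simp [renV, subV]; exact sv_ren σ f V
  | .pair V W => by simp [renV, subV]; exact ⟨sv_ren σ f V, sv_ren σ f W⟩
  | .abortV V => by simp [renV, subV]; exact sv_ren σ f V
  | .caseV V W₁ W₂ => by
      simp [renV, subV]
      refine ⟨sv_ren σ f V, ?_, ?_⟩ <;>
        rw [sv_ren (liftSub σ) (liftN f)] <;>
        exact sv_ext (liftSub_liftN σ f) _
  | .splitPV V W => by
      simp [renV, subV]
      refine ⟨sv_ren σ f V, ?_⟩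
      rw [sv_ren (liftSub (liftSub σ)) (liftN (liftN f))]
      exact sv_ext (fun n => by
        rw [liftSub_liftN (liftSub σ) (liftN f) n]
        exact liftSub_ext (liftSub_liftN σ f) n) _
  | .splitUV V W => by simp [renV, subV]; exact ⟨sv_ren σ f V, sv_ren σ f W⟩
  | .rollV T V => by simp [renV, subV]; exact sv_ren σ f V
  | .unrollPV V W => by
      simp [renV, subV]
      refine ⟨sv_ren σ f V, ?_⟩
      rw [sv_ren (liftSub σ) (liftN f)]
      exact sv_ext (liftSub_liftN σ f) _
  | .thunk M => by simp [renV, subV]; exact sc_ren σ f M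

theorem sc_ren (σ : Nat → Val) (f : Nat → Nat) :
    ∀ M, subC σ (renC f M) = subC (fun n => σ (f n)) M
  | .hole => rfl
  | .err => rfl
  | .dn B B' M => by simp [renC, subC]; exact sc_ren σ f M
  | .force V => by simp [renC, subC]; exact sv_ren σ f V
  | .ret V => by simp [renC, subC]; exact sv_ren σ f V
  | .bind M N => by
      simp [renC, subC]
      refine ⟨sc_ren σ f M, ?_⟩
      rw [sc_ren (liftSub σ) (liftN f)]
      exact sc_ext (liftSub_liftN σ f) _
  | .lam M => by
      simp [renC, subC]
      rw [sc_ren (liftSub σ) (liftN f)]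
      exact sc_ext (liftSub_liftN σ f) _
  | .app M V => by simp [renC, subC]; exact ⟨sc_ren σ f M, sv_ren σ f V⟩
  | .unitC => rfl
  | .pairC M N => by simp [renC, subC]; exact ⟨sc_ren σ f M, sc_ren σ f N⟩
  | .fst M => by simp [renC, subC]; exact sc_ren σ f M
  | .snd M => by simp [renC, subC]; exact sc_ren σ f M
  | .abortC V => by simp [renC, subC]; exact sv_ren σ f V
  | .caseC V M₁ M₂ => by
      simp [renC, subC]
      refine ⟨sv_ren σ f V, ?_, ?_⟩ <;>
        rw [sc_ren (liftSub σ) (liftN f)] <;>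
        exact sc_ext (liftSub_liftN σ f) _
  | .splitPC V M => by
      simp [renC, subC]
      refine ⟨sv_ren σ f V, ?_⟩
      rw [sc_ren (liftSub (liftSub σ)) (liftN (liftN f))]
      exact sc_ext (fun n => by
        rw [liftSub_liftN (liftSub σ) (liftN f) n]
        exact liftSub_ext (liftSub_liftN σ f) n) _
  | .splitUC V M => by simp [renC, subC]; exact ⟨sv_ren σ f V, sc_ren σ f M⟩
  | .unrollPC V M => by
      simp [renC, subC]
      refine ⟨sv_ren σ f V, ?_⟩
      rw [sc_ren (liftSub σ) (liftN f)]
      exact sc_ext (liftSub_liftN σ f) _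
  | .rollC T M => by simp [renC, subC]; exact sc_ren σ f M
  | .unrollC M => by simp [renC, subC]; exact sc_ren σ f M
end

theorem ren_liftSub (f : Nat → Nat) (σ : Nat → Val) :
    ∀ n, renV (liftN f) (liftSub σ n) = liftSub (fun m => renV f (σ m)) n
  | 0 => rfl
  | n+1 => by
      simp only [liftSub]
      rw [rv_comp (liftN f) Nat.succ (σ n), rv_comp Nat.succ f (σ n)]
      exact rv_ext (fun m => rfl) _

mutual
theorem rv_sub (f : Nat → Nat) (σ : Nat → Val) :
    ∀ V, renV f (subV σ V) = subV (fun n => renV f (σ n)) V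
  | .var n => rfl
  | .up A A' V => by simp [renV, subV]; exact rv_sub f σ V
  | .unit => rfl
  | .inl V => by simp [renV, subV]; exact rv_sub f σ V
  | .inr V => by simp [renV, subV]; exact rv_sub f σ V
  | .pair V W => by simp [renV, subV]; exact ⟨rv_sub f σ V, rv_sub f σ W⟩
  | .abortV V => by simp [renV, subV]; exact rv_sub f σ V
  | .caseV V W₁ W₂ => by
      simp [renV, subV]
      refine ⟨rv_sub f σ V, ?_, ?_⟩ <;>
        rw [rv_sub (liftN f) (liftSub σ)] <;>
        exact sv_ext (ren_liftSub f σ) _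
  | .splitPV V W => by
      simp [renV, subV]
      refine ⟨rv_sub f σ V, ?_⟩
      rw [rv_sub (liftN (liftN f)) (liftSub (liftSub σ))]
      exact sv_ext (fun n => by
        rw [ren_liftSub (liftN f) (liftSub σ) n]
        exact liftSub_ext (ren_liftSub f σ) n) _
  | .splitUV V W => by simp [renV, subV]; exact ⟨rv_sub f σ V, rv_sub f σ W⟩
  | .rollV T V => by simp [renV, subV]; exact rv_sub f σ V
  | .unrollPV V W => by
      simp [renV, subV]
      refine ⟨rv_sub f σ V, ?_⟩
      rw [rv_sub (liftN f) (liftSub σ)]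
      exact sv_ext (ren_liftSub f σ) _
  | .thunk M => by simp [renV, subV]; exact rc_sub f σ M

theorem rc_sub (f : Nat → Nat) (σ : Nat → Val) :
    ∀ M, renC f (subC σ M) = subC (fun n => renV f (σ n)) M
  | .hole => rfl
  | .err => rfl
  | .dn B B' M => by simp [renC, subC]; exact rc_sub f σ M
  | .force V => by simp [renC, subC]; exact rv_sub f σ V
  | .ret V => by simp [renC, subC]; exact rv_sub f σ V
  | .bind M N => by
      simp [renC, subC]
      refine ⟨rc_sub f σ M, ?_⟩
      rw [rc_sub (liftN f) (liftSub σ)]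
      exact sc_ext (ren_liftSub f σ) _
  | .lam M => by
      simp [renC, subC]
      rw [rc_sub (liftN f) (liftSub σ)]
      exact sc_ext (ren_liftSub f σ) _
  | .app M V => by simp [renC, subC]; exact ⟨rc_sub f σ M, rv_sub f σ V⟩
  | .unitC => rfl
  | .pairC M N => by simp [renC, subC]; exact ⟨rc_sub f σ M, rc_sub f σ N⟩
  | .fst M => by simp [renC, subC]; exact rc_sub f σ M
  | .snd M => by simp [renC, subC]; exact rc_sub f σ M
  | .abortC V => by simp [renC, subC]; exact rv_sub f σ V
  | .caseC V M₁ M₂ => by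
      simp [renC, subC]
      refine ⟨rv_sub f σ V, ?_, ?_⟩ <;>
        rw [rc_sub (liftN f) (liftSub σ)] <;>
        exact sc_ext (ren_liftSub f σ) _
  | .splitPC V M => by
      simp [renC, subC]
      refine ⟨rv_sub f σ V, ?_⟩
      rw [rc_sub (liftN (liftN f)) (liftSub (liftSub σ))]
      exact sc_ext (fun n => by
        rw [ren_liftSub (liftN f) (liftSub σ) n]
        exact liftSub_ext (ren_liftSub f σ) n) _
  | .splitUC V M => by simp [renC, subC]; exact ⟨rv_sub f σ V, rc_sub f σ M⟩
  | .unrollPC V M => by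
      simp [renC, subC]
      refine ⟨rv_sub f σ V, ?_⟩
      rw [rc_sub (liftN f) (liftSub σ)]
      exact sc_ext (ren_liftSub f σ) _
  | .rollC T M => by simp [renC, subC]; exact rc_sub f σ M
  | .unrollC M => by simp [renC, subC]; exact rc_sub f σ M
end

theorem sub_liftSub (τ σ : Nat → Val) :
    ∀ n, subV (liftSub τ) (liftSub σ n) = liftSub (fun m => subV τ (σ m)) n
  | 0 => rfl
  | n+1 => by
      simp only [liftSub]
      rw [sv_ren (liftSub τ) Nat.succ (σ n), rv_sub Nat.succ τ (σ n)]
      exact sv_ext (fun m => rfl) _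

mutual
theorem sv_comp (τ σ : Nat → Val) :
    ∀ V, subV τ (subV σ V) = subV (fun n => subV τ (σ n)) V
  | .var n => rfl
  | .up A A' V => by simp [subV]; exact sv_comp τ σ V
  | .unit => rfl
  | .inl V => by simp [subV]; exact sv_comp τ σ V
  | .inr V => by simp [subV]; exact sv_comp τ σ V
  | .pair V W => by simp [subV]; exact ⟨sv_comp τ σ V, sv_comp τ σ W⟩
  | .abortV V => by simp [subV]; exact sv_comp τ σ V
  | .caseV V W₁ W₂ => by
      simp [subV]
      refine ⟨sv_comp τ σ V, ?_, ?_⟩ <;>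
        rw [sv_comp (liftSub τ) (liftSub σ)] <;>
        exact sv_ext (sub_liftSub τ σ) _
  | .splitPV V W => by
      simp [subV]
      refine ⟨sv_comp τ σ V, ?_⟩
      rw [sv_comp (liftSub (liftSub τ)) (liftSub (liftSub σ))]
      exact sv_ext (fun n => by
        rw [sub_liftSub (liftSub τ) (liftSub σ) n]
        exact liftSub_ext (sub_liftSub τ σ) n) _
  | .splitUV V W => by simp [subV]; exact ⟨sv_comp τ σ V, sv_comp τ σ W⟩
  | .rollV T V => by simp [subV]; exact sv_comp τ σ V
  | .unrollPV V W => by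
      simp [subV]
      refine ⟨sv_comp τ σ V, ?_⟩
      rw [sv_comp (liftSub τ) (liftSub σ)]
      exact sv_ext (sub_liftSub τ σ) _
  | .thunk M => by simp [subV]; exact sc_comp τ σ M

theorem sc_comp (τ σ : Nat → Val) :
    ∀ M, subC τ (subC σ M) = subC (fun n => subV τ (σ n)) M
  | .hole => rfl
  | .err => rfl
  | .dn B B' M => by simp [subC]; exact sc_comp τ σ M
  | .force V => by simp [subC]; exact sv_comp τ σ V
  | .ret V => by simp [subC]; exact sv_comp τ σ V
  | .bind M N => by
      simp [subC]
      refine ⟨sc_comp τ σ M, ?_⟩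
      rw [sc_comp (liftSub τ) (liftSub σ)]
      exact sc_ext (sub_liftSub τ σ) _
  | .lam M => by
      simp [subC]
      rw [sc_comp (liftSub τ) (liftSub σ)]
      exact sc_ext (sub_liftSub τ σ) _
  | .app M V => by simp [subC]; exact ⟨sc_comp τ σ M, sv_comp τ σ V⟩
  | .unitC => rfl
  | .pairC M N => by simp [subC]; exact ⟨sc_comp τ σ M, sc_comp τ σ N⟩
  | .fst M => by simp [subC]; exact sc_comp τ σ M
  | .snd M => by simp [subC]; exact sc_comp τ σ M
  | .abortC V => by simp [subC]; exact sv_comp τ σ V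
  | .caseC V M₁ M₂ => by
      simp [subC]
      refine ⟨sv_comp τ σ V, ?_, ?_⟩ <;>
        rw [sc_comp (liftSub τ) (liftSub σ)] <;>
        exact sc_ext (sub_liftSub τ σ) _
  | .splitPC V M => by
      simp [subC]
      refine ⟨sv_comp τ σ V, ?_⟩
      rw [sc_comp (liftSub (liftSub τ)) (liftSub (liftSub σ))]
      exact sc_ext (fun n => by
        rw [sub_liftSub (liftSub τ) (liftSub σ) n]
        exact liftSub_ext (sub_liftSub τ σ) n) _
  | .splitUC V M => by simp [subC]; exact ⟨sv_comp τ σ V, sc_comp τ σ M⟩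
  | .unrollPC V M => by
      simp [subC]
      refine ⟨sv_comp τ σ V, ?_⟩
      rw [sc_comp (liftSub τ) (liftSub σ)]
      exact sc_ext (sub_liftSub τ σ) _
  | .rollC T M => by simp [subC]; exact sc_comp τ σ M
  | .unrollC M => by simp [subC]; exact sc_comp τ σ M
end

theorem liftSub_var : ∀ n, liftSub (fun m => Val.var m) n = .var n
  | 0 => rfl
  | n+1 => rfl

mutual
theorem sv_id : ∀ V, subV (fun n => .var n) V = V
  | .var n => rfl
  | .up A A' V => by simp [subV]; exact sv_id V
  | .unit => rfl
  | .inl V => by simp [subV]; exact sv_id V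
  | .inr V => by simp [subV]; exact sv_id V
  | .pair V W => by simp [subV]; exact ⟨sv_id V, sv_id W⟩
  | .abortV V => by simp [subV]; exact sv_id V
  | .caseV V W₁ W₂ => by
      simp [subV]
      refine ⟨sv_id V, ?_, ?_⟩ <;> rw [sv_ext liftSub_var] <;> exact sv_id _
  | .splitPV V W => by
      simp [subV]
      refine ⟨sv_id V, ?_⟩
      rw [sv_ext (fun n => by rw [liftSub_ext liftSub_var n, liftSub_var n])]
      exact sv_id _
  | .splitUV V W => by simp [subV]; exact ⟨sv_id V, sv_id W⟩
  | .rollV T V => by simp [subV]; exact sv_id V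
  | .unrollPV V W => by
      simp [subV]
      refine ⟨sv_id V, ?_⟩
      rw [sv_ext liftSub_var]; exact sv_id _
  | .thunk M => by simp [subV]; exact sc_id M

theorem sc_id : ∀ M, subC (fun n => .var n) M = M
  | .hole => rfl
  | .err => rfl
  | .dn B B' M => by simp [subC]; exact sc_id M
  | .force V => by simp [subC]; exact sv_id V
  | .ret V => by simp [subC]; exact sv_id V
  | .bind M N => by
      simp [subC]
      refine ⟨sc_id M, ?_⟩; rw [sc_ext liftSub_var]; exact sc_id _
  | .lam M => by simp [subC]; rw [sc_ext liftSub_var]; exact sc_id _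
  | .app M V => by simp [subC]; exact ⟨sc_id M, sv_id V⟩
  | .unitC => rfl
  | .pairC M N => by simp [subC]; exact ⟨sc_id M, sc_id N⟩
  | .fst M => by simp [subC]; exact sc_id M
  | .snd M => by simp [subC]; exact sc_id M
  | .abortC V => by simp [subC]; exact sv_id V
  | .caseC V M₁ M₂ => by
      simp [subC]
      refine ⟨sv_id V, ?_, ?_⟩ <;> rw [sc_ext liftSub_var] <;> exact sc_id _
  | .splitPC V M => by
      simp [subC]
      refine ⟨sv_id V, ?_⟩
      rw [sc_ext (fun n => by rw [liftSub_ext liftSub_var n, liftSub_var n])]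
      exact sc_id _
  | .splitUC V M => by simp [subC]; exact ⟨sv_id V, sc_id M⟩
  | .unrollPC V M => by
      simp [subC]
      refine ⟨sv_id V, ?_⟩
      rw [sc_ext liftSub_var]; exact sc_id _
  | .rollC T M => by simp [subC]; exact sc_id M
  | .unrollC M => by simp [subC]; exact sc_id M
end

/-- Cons of a value onto a substitution. -/
def consSub (V : Val) (σ : Nat → Val) : Nat → Val
  | 0 => V
  | n+1 => σ n

theorem sub0C_subC (V : Val) (σ : Nat → Val) (M : Comp) :
    sub0C V (subC (liftSub σ) M) = subC (consSub V σ) M := by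
  unfold sub0C
  rw [sc_comp]
  refine sc_ext (fun n => ?_) M
  cases n with
  | zero => rfl
  | succ n =>
    show subV (sub0 V) (renV Nat.succ (σ n)) = σ n
    rw [sv_ren]
    exact sv_id (σ n)

theorem sub2C_subC (V₁ V₂ : Val) (σ : Nat → Val) (M : Comp) :
    subC (sub2 V₁ V₂) (subC (liftSub (liftSub σ)) M) = subC (consSub V₂ (consSub V₁ σ)) M := by
  rw [sc_comp]
  refine sc_ext (fun n => ?_) M
  match n with
  | 0 => rfl
  | 1 => rfl
  | n+2 =>
    show subV (sub2 V₁ V₂) (renV Nat.succ (renV Nat.succ (σ n))) = σ n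
    rw [rv_comp, sv_ren]
    exact sv_id (σ n)

theorem subC_sub0C (σ : Nat → Val) (V : Val) (M : Comp) :
    subC σ (sub0C V M) = sub0C (subV σ V) (subC (liftSub σ) M) := by
  unfold sub0C
  rw [sc_comp, sc_comp]
  refine sc_ext (fun n => ?_) M
  cases n with
  | zero => rfl
  | succ n =>
    show σ n = subV (sub0 (subV σ V)) (renV Nat.succ (σ n))
    rw [sv_ren]
    exact (sv_id (σ n)).symm

theorem renC_sub0C (f : Nat → Nat) (V : Val) (M : Comp) :
    renC f (sub0C V M) = sub0C (renV f V) (renC (liftN f) M) := by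
  unfold sub0C
  rw [rc_sub, sc_ren]
  refine sc_ext (fun n => ?_) M
  cases n with
  | zero => rfl
  | succ n => rfl

theorem subC_sub2C (σ : Nat → Val) (V₁ V₂ : Val) (M : Comp) :
    subC σ (sub2C V₁ V₂ M) =
      sub2C (subV σ V₁) (subV σ V₂) (subC (liftSub (liftSub σ)) M) := by
  unfold sub2C
  rw [sc_comp, sc_comp]
  refine sc_ext (fun n => ?_) M
  match n with
  | 0 => rfl
  | 1 => rfl
  | n+2 =>
    show σ n = subV (sub2 (subV σ V₁) (subV σ V₂)) (renV Nat.succ (renV Nat.succ (σ n)))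
    rw [rv_comp, sv_ren]
    exact (sv_id (σ n)).symm

theorem renC_sub2C (f : Nat → Nat) (V₁ V₂ : Val) (M : Comp) :
    renC f (sub2C V₁ V₂ M) =
      sub2C (renV f V₁) (renV f V₂) (renC (liftN (liftN f)) M) := by
  unfold sub2C
  rw [rc_sub, sc_ren]
  refine sc_ext (fun n => ?_) M
  match n with
  | 0 => rfl
  | 1 => rfl
  | n+2 => rfl

/-! ### Part D: hole-freeness, error spines, plug lemmas, step inversion -/

mutual
def nhV : Val → Bool
  | .var _ => true
  | .up _ _ V => nhV V
  | .unit => true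
  | .inl V => nhV V
  | .inr V => nhV V
  | .pair V W => nhV V && nhV W
  | .abortV V => nhV V
  | .caseV V W₁ W₂ => nhV V && nhV W₁ && nhV W₂
  | .splitPV V W => nhV V && nhV W
  | .splitUV V W => nhV V && nhV W
  | .rollV _ V => nhV V
  | .unrollPV V W => nhV V && nhV W
  | .thunk M => nhC M
def nhC : Comp → Bool
  | .hole => false
  | .err => true
  | .dn _ _ M => nhC M
  | .force V => nhV V
  | .ret V => nhV V
  | .bind M N => nhC M && nhC N
  | .lam M => nhC M
  | .app M V => nhC M && nhV V
  | .unitC => true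
  | .pairC M N => nhC M && nhC N
  | .fst M => nhC M
  | .snd M => nhC M
  | .abortC V => nhV V
  | .caseC V M₁ M₂ => nhV V && nhC M₁ && nhC M₂
  | .splitPC V M => nhV V && nhC M
  | .splitUC V M => nhV V && nhC M
  | .unrollPC V M => nhV V && nhC M
  | .rollC _ M => nhC M
  | .unrollC M => nhC M
end

mutual
theorem plugV_nh (M : Comp) (d : Nat) : ∀ V, nhV V = true → plugV M d V = V
  | .var _, _ => rfl
  | .up A A' V, h => by
      simp only [nhV] at h; simp [plugV, plugV_nh M d V h]
  | .unit, _ => rfl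
  | .inl V, h => by simp only [nhV] at h; simp [plugV, plugV_nh M d V h]
  | .inr V, h => by simp only [nhV] at h; simp [plugV, plugV_nh M d V h]
  | .pair V W, h => by
      simp only [nhV, Bool.and_eq_true] at h
      simp [plugV, plugV_nh M d V h.1, plugV_nh M d W h.2]
  | .abortV V, h => by simp only [nhV] at h; simp [plugV, plugV_nh M d V h]
  | .caseV V W₁ W₂, h => by
      simp only [nhV, Bool.and_eq_true] at h
      simp [plugV, plugV_nh M d V h.1.1, plugV_nh M (d+1) W₁ h.1.2,
        plugV_nh M (d+1) W₂ h.2]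
  | .splitPV V W, h => by
      simp only [nhV, Bool.and_eq_true] at h
      simp [plugV, plugV_nh M d V h.1, plugV_nh M (d+2) W h.2]
  | .splitUV V W, h => by
      simp only [nhV, Bool.and_eq_true] at h
      simp [plugV, plugV_nh M d V h.1, plugV_nh M d W h.2]
  | .rollV T V, h => by simp only [nhV] at h; simp [plugV, plugV_nh M d V h]
  | .unrollPV V W, h => by
      simp only [nhV, Bool.and_eq_true] at h
      simp [plugV, plugV_nh M d V h.1, plugV_nh M (d+1) W h.2]
  | .thunk N, h => by simp only [nhV] at h; simp [plugV, plugC_nh M d N h]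

theorem plugC_nh (M : Comp) (d : Nat) : ∀ N, nhC N = true → plugC M d N = N
  | .hole, h => by simp [nhC] at h
  | .err, _ => rfl
  | .dn B B' N, h => by simp only [nhC] at h; simp [plugC, plugC_nh M d N h]
  | .force V, h => by simp only [nhC] at h; simp [plugC, plugV_nh M d V h]
  | .ret V, h => by simp only [nhC] at h; simp [plugC, plugV_nh M d V h]
  | .bind N₁ N₂, h => by
      simp only [nhC, Bool.and_eq_true] at h
      simp [plugC, plugC_nh M d N₁ h.1, plugC_nh M (d+1) N₂ h.2]
  | .lam N, h => by simp only [nhC] at h; simp [plugC, plugC_nh M (d+1) N h]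
  | .app N V, h => by
      simp only [nhC, Bool.and_eq_true] at h
      simp [plugC, plugC_nh M d N h.1, plugV_nh M d V h.2]
  | .unitC, _ => rfl
  | .pairC N₁ N₂, h => by
      simp only [nhC, Bool.and_eq_true] at h
      simp [plugC, plugC_nh M d N₁ h.1, plugC_nh M d N₂ h.2]
  | .fst N, h => by simp only [nhC] at h; simp [plugC, plugC_nh M d N h]
  | .snd N, h => by simp only [nhC] at h; simp [plugC, plugC_nh M d N h]
  | .abortC V, h => by simp only [nhC] at h; simp [plugC, plugV_nh M d V h]
  | .caseC V N₁ N₂, h => by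
      simp only [nhC, Bool.and_eq_true] at h
      simp [plugC, plugV_nh M d V h.1.1, plugC_nh M (d+1) N₁ h.1.2,
        plugC_nh M (d+1) N₂ h.2]
  | .splitPC V N, h => by
      simp only [nhC, Bool.and_eq_true] at h
      simp [plugC, plugV_nh M d V h.1, plugC_nh M (d+2) N h.2]
  | .splitUC V N, h => by
      simp only [nhC, Bool.and_eq_true] at h
      simp [plugC, plugV_nh M d V h.1, plugC_nh M d N h.2]
  | .unrollPC V N, h => by
      simp only [nhC, Bool.and_eq_true] at h
      simp [plugC, plugV_nh M d V h.1, plugC_nh M (d+1) N h.2]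
  | .rollC T N, h => by simp only [nhC] at h; simp [plugC, plugC_nh M d N h]
  | .unrollC N, h => by simp only [nhC] at h; simp [plugC, plugC_nh M d N h]
end

theorem plug_hole (M : Comp) : plug .hole M = M := by
  show renC (· + 0) M = M
  exact rc_id (fun n => rfl) M

mutual
theorem nhV_ren (f : Nat → Nat) : ∀ V, nhV (renV f V) = nhV V
  | .var _ => rfl
  | .up A A' V => by simp [renV, nhV, nhV_ren f V]
  | .unit => rfl
  | .inl V => by simp [renV, nhV, nhV_ren f V]
  | .inr V => by simp [renV, nhV, nhV_ren f V]
  | .pair V W => by simp [renV, nhV, nhV_ren f V, nhV_ren f W]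
  | .abortV V => by simp [renV, nhV, nhV_ren f V]
  | .caseV V W₁ W₂ => by
      simp [renV, nhV, nhV_ren f V, nhV_ren (liftN f) W₁, nhV_ren (liftN f) W₂]
  | .splitPV V W => by
      simp [renV, nhV, nhV_ren f V, nhV_ren (liftN (liftN f)) W]
  | .splitUV V W => by simp [renV, nhV, nhV_ren f V, nhV_ren f W]
  | .rollV T V => by simp [renV, nhV, nhV_ren f V]
  | .unrollPV V W => by simp [renV, nhV, nhV_ren f V, nhV_ren (liftN f) W]
  | .thunk M => by simp [renV, nhV, nhC_ren f M]

theorem nhC_ren (f : Nat → Nat) : ∀ M, nhC (renC f M) = nhC M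
  | .hole => rfl
  | .err => rfl
  | .dn B B' M => by simp [renC, nhC, nhC_ren f M]
  | .force V => by simp [renC, nhC, nhV_ren f V]
  | .ret V => by simp [renC, nhC, nhV_ren f V]
  | .bind M N => by simp [renC, nhC, nhC_ren f M, nhC_ren (liftN f) N]
  | .lam M => by simp [renC, nhC, nhC_ren (liftN f) M]
  | .app M V => by simp [renC, nhC, nhC_ren f M, nhV_ren f V]
  | .unitC => rfl
  | .pairC M N => by simp [renC, nhC, nhC_ren f M, nhC_ren f N]
  | .fst M => by simp [renC, nhC, nhC_ren f M]
  | .snd M => by simp [renC, nhC, nhC_ren f M]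
  | .abortC V => by simp [renC, nhC, nhV_ren f V]
  | .caseC V M₁ M₂ => by
      simp [renC, nhC, nhV_ren f V, nhC_ren (liftN f) M₁, nhC_ren (liftN f) M₂]
  | .splitPC V M => by simp [renC, nhC, nhV_ren f V, nhC_ren (liftN (liftN f)) M]
  | .splitUC V M => by simp [renC, nhC, nhV_ren f V, nhC_ren f M]
  | .unrollPC V M => by simp [renC, nhC, nhV_ren f V, nhC_ren (liftN f) M]
  | .rollC T M => by simp [renC, nhC, nhC_ren f M]
  | .unrollC M => by simp [renC, nhC, nhC_ren f M]
end

theorem nh_liftSub {σ : Nat → Val} (h : ∀ n, nhV (σ n) = true) :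
    ∀ n, nhV (liftSub σ n) = true
  | 0 => rfl
  | n+1 => by simp [liftSub, nhV_ren, h]

mutual
theorem nhV_sub {σ : Nat → Val} (hσ : ∀ n, nhV (σ n) = true) :
    ∀ V, nhV V = true → nhV (subV σ V) = true
  | .var n, _ => by simp [subV, hσ]
  | .up A A' V, h => by
      simp only [nhV] at h ⊢; simp [subV, nhV, nhV_sub hσ V h]
  | .unit, _ => rfl
  | .inl V, h => by simp only [nhV] at h; simp [subV, nhV, nhV_sub hσ V h]
  | .inr V, h => by simp only [nhV] at h; simp [subV, nhV, nhV_sub hσ V h]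
  | .pair V W, h => by
      simp only [nhV, Bool.and_eq_true] at h
      simp [subV, nhV, nhV_sub hσ V h.1, nhV_sub hσ W h.2]
  | .abortV V, h => by simp only [nhV] at h; simp [subV, nhV, nhV_sub hσ V h]
  | .caseV V W₁ W₂, h => by
      simp only [nhV, Bool.and_eq_true] at h
      simp [subV, nhV, nhV_sub hσ V h.1.1, nhV_sub (nh_liftSub hσ) W₁ h.1.2,
        nhV_sub (nh_liftSub hσ) W₂ h.2]
  | .splitPV V W, h => by
      simp only [nhV, Bool.and_eq_true] at h
      simp [subV, nhV, nhV_sub hσ V h.1,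
        nhV_sub (nh_liftSub (nh_liftSub hσ)) W h.2]
  | .splitUV V W, h => by
      simp only [nhV, Bool.and_eq_true] at h
      simp [subV, nhV, nhV_sub hσ V h.1, nhV_sub hσ W h.2]
  | .rollV T V, h => by simp only [nhV] at h; simp [subV, nhV, nhV_sub hσ V h]
  | .unrollPV V W, h => by
      simp only [nhV, Bool.and_eq_true] at h
      simp [subV, nhV, nhV_sub hσ V h.1, nhV_sub (nh_liftSub hσ) W h.2]
  | .thunk M, h => by simp only [nhV] at h; simp [subV, nhV, nhC_sub hσ M h]

theorem nhC_sub {σ : Nat → Val} (hσ : ∀ n, nhV (σ n) = true) :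
    ∀ M, nhC M = true → nhC (subC σ M) = true
  | .hole, h => by simp [nhC] at h
  | .err, _ => rfl
  | .dn B B' M, h => by simp only [nhC] at h; simp [subC, nhC, nhC_sub hσ M h]
  | .force V, h => by simp only [nhC] at h; simp [subC, nhC, nhV_sub hσ V h]
  | .ret V, h => by simp only [nhC] at h; simp [subC, nhC, nhV_sub hσ V h]
  | .bind M N, h => by
      simp only [nhC, Bool.and_eq_true] at h
      simp [subC, nhC, nhC_sub hσ M h.1, nhC_sub (nh_liftSub hσ) N h.2]
  | .lam M, h => by
      simp only [nhC] at h; simp [subC, nhC, nhC_sub (nh_liftSub hσ) M h]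
  | .app M V, h => by
      simp only [nhC, Bool.and_eq_true] at h
      simp [subC, nhC, nhC_sub hσ M h.1, nhV_sub hσ V h.2]
  | .unitC, _ => rfl
  | .pairC M N, h => by
      simp only [nhC, Bool.and_eq_true] at h
      simp [subC, nhC, nhC_sub hσ M h.1, nhC_sub hσ N h.2]
  | .fst M, h => by simp only [nhC] at h; simp [subC, nhC, nhC_sub hσ M h]
  | .snd M, h => by simp only [nhC] at h; simp [subC, nhC, nhC_sub hσ M h]
  | .abortC V, h => by simp only [nhC] at h; simp [subC, nhC, nhV_sub hσ V h]
  | .caseC V M₁ M₂, h => by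
      simp only [nhC, Bool.and_eq_true] at h
      simp [subC, nhC, nhV_sub hσ V h.1.1, nhC_sub (nh_liftSub hσ) M₁ h.1.2,
        nhC_sub (nh_liftSub hσ) M₂ h.2]
  | .splitPC V M, h => by
      simp only [nhC, Bool.and_eq_true] at h
      simp [subC, nhC, nhV_sub hσ V h.1,
        nhC_sub (nh_liftSub (nh_liftSub hσ)) M h.2]
  | .splitUC V M, h => by
      simp only [nhC, Bool.and_eq_true] at h
      simp [subC, nhC, nhV_sub hσ V h.1, nhC_sub hσ M h.2]
  | .unrollPC V M, h => by
      simp only [nhC, Bool.and_eq_true] at h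
      simp [subC, nhC, nhV_sub hσ V h.1, nhC_sub (nh_liftSub hσ) M h.2]
  | .rollC T M, h => by simp only [nhC] at h; simp [subC, nhC, nhC_sub hσ M h]
  | .unrollC M, h => by simp only [nhC] at h; simp [subC, nhC, nhC_sub hσ M h]
end

theorem nh_sub0 {V : Val} (hV : nhV V = true) : ∀ n, nhV (sub0 V n) = true
  | 0 => hV
  | n+1 => rfl

theorem nh_sub0C {V : Val} {M : Comp} (hV : nhV V = true) (hM : nhC M = true) :
    nhC (sub0C V M) = true := nhC_sub (nh_sub0 hV) M hM

theorem nh_sub2 {V₁ V₂ : Val} (h1 : nhV V₁ = true) (h2 : nhV V₂ = true) :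
    ∀ n, nhV (sub2 V₁ V₂ n) = true
  | 0 => h2
  | 1 => h1
  | _+2 => rfl

theorem nh_sub2C {V₁ V₂ : Val} {M : Comp} (h1 : nhV V₁ = true) (h2 : nhV V₂ = true)
    (hM : nhC M = true) : nhC (sub2C V₁ V₂ M) = true := nhC_sub (nh_sub2 h1 h2) M hM

/-! ### Typed terms are hole-free -/

mutual
theorem vty_nh : ∀ {Γ V A}, VTyping cbpvP Γ V A → nhV V = true
  | _, _, _, .var _ => rfl
  | _, _, _, .up h _ => h.elim
  | _, _, _, .unit => rfl
  | _, _, _, .inl h => by simp [nhV, vty_nh h]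
  | _, _, _, .inr h => by simp [nhV, vty_nh h]
  | _, _, _, .pair h₁ h₂ => by simp [nhV, vty_nh h₁, vty_nh h₂]
  | _, _, _, .abortV hcx _ => hcx.elim
  | _, _, _, .caseV hcx _ _ _ => hcx.elim
  | _, _, _, .splitPV hcx _ _ => hcx.elim
  | _, _, _, .splitUV hcx _ _ => hcx.elim
  | _, _, _, .rollV _ h => by simp [nhV, vty_nh h]
  | _, _, _, .unrollPV hcx _ _ _ => hcx.elim
  | _, _, _, .thunk h => by simp [nhV, cty_nh h rfl]

theorem cty_nh : ∀ {Γ Δ M B}, CTyping cbpvP Γ Δ M B → Δ = none → nhC M = true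
  | _, _, _, _, .hole, hΔ => by simp at hΔ
  | _, _, _, _, .err, _ => rfl
  | _, _, _, _, .dn h _, _ => h.elim
  | _, _, _, _, .force h, _ => by simp [nhC, vty_nh h]
  | _, _, _, _, .ret h, _ => by simp [nhC, vty_nh h]
  | _, _, _, _, .bind h₁ h₂, hΔ => by simp [nhC, cty_nh h₁ hΔ, cty_nh h₂ rfl]
  | _, _, _, _, .lam _ h, hΔ => by simp [nhC, cty_nh h hΔ]
  | _, _, _, _, .app h₁ h₂, hΔ => by simp [nhC, cty_nh h₁ hΔ, vty_nh h₂]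
  | _, _, _, _, .unitC _, _ => rfl
  | _, _, _, _, .pairC _ h₁ h₂, hΔ => by simp [nhC, cty_nh h₁ hΔ, cty_nh h₂ hΔ]
  | _, _, _, _, .fst h, hΔ => by simp [nhC, cty_nh h hΔ]
  | _, _, _, _, .snd h, hΔ => by simp [nhC, cty_nh h hΔ]
  | _, _, _, _, .abortC _ h, _ => by simp [nhC, vty_nh h]
  | _, _, _, _, .caseC _ h h₁ h₂, hΔ => by
      simp [nhC, vty_nh h, cty_nh h₁ hΔ, cty_nh h₂ hΔ]
  | _, _, _, _, .splitPC _ h h₁, hΔ => by simp [nhC, vty_nh h, cty_nh h₁ hΔ]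
  | _, _, _, _, .splitUC _ h h₁, hΔ => by simp [nhC, vty_nh h, cty_nh h₁ hΔ]
  | _, _, _, _, .unrollPC _ _ h h₁, hΔ => by simp [nhC, vty_nh h, cty_nh h₁ hΔ]
  | _, _, _, _, .rollC _ h, hΔ => by simp [nhC, cty_nh h hΔ]
  | _, _, _, _, .unrollC _ h, hΔ => by simp [nhC, cty_nh h hΔ]
end

/-! ### Error spines, head redexes, step inversion -/

def errStk : Comp → Bool
  | .err => true
  | .bind M _ => errStk M
  | .app M _ => errStk M
  | .fst M => errStk M
  | .snd M => errStk M
  | .unrollC M => errStk M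
  | _ => false

/-- Head redexes with their index and contractum. -/
inductive Hd : Comp → Nat → Comp → Prop
  | caseL : Hd (.caseC (.inl V) M₁ M₂) 0 (sub0C V M₁)
  | caseR : Hd (.caseC (.inr V) M₁ M₂) 0 (sub0C V M₂)
  | splitP : Hd (.splitPC (.pair V₁ V₂) M) 0 (sub2C V₁ V₂ M)
  | splitU : Hd (.splitUC .unit M) 0 M
  | unrollP : Hd (.unrollPC (.rollV T V) M) 1 (sub0C V M)
  | force : Hd (.force (.thunk M)) 0 M
  | bindRet : Hd (.bind (.ret V) N) 0 (sub0C V N)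
  | appLam : Hd (.app (.lam M) V) 0 (sub0C V M)
  | fstPair : Hd (.fst (.pairC M₁ M₂)) 0 M₁
  | sndPair : Hd (.snd (.pairC M₁ M₂)) 0 M₂
  | unrollRoll : Hd (.unrollC (.rollC T M)) 1 M

theorem stepInv {M : Comp} {i : Nat} {N : Comp} (h : Step M i N) :
    (∃ S ρ ρ', IsStk S ∧ Hd ρ i ρ' ∧ M = plug S ρ ∧ N = plug S ρ') ∨
    (∃ S, IsStk S ∧ S ≠ .hole ∧ M = plug S .err ∧ i = 0 ∧ N = .err) := by
  cases h with
  | err hS hne => exact .inr ⟨_, hS, hne, rfl, rfl, rfl⟩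
  | caseL hS => exact .inl ⟨_, _, _, hS, .caseL, rfl, rfl⟩
  | caseR hS => exact .inl ⟨_, _, _, hS, .caseR, rfl, rfl⟩
  | splitP hS => exact .inl ⟨_, _, _, hS, .splitP, rfl, rfl⟩
  | splitU hS => exact .inl ⟨_, _, _, hS, .splitU, rfl, rfl⟩
  | unrollRollV hS => exact .inl ⟨_, _, _, hS, .unrollP, rfl, rfl⟩
  | forceThunk hS => exact .inl ⟨_, _, _, hS, .force, rfl, rfl⟩
  | bindRet hS => exact .inl ⟨_, _, _, hS, .bindRet, rfl, rfl⟩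
  | appLam hS => exact .inl ⟨_, _, _, hS, .appLam, rfl, rfl⟩
  | fstPair hS => exact .inl ⟨_, _, _, hS, .fstPair, rfl, rfl⟩
  | sndPair hS => exact .inl ⟨_, _, _, hS, .sndPair, rfl, rfl⟩
  | unrollRollC hS => exact .inl ⟨_, _, _, hS, .unrollRoll, rfl, rfl⟩

theorem step_of {S ρ i ρ'} (hS : IsStk S) (hρ : Hd ρ i ρ') :
    Step (plug S ρ) i (plug S ρ') := by
  cases hρ with
  | caseL => exact Step.caseL hS
  | caseR => exact Step.caseR hS
  | splitP => exact Step.splitP hS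
  | splitU => exact Step.splitU hS
  | unrollP => exact Step.unrollRollV hS
  | force => exact Step.forceThunk hS
  | bindRet => exact Step.bindRet hS
  | appLam => exact Step.appLam hS
  | fstPair => exact Step.fstPair hS
  | sndPair => exact Step.sndPair hS
  | unrollRoll => exact Step.unrollRollC hS

theorem plug_bind (S N M : Comp) : plug (.bind S N) M = .bind (plug S M) (plugC M 1 N) := rfl
theorem plug_app (S : Comp) (V : Val) (M : Comp) :
    plug (.app S V) M = .app (plug S M) (plugV M 0 V) := rfl
theorem plug_fst (S M : Comp) : plug (.fst S) M = .fst (plug S M) := rfl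
theorem plug_snd (S M : Comp) : plug (.snd S) M = .snd (plug S M) := rfl
theorem plug_unrollC (S M : Comp) : plug (.unrollC S) M = .unrollC (plug S M) := rfl

theorem hd_not_ret {ρ i ρ'} (hρ : Hd ρ i ρ') {S : Comp} (hS : IsStk S) (V : Val) :
    plug S ρ ≠ .ret V := by
  cases hS <;> intro h
  · rw [plug_hole] at h; subst h; nomatch hρ
  all_goals simp [plug_bind, plug_app, plug_fst, plug_snd, plug_unrollC] at h

theorem err_not_ret {S : Comp} (hS : IsStk S) (V : Val) : plug S .err ≠ .ret V := by
  cases hS <;> intro h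
  · rw [plug_hole] at h; nomatch h
  all_goals simp [plug_bind, plug_app, plug_fst, plug_snd, plug_unrollC] at h

theorem hd_not_lam {ρ i ρ'} (hρ : Hd ρ i ρ') {S : Comp} (hS : IsStk S) (M : Comp) :
    plug S ρ ≠ .lam M := by
  cases hS <;> intro h
  · rw [plug_hole] at h; subst h; nomatch hρ
  all_goals simp [plug_bind, plug_app, plug_fst, plug_snd, plug_unrollC] at h

theorem err_not_lam {S : Comp} (hS : IsStk S) (M : Comp) : plug S .err ≠ .lam M := by
  cases hS <;> intro h
  · rw [plug_hole] at h; nomatch h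
  all_goals simp [plug_bind, plug_app, plug_fst, plug_snd, plug_unrollC] at h

theorem hd_not_pairC {ρ i ρ'} (hρ : Hd ρ i ρ') {S : Comp} (hS : IsStk S) (M₁ M₂ : Comp) :
    plug S ρ ≠ .pairC M₁ M₂ := by
  cases hS <;> intro h
  · rw [plug_hole] at h; subst h; nomatch hρ
  all_goals simp [plug_bind, plug_app, plug_fst, plug_snd, plug_unrollC] at h

theorem err_not_pairC {S : Comp} (hS : IsStk S) (M₁ M₂ : Comp) :
    plug S .err ≠ .pairC M₁ M₂ := by
  cases hS <;> intro h
  · rw [plug_hole] at h; nomatch h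
  all_goals simp [plug_bind, plug_app, plug_fst, plug_snd, plug_unrollC] at h

theorem hd_not_rollC {ρ i ρ'} (hρ : Hd ρ i ρ') {S : Comp} (hS : IsStk S) (T : CTy) (M : Comp) :
    plug S ρ ≠ .rollC T M := by
  cases hS <;> intro h
  · rw [plug_hole] at h; subst h; nomatch hρ
  all_goals simp [plug_bind, plug_app, plug_fst, plug_snd, plug_unrollC] at h

theorem err_not_rollC {S : Comp} (hS : IsStk S) (T : CTy) (M : Comp) :
    plug S .err ≠ .rollC T M := by
  cases hS <;> intro h
  · rw [plug_hole] at h; nomatch h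
  all_goals simp [plug_bind, plug_app, plug_fst, plug_snd, plug_unrollC] at h

theorem hd_not_err {ρ i ρ'} (hρ : Hd ρ i ρ') {S : Comp} (hS : IsStk S) :
    plug S ρ ≠ .err := by
  cases hS <;> intro h
  · rw [plug_hole] at h; subst h; nomatch hρ
  all_goals simp [plug_bind, plug_app, plug_fst, plug_snd, plug_unrollC] at h

theorem errStk_hd {ρ i ρ'} (hρ : Hd ρ i ρ') : errStk ρ = false := by
  cases hρ <;> rfl

theorem errStk_plug {S : Comp} (hS : IsStk S) (ρ : Comp) :
    errStk (plug S ρ) = errStk ρ := by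
  induction hS with
  | hole => rw [plug_hole]
  | bind _ ih => rw [plug_bind]; exact ih
  | app _ ih => rw [plug_app]; exact ih
  | fst _ ih => rw [plug_fst]; exact ih
  | snd _ ih => rw [plug_snd]; exact ih
  | unrollC _ ih => rw [plug_unrollC]; exact ih

/-- `err` does not step. -/
theorem err_no_step {i N} : ¬ Step .err i N := by
  intro h
  rcases stepInv h with ⟨S, ρ, ρ', hS, hρ, hM, _⟩ | ⟨S, hS, hne, hM, _, _⟩
  · exact hd_not_err hρ hS hM.symm
  · cases hS with
    | hole => exact hne rfl
    | bind hS => simp [plug_bind] at hM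
    | app hS => simp [plug_app] at hM
    | fst hS => simp [plug_fst] at hM
    | snd hS => simp [plug_snd] at hM
    | unrollC hS => simp [plug_unrollC] at hM

/-- `ret V` does not step. -/
theorem ret_no_step {V i N} : ¬ Step (.ret V) i N := by
  intro h
  rcases stepInv h with ⟨S, ρ, ρ', hS, hρ, hM, _⟩ | ⟨S, hS, hne, hM, _, _⟩
  · exact hd_not_ret hρ hS V hM.symm
  · exact err_not_ret hS V hM.symm

theorem step_le_one {M i N} (h : Step M i N) : i ≤ 1 := by
  cases h <;> omega

theorem evals_trans {M n N m P} (h₁ : Evals M n N) (h₂ : Evals N m P) :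
    Evals M (n + m) P := by
  induction h₁ with
  | refl => simpa using h₂
  | step hs _ ih => rw [Nat.add_assoc]; exact .step hs (ih h₂)

theorem evals_prefix {M n N} (h : Evals M n N) : ∀ i, i ≤ n → ∃ X, Evals M i X := by
  induction h with
  | refl => exact fun i hi => ⟨_, by simpa [Nat.le_zero.mp hi] using Evals.refl _⟩
  | @step M i₀ M' j N hs hrest ih =>
    intro i hi
    cases Nat.eq_zero_or_pos i with
    | inl h0 => exact ⟨M, by simpa [h0] using Evals.refl M⟩
    | inr hpos =>
      have hle : i - i₀ ≤ j := by have := step_le_one hs; omega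
      obtain ⟨X, hX⟩ := ih (i - i₀) hle
      have : Evals M (i₀ + (i - i₀)) X := .step hs hX
      have hi₀ : i₀ + (i - i₀) = i := by have := step_le_one hs; omega
      exact ⟨X, hi₀ ▸ this⟩

/-! ### Canonical (deterministic) small-step semantics -/

inductive CStep : Comp → Nat → Comp → Prop
  | bindRet : CStep (.bind (.ret V) N) 0 (sub0C V N)
  | bindErr : errStk M = true → CStep (.bind M N) 0 .err
  | bindStep : errStk M = false → CStep M i M' → CStep (.bind M N) i (.bind M' N)
  | appLam : CStep (.app (.lam M) V) 0 (sub0C V M)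
  | appErr : errStk M = true → CStep (.app M V) 0 .err
  | appStep : errStk M = false → CStep M i M' → CStep (.app M V) i (.app M' V)
  | fstPair : CStep (.fst (.pairC M₁ M₂)) 0 M₁
  | fstErr : errStk M = true → CStep (.fst M) 0 .err
  | fstStep : errStk M = false → CStep M i M' → CStep (.fst M) i (.fst M')
  | sndPair : CStep (.snd (.pairC M₁ M₂)) 0 M₂
  | sndErr : errStk M = true → CStep (.snd M) 0 .err
  | sndStep : errStk M = false → CStep M i M' → CStep (.snd M) i (.snd M')
  | unrollRoll : CStep (.unrollC (.rollC T M)) 1 M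
  | unrollErr : errStk M = true → CStep (.unrollC M) 0 .err
  | unrollStep : errStk M = false → CStep M i M' → CStep (.unrollC M) i (.unrollC M')
  | force : CStep (.force (.thunk M)) 0 M
  | caseL : CStep (.caseC (.inl V) M₁ M₂) 0 (sub0C V M₁)
  | caseR : CStep (.caseC (.inr V) M₁ M₂) 0 (sub0C V M₂)
  | splitP : CStep (.splitPC (.pair V₁ V₂) M) 0 (sub2C V₁ V₂ M)
  | splitU : CStep (.splitUC .unit M) 0 M
  | unrollP : CStep (.unrollPC (.rollV T V) M) 1 (sub0C V M)

theorem cstep_not_ret {V i N} : ¬ CStep (.ret V) i N := by intro h; nomatch h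
theorem cstep_not_err {i N} : ¬ CStep .err i N := by intro h; nomatch h
theorem cstep_not_lam {M i N} : ¬ CStep (.lam M) i N := by intro h; nomatch h
theorem cstep_not_pairC {M₁ M₂ i N} : ¬ CStep (.pairC M₁ M₂) i N := by intro h; nomatch h
theorem cstep_not_rollC {T : CTy} {M : Comp} {i : Nat} {N : Comp} : ¬ CStep (.rollC T M) i N := by intro h; nomatch h

theorem cstep_det {M i N i' N'} (h : CStep M i N) (h' : CStep M i' N') :
    i = i' ∧ N = N' := by
  induction h generalizing i' N' with
  | bindRet => cases h' with
    | bindRet => exact ⟨rfl, rfl⟩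
    | bindErr he => simp [errStk] at he
    | bindStep _ hs => exact absurd hs cstep_not_ret
  | bindErr he => cases h' with
    | bindRet => simp [errStk] at he
    | bindErr _ => exact ⟨rfl, rfl⟩
    | bindStep hf _ => rw [he] at hf; exact absurd hf (by simp)
  | bindStep hf hs ih => cases h' with
    | bindRet => exact absurd hs cstep_not_ret
    | bindErr he => rw [he] at hf; exact absurd hf (by simp)
    | bindStep _ hs' => obtain ⟨h1, h2⟩ := ih hs'; exact ⟨h1, by rw [h2]⟩
  | appLam => cases h' with
    | appLam => exact ⟨rfl, rfl⟩
    | appErr he => simp [errStk] at he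
    | appStep _ hs => exact absurd hs cstep_not_lam
  | appErr he => cases h' with
    | appLam => simp [errStk] at he
    | appErr _ => exact ⟨rfl, rfl⟩
    | appStep hf _ => rw [he] at hf; exact absurd hf (by simp)
  | appStep hf hs ih => cases h' with
    | appLam => exact absurd hs cstep_not_lam
    | appErr he => rw [he] at hf; exact absurd hf (by simp)
    | appStep _ hs' => obtain ⟨h1, h2⟩ := ih hs'; exact ⟨h1, by rw [h2]⟩
  | fstPair => cases h' with
    | fstPair => exact ⟨rfl, rfl⟩
    | fstErr he => simp [errStk] at he
    | fstStep _ hs => exact absurd hs cstep_not_pairC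
  | fstErr he => cases h' with
    | fstPair => simp [errStk] at he
    | fstErr _ => exact ⟨rfl, rfl⟩
    | fstStep hf _ => rw [he] at hf; exact absurd hf (by simp)
  | fstStep hf hs ih => cases h' with
    | fstPair => exact absurd hs cstep_not_pairC
    | fstErr he => rw [he] at hf; exact absurd hf (by simp)
    | fstStep _ hs' => obtain ⟨h1, h2⟩ := ih hs'; exact ⟨h1, by rw [h2]⟩
  | sndPair => cases h' with
    | sndPair => exact ⟨rfl, rfl⟩
    | sndErr he => simp [errStk] at he
    | sndStep _ hs => exact absurd hs cstep_not_pairC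
  | sndErr he => cases h' with
    | sndPair => simp [errStk] at he
    | sndErr _ => exact ⟨rfl, rfl⟩
    | sndStep hf _ => rw [he] at hf; exact absurd hf (by simp)
  | sndStep hf hs ih => cases h' with
    | sndPair => exact absurd hs cstep_not_pairC
    | sndErr he => rw [he] at hf; exact absurd hf (by simp)
    | sndStep _ hs' => obtain ⟨h1, h2⟩ := ih hs'; exact ⟨h1, by rw [h2]⟩
  | unrollRoll => cases h' with
    | unrollRoll => exact ⟨rfl, rfl⟩
    | unrollErr he => simp [errStk] at he
    | unrollStep _ hs => exact absurd hs cstep_not_rollC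
  | unrollErr he => cases h' with
    | unrollRoll => simp [errStk] at he
    | unrollErr _ => exact ⟨rfl, rfl⟩
    | unrollStep hf _ => rw [he] at hf; exact absurd hf (by simp)
  | unrollStep hf hs ih => cases h' with
    | unrollRoll => exact absurd hs cstep_not_rollC
    | unrollErr he => rw [he] at hf; exact absurd hf (by simp)
    | unrollStep _ hs' => obtain ⟨h1, h2⟩ := ih hs'; exact ⟨h1, by rw [h2]⟩
  | force => cases h' with
    | force => exact ⟨rfl, rfl⟩
  | caseL => cases h' with
    | caseL => exact ⟨rfl, rfl⟩
  | caseR => cases h' with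
    | caseR => exact ⟨rfl, rfl⟩
  | splitP => cases h' with
    | splitP => exact ⟨rfl, rfl⟩
  | splitU => cases h' with
    | splitU => exact ⟨rfl, rfl⟩
  | unrollP => cases h' with
    | unrollP => exact ⟨rfl, rfl⟩

theorem cstep_le_one {M i N} (h : CStep M i N) : i ≤ 1 := by
  induction h <;> omega

/-- Canonical steps from an error spine. -/
theorem cstep_errStk {M i N} (he : errStk M = true) (h : CStep M i N) :
    i = 0 ∧ N = .err := by
  cases h <;> simp_all [errStk]

/-- Iterated canonical steps. -/
inductive CEvals : Comp → Nat → Comp → Prop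
  | refl (M : Comp) : CEvals M 0 M
  | step : CStep M i M' → CEvals M' j N → CEvals M (i + j) N

theorem cevals_trans {M n N m P} (h₁ : CEvals M n N) (h₂ : CEvals N m P) :
    CEvals M (n + m) P := by
  induction h₁ with
  | refl => simpa using h₂
  | step hs _ ih => rw [Nat.add_assoc]; exact .step hs (ih h₂)

theorem cevals_single {M i N} (h : CStep M i N) : CEvals M i N := by
  simpa using CEvals.step h (CEvals.refl N)

theorem cevals_prefix {M n N} (h : CEvals M n N) : ∀ i, i ≤ n → ∃ X, CEvals M i X := by
  induction h with
  | refl => exact fun i hi => ⟨_, by simpa [Nat.le_zero.mp hi] using CEvals.refl _⟩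
  | @step M i₀ M' j N hs hrest ih =>
    intro i hi
    cases Nat.eq_zero_or_pos i with
    | inl h0 => exact ⟨M, by simpa [h0] using CEvals.refl M⟩
    | inr hpos =>
      have hle : i - i₀ ≤ j := by have := cstep_le_one hs; omega
      obtain ⟨X, hX⟩ := ih (i - i₀) hle
      have : CEvals M (i₀ + (i - i₀)) X := .step hs hX
      have hi₀ : i₀ + (i - i₀) = i := by have := cstep_le_one hs; omega
      exact ⟨X, hi₀ ▸ this⟩

/-- Canonical normal form: no canonical step. -/
def CNF (M : Comp) : Prop := ∀ i N, ¬ CStep M i N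

theorem cnf_err : CNF .err := fun _ _ h => by nomatch h
theorem cnf_ret (V : Val) : CNF (.ret V) := fun _ _ h => by nomatch h

theorem cevals_bound {M a X} (hX : CEvals M a X) (hnf : CNF X) :
    ∀ {b Y}, CEvals M b Y → b ≤ a := by
  induction hX with
  | refl =>
    intro b Y h
    cases h with
    | refl => exact Nat.le_refl 0
    | step hs _ => exact absurd hs (hnf _ _)
  | step hs hrest ih =>
    intro b Y h
    cases h with
    | refl => omega
    | step hs' hrest' =>
      obtain ⟨h1, h2⟩ := cstep_det hs hs'
      subst h2
      have := ih hnf hrest'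
      omega

theorem cevals_cnf_unique {M a X} (hX : CEvals M a X) (hnf : CNF X) :
    ∀ {b Y}, CEvals M b Y → CNF Y → X = Y := by
  induction hX with
  | refl =>
    intro b Y h hY
    cases h with
    | refl => rfl
    | step hs _ => exact absurd hs (hnf _ _)
  | step hs hrest ih =>
    intro b Y h hY
    cases h with
    | refl => exact absurd hs (hY _ _)
    | step hs' hrest' =>
      obtain ⟨h1, h2⟩ := cstep_det hs hs'
      subst h2
      exact ih hnf hrest' hY

/-! ### Evaluation frames -/

inductive Frm : Type
  | bindF (N : Comp)
  | appF (V : Val)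
  | fstF
  | sndF
  | unrF

def fapp : Frm → Comp → Comp
  | .bindF N, M => .bind M N
  | .appF V, M => .app M V
  | .fstF, M => .fst M
  | .sndF, M => .snd M
  | .unrF, M => .unrollC M

theorem errStk_fapp (f : Frm) (M : Comp) : errStk (fapp f M) = errStk M := by
  cases f <;> simp [fapp, errStk]

theorem cstep_frame {M i M'} (f : Frm) (hf : errStk M = false) (h : CStep M i M') :
    CStep (fapp f M) i (fapp f M') := by
  cases f with
  | bindF N => exact .bindStep hf h
  | appF V => exact .appStep hf h
  | fstF => exact .fstStep hf h
  | sndF => exact .sndStep hf h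
  | unrF => exact .unrollStep hf h

theorem fapp_err {M} (f : Frm) (hf : errStk M = true) : CStep (fapp f M) 0 .err := by
  cases f with
  | bindF N => exact .bindErr hf
  | appF V => exact .appErr hf
  | fstF => exact .fstErr hf
  | sndF => exact .sndErr hf
  | unrF => exact .unrollErr hf

theorem cevals_err {j Y} (h : CEvals .err j Y) : Y = .err ∧ j = 0 := by
  cases h with
  | refl => exact ⟨rfl, rfl⟩
  | step hs _ => exact absurd hs cstep_not_err

theorem cevals_frame {M j Y} (f : Frm) (h : CEvals M j Y) :
    CEvals (fapp f M) j (fapp f Y) ∨ (Y = .err ∧ CEvals (fapp f M) j .err) := by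
  induction h with
  | refl => exact .inl (.refl _)
  | @step X i X₁ j' Y hs hrest ih =>
    cases he : errStk X with
    | false =>
      have hlift := cstep_frame f he hs
      rcases ih with h1 | ⟨h1, h2⟩
      · exact .inl (.step hlift h1)
      · exact .inr ⟨h1, .step hlift h2⟩
    | true =>
      obtain ⟨hi, hX₁⟩ := cstep_errStk he hs
      subst hi hX₁
      obtain ⟨hY, hj⟩ := cevals_err hrest
      subst hY hj
      exact .inr ⟨rfl, by simpa using cevals_single (fapp_err f he)⟩

/-! ### Soundness: canonical steps are steps (on hole-free terms) -/

theorem step_head {ρ i ρ'} (hρ : Hd ρ i ρ') : Step ρ i ρ' := by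
  have h := step_of IsStk.hole hρ
  rwa [plug_hole, plug_hole] at h

theorem errStk_stack : ∀ M, errStk M = true → nhC M = true → ∃ S, IsStk S ∧ M = plug S .err
  | .err, _, _ => ⟨.hole, .hole, (plug_hole _).symm⟩
  | .bind M N, he, hn => by
      simp only [errStk] at he
      simp only [nhC, Bool.and_eq_true] at hn
      obtain ⟨S₀, hS₀, hM⟩ := errStk_stack M he hn.1
      exact ⟨.bind S₀ N, .bind hS₀, by rw [plug_bind, plugC_nh _ _ _ hn.2, ← hM]⟩
  | .app M V, he, hn => by
      simp only [errStk] at he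
      simp only [nhC, Bool.and_eq_true] at hn
      obtain ⟨S₀, hS₀, hM⟩ := errStk_stack M he hn.1
      exact ⟨.app S₀ V, .app hS₀, by rw [plug_app, plugV_nh _ _ _ hn.2, ← hM]⟩
  | .fst M, he, hn => by
      simp only [errStk] at he
      simp only [nhC] at hn
      obtain ⟨S₀, hS₀, hM⟩ := errStk_stack M he hn
      exact ⟨.fst S₀, .fst hS₀, by rw [plug_fst, ← hM]⟩
  | .snd M, he, hn => by
      simp only [errStk] at he
      simp only [nhC] at hn
      obtain ⟨S₀, hS₀, hM⟩ := errStk_stack M he hn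
      exact ⟨.snd S₀, .snd hS₀, by rw [plug_snd, ← hM]⟩
  | .unrollC M, he, hn => by
      simp only [errStk] at he
      simp only [nhC] at hn
      obtain ⟨S₀, hS₀, hM⟩ := errStk_stack M he hn
      exact ⟨.unrollC S₀, .unrollC hS₀, by rw [plug_unrollC, ← hM]⟩

theorem step_sound {M i N} (hn : nhC M = true) (h : CStep M i N) : Step M i N := by
  induction h with
  | @bindRet V N => exact step_head .bindRet
  | @bindErr M N he =>
    simp only [nhC, Bool.and_eq_true] at hn
    obtain ⟨S₀, hS₀, hM⟩ := errStk_stack M he hn.1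
    have := Step.err (S := .bind S₀ N) (.bind hS₀) (by simp)
    rwa [plug_bind, plugC_nh _ _ _ hn.2, ← hM] at this
  | @bindStep M i M' N hf hs ih =>
    simp only [nhC, Bool.and_eq_true] at hn
    have hstep := ih hn.1
    rcases stepInv hstep with ⟨S, ρ, ρ', hS, hρ, hM, hN⟩ | ⟨S, hS, hne, hM, _, _⟩
    · subst hM hN
      have := step_of (IsStk.bind (N := N) hS) hρ
      rwa [plug_bind, plug_bind, plugC_nh _ _ _ hn.2, plugC_nh _ _ _ hn.2] at this
    · subst hM
      rw [errStk_plug hS .err] at hf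
      simp [errStk] at hf
  | @appLam M V => exact step_head .appLam
  | @appErr M V he =>
    simp only [nhC, Bool.and_eq_true] at hn
    obtain ⟨S₀, hS₀, hM⟩ := errStk_stack M he hn.1
    have := Step.err (S := .app S₀ V) (.app hS₀) (by simp)
    rwa [plug_app, plugV_nh _ _ _ hn.2, ← hM] at this
  | @appStep M i M' V hf hs ih =>
    simp only [nhC, Bool.and_eq_true] at hn
    have hstep := ih hn.1
    rcases stepInv hstep with ⟨S, ρ, ρ', hS, hρ, hM, hN⟩ | ⟨S, hS, hne, hM, _, _⟩
    · subst hM hN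
      have := step_of (IsStk.app (V := V) hS) hρ
      rwa [plug_app, plug_app, plugV_nh _ _ _ hn.2, plugV_nh _ _ _ hn.2] at this
    · subst hM
      rw [errStk_plug hS .err] at hf
      simp [errStk] at hf
  | @fstPair M₁ M₂ => exact step_head .fstPair
  | @fstErr M he =>
    simp only [nhC] at hn
    obtain ⟨S₀, hS₀, hM⟩ := errStk_stack M he hn
    have := Step.err (S := .fst S₀) (.fst hS₀) (by simp)
    rwa [plug_fst, ← hM] at this
  | @fstStep M i M' hf hs ih =>
    simp only [nhC] at hn
    have hstep := ih hn
    rcases stepInv hstep with ⟨S, ρ, ρ', hS, hρ, hM, hN⟩ | ⟨S, hS, hne, hM, _, _⟩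
    · subst hM hN
      exact step_of (IsStk.fst hS) hρ
    · subst hM
      rw [errStk_plug hS .err] at hf
      simp [errStk] at hf
  | @sndPair M₁ M₂ => exact step_head .sndPair
  | @sndErr M he =>
    simp only [nhC] at hn
    obtain ⟨S₀, hS₀, hM⟩ := errStk_stack M he hn
    have := Step.err (S := .snd S₀) (.snd hS₀) (by simp)
    rwa [plug_snd, ← hM] at this
  | @sndStep M i M' hf hs ih =>
    simp only [nhC] at hn
    have hstep := ih hn
    rcases stepInv hstep with ⟨S, ρ, ρ', hS, hρ, hM, hN⟩ | ⟨S, hS, hne, hM, _, _⟩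
    · subst hM hN
      exact step_of (IsStk.snd hS) hρ
    · subst hM
      rw [errStk_plug hS .err] at hf
      simp [errStk] at hf
  | @unrollRoll T M => exact step_head .unrollRoll
  | @unrollErr M he =>
    simp only [nhC] at hn
    obtain ⟨S₀, hS₀, hM⟩ := errStk_stack M he hn
    have := Step.err (S := .unrollC S₀) (.unrollC hS₀) (by simp)
    rwa [plug_unrollC, ← hM] at this
  | @unrollStep M i M' hf hs ih =>
    simp only [nhC] at hn
    have hstep := ih hn
    rcases stepInv hstep with ⟨S, ρ, ρ', hS, hρ, hM, hN⟩ | ⟨S, hS, hne, hM, _, _⟩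
    · subst hM hN
      exact step_of (IsStk.unrollC hS) hρ
    · subst hM
      rw [errStk_plug hS .err] at hf
      simp [errStk] at hf
  | force => exact step_head .force
  | caseL => exact step_head .caseL
  | caseR => exact step_head .caseR
  | splitP => exact step_head .splitP
  | splitU => exact step_head .splitU
  | unrollP => exact step_head .unrollP

theorem cstep_nh {M i N} (hn : nhC M = true) (h : CStep M i N) : nhC N = true := by
  induction h with
  | bindRet => simp only [nhC, Bool.and_eq_true] at hn; exact nh_sub0C hn.1 hn.2
  | bindErr => rfl
  | bindStep _ _ ih =>
    simp only [nhC, Bool.and_eq_true] at hn ⊢; exact ⟨ih hn.1, hn.2⟩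
  | appLam =>
    simp only [nhC, Bool.and_eq_true] at hn
    exact nh_sub0C hn.2 hn.1
  | appErr => rfl
  | appStep _ _ ih =>
    simp only [nhC, Bool.and_eq_true] at hn ⊢; exact ⟨ih hn.1, hn.2⟩
  | fstPair => simp only [nhC, Bool.and_eq_true] at hn; exact hn.1
  | fstErr => rfl
  | fstStep _ _ ih => simp only [nhC] at hn ⊢; exact ih hn
  | sndPair => simp only [nhC, Bool.and_eq_true] at hn; exact hn.2
  | sndErr => rfl
  | sndStep _ _ ih => simp only [nhC] at hn ⊢; exact ih hn
  | unrollRoll => simp only [nhC] at hn; exact hn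
  | unrollErr => rfl
  | unrollStep _ _ ih => simp only [nhC] at hn ⊢; exact ih hn
  | force => simp only [nhC, nhV] at hn; exact hn
  | caseL =>
    simp only [nhC, nhV, Bool.and_eq_true] at hn
    exact nh_sub0C hn.1.1 hn.1.2
  | caseR =>
    simp only [nhC, nhV, Bool.and_eq_true] at hn
    exact nh_sub0C hn.1.1 hn.2
  | splitP =>
    simp only [nhC, nhV, Bool.and_eq_true] at hn
    exact nh_sub2C hn.1.1 hn.1.2 hn.2
  | splitU => simp only [nhC, Bool.and_eq_true] at hn; exact hn.2
  | unrollP =>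
    simp only [nhC, nhV, Bool.and_eq_true] at hn
    exact nh_sub0C hn.1 hn.2

theorem cevals_sound {M j N} (hn : nhC M = true) (h : CEvals M j N) : Evals M j N := by
  induction h with
  | refl => exact .refl _
  | step hs hrest ih => exact .step (step_sound hn hs) (ih (cstep_nh hn hs))

/-! ### Step-indexed logical relation (canonical semantics) -/

mutual
def VRel : Nat → VTy → Val → Prop
  | _, .dyn, _ => False
  | _, .zero, _ => False
  | _, .one, V => V = .unit
  | k, .sum A₁ A₂, V =>
      (∃ W, V = .inl W ∧ VRel k A₁ W) ∨ (∃ W, V = .inr W ∧ VRel k A₂ W)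
  | k, .prod A₁ A₂, V => ∃ W₁ W₂, V = .pair W₁ W₂ ∧ VRel k A₁ W₁ ∧ VRel k A₂ W₂
  | k, .U B, V => ∃ M, V = .thunk M ∧ ∀ k', k' ≤ k → ERel k' B M
  | _, .tvarV _, _ => False
  | k, .mu A₀, V => ∃ W, V = .rollV (.mu A₀) W ∧ ∀ k', k' < k → VRel k' (muUnfold A₀) W
  termination_by k A _ => (k, sizeOf A, 0)
  decreasing_by
    all_goals simp_wf
    all_goals
      first
        | exact Prod.Lex.right _ (Prod.Lex.left _ _ (by omega))
        | exact Prod.Lex.left _ _ (by omega)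
        | (rcases Nat.lt_or_eq_of_le (show _ ≤ k by assumption) with h | h
           · exact Prod.Lex.left _ _ h
           · cases h; exact Prod.Lex.right _ (Prod.Lex.left _ _ (by omega)))

def TRel : Nat → CTy → Comp → Prop
  | _, .dync, T => T = .err
  | _, .top, T => T = .err ∨ T = .unitC
  | k, .wth B₁ B₂, T => T = .err ∨ ∃ M₁ M₂, T = .pairC M₁ M₂ ∧
      (∀ k', k' ≤ k → ERel k' B₁ M₁) ∧ (∀ k', k' ≤ k → ERel k' B₂ M₂)
  | k, .arr A B₀, T => T = .err ∨ ∃ M, T = .lam M ∧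
      ∀ k', k' ≤ k → ∀ V, VRel k' A V → ERel k' B₀ (sub0C V M)
  | k, .F A, T => T = .err ∨ ∃ V, T = .ret V ∧ VRel k A V
  | _, .tvarC _, T => T = .err
  | k, .nu B₀, T => T = .err ∨ ∃ M, T = .rollC (.nu B₀) M ∧
      ∀ k', k' < k → ERel k' (nuUnfold B₀) M
  termination_by k B _ => (k, sizeOf B, 1)
  decreasing_by
    all_goals simp_wf
    all_goals
      first
        | exact Prod.Lex.right _ (Prod.Lex.left _ _ (by omega))
        | exact Prod.Lex.left _ _ (by omega)
        | (rcases Nat.lt_or_eq_of_le (show _ ≤ k by assumption) with h | h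
           · exact Prod.Lex.left _ _ h
           · cases h; exact Prod.Lex.right _ (Prod.Lex.left _ _ (by omega)))

def ERel : Nat → CTy → Comp → Prop
  | k, B, M => (∃ M', CEvals M k M') ∨
      (∃ j, ∃ _ : j ≤ k, ∃ T, CEvals M j T ∧ TRel (k - j) B T)
  termination_by k B _ => (k, sizeOf B, 2)
  decreasing_by
    all_goals simp_wf
    rcases Nat.eq_zero_or_pos j with h | h
    · cases h
      simp only [Nat.sub_zero]
      exact Prod.Lex.right _ (Prod.Lex.right _ (by omega))
    · exact Prod.Lex.left _ _ (by omega)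
end

/-! ### Basic properties of the logical relation -/

theorem vrel_mono : ∀ (A : VTy) {k k' : Nat} {V : Val}, k' ≤ k → VRel k A V → VRel k' A V
  | .dyn, _, _, _ => fun _ h => by simp only [VRel] at h
  | .zero, _, _, _ => fun _ h => by simp only [VRel] at h
  | .one, _, _, _ => fun _ h => by simp only [VRel] at h ⊢; exact h
  | .tvarV n, _, _, _ => fun _ h => by simp only [VRel] at h
  | .sum A₁ A₂, k, k', V => fun hk h => by
      simp only [VRel] at h ⊢
      rcases h with ⟨W, rfl, hW⟩ | ⟨W, rfl, hW⟩
      · exact .inl ⟨W, rfl, vrel_mono A₁ hk hW⟩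
      · exact .inr ⟨W, rfl, vrel_mono A₂ hk hW⟩
  | .prod A₁ A₂, k, k', V => fun hk h => by
      simp only [VRel] at h ⊢
      obtain ⟨W₁, W₂, rfl, h₁, h₂⟩ := h
      exact ⟨W₁, W₂, rfl, vrel_mono A₁ hk h₁, vrel_mono A₂ hk h₂⟩
  | .U B, k, k', V => fun hk h => by
      simp only [VRel] at h ⊢
      obtain ⟨M, rfl, hM⟩ := h
      exact ⟨M, rfl, fun k₂ hk₂ => hM k₂ (Nat.le_trans hk₂ hk)⟩
  | .mu A₀, k, k', V => fun hk h => by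
      simp only [VRel] at h ⊢
      obtain ⟨W, rfl, hW⟩ := h
      exact ⟨W, rfl, fun k₂ hk₂ => hW k₂ (Nat.lt_of_lt_of_le hk₂ hk)⟩

theorem trel_mono : ∀ (B : CTy) {k k' : Nat} {T : Comp}, k' ≤ k → TRel k B T → TRel k' B T
  | .dync, _, _, _ => fun _ h => by simp only [TRel] at h ⊢; exact h
  | .tvarC n, _, _, _ => fun _ h => by simp only [TRel] at h ⊢; exact h
  | .top, _, _, _ => fun _ h => by simp only [TRel] at h ⊢; exact h
  | .wth B₁ B₂, k, k', T => fun hk h => by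
      simp only [TRel] at h ⊢
      rcases h with rfl | ⟨M₁, M₂, rfl, h₁, h₂⟩
      · exact .inl rfl
      · exact .inr ⟨M₁, M₂, rfl, fun k₂ hk₂ => h₁ k₂ (Nat.le_trans hk₂ hk),
          fun k₂ hk₂ => h₂ k₂ (Nat.le_trans hk₂ hk)⟩
  | .arr A B₀, k, k', T => fun hk h => by
      simp only [TRel] at h ⊢
      rcases h with rfl | ⟨M, rfl, hM⟩
      · exact .inl rfl
      · exact .inr ⟨M, rfl, fun k₂ hk₂ => hM k₂ (Nat.le_trans hk₂ hk)⟩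
  | .F A, k, k', T => fun hk h => by
      simp only [TRel] at h ⊢
      rcases h with rfl | ⟨V, rfl, hV⟩
      · exact .inl rfl
      · exact .inr ⟨V, rfl, vrel_mono A hk hV⟩
  | .nu B₀, k, k', T => fun hk h => by
      simp only [TRel] at h ⊢
      rcases h with rfl | ⟨M, rfl, hM⟩
      · exact .inl rfl
      · exact .inr ⟨M, rfl, fun k₂ hk₂ => hM k₂ (Nat.lt_of_lt_of_le hk₂ hk)⟩

theorem erel_zero (B : CTy) (M : Comp) : ERel 0 B M := by
  simp only [ERel]; exact .inl ⟨M, .refl M⟩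

theorem trel_err (k : Nat) (B : CTy) : TRel k B .err := by
  cases B <;> simp [TRel]

theorem erel_err (k : Nat) (B : CTy) : ERel k B .err := by
  simp only [ERel]
  exact .inr ⟨0, Nat.zero_le k, .err, .refl _, trel_err _ _⟩

theorem erel_mono {B : CTy} {k k' : Nat} {M : Comp} (hk : k' ≤ k) (h : ERel k B M) :
    ERel k' B M := by
  simp only [ERel] at h ⊢
  rcases h with ⟨M', hev⟩ | ⟨j, hj, T, hev, hT⟩
  · obtain ⟨X, hX⟩ := cevals_prefix hev k' hk
    exact .inl ⟨X, hX⟩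
  · rcases le_or_gt j k' with hj' | hj'
    · exact .inr ⟨j, hj', T, hev, trel_mono _ (by omega) hT⟩
    · obtain ⟨X, hX⟩ := cevals_prefix hev k' (by omega)
      exact .inl ⟨X, hX⟩

theorem erel_expand {M N : Comp} {j k : Nat} {B : CTy} (hev : CEvals M j N)
    (hj : j ≤ k) (h : ERel (k - j) B N) : ERel k B M := by
  simp only [ERel] at h ⊢
  rcases h with ⟨M', hev'⟩ | ⟨j', hj', T, hev', hT⟩
  · refine .inl ⟨M', ?_⟩
    have := cevals_trans hev hev'
    rwa [Nat.add_sub_cancel' hj] at this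
  · refine .inr ⟨j + j', by omega, T, cevals_trans hev hev', ?_⟩
    have he : k - (j + j') = k - j - j' := by omega
    rwa [he]

/-! ### Compatibility lemmas for elimination frames -/

theorem erel_frame {k : Nat} {B₁ B₂ : CTy} {M : Comp} (f : Frm) (hM : ERel k B₁ M)
    (hT : ∀ k', k' ≤ k → ∀ T, TRel k' B₁ T → ERel k' B₂ (fapp f T)) :
    ERel k B₂ (fapp f M) := by
  simp only [ERel] at hM
  rcases hM with ⟨M', hev⟩ | ⟨j, hj, T, hev, hTrel⟩
  · simp only [ERel]
    rcases cevals_frame f hev with h | ⟨_, h⟩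
    · exact Or.inl ⟨_, h⟩
    · exact Or.inl ⟨_, h⟩
  · rcases cevals_frame f hev with h | ⟨rfl, h⟩
    · exact erel_expand h hj (hT (k - j) (by omega) T hTrel)
    · simp only [ERel]
      exact .inr ⟨j, hj, .err, h, trel_err _ _⟩

theorem erel_bind {k : Nat} {A : VTy} {B : CTy} {M N : Comp} (hM : ERel k (.F A) M)
    (hN : ∀ k', k' ≤ k → ∀ V, VRel k' A V → ERel k' B (sub0C V N)) :
    ERel k B (.bind M N) := by
  refine erel_frame (f := .bindF N) (B₁ := .F A) hM ?_
  intro k' hk' T hTrel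
  simp only [TRel] at hTrel
  rcases hTrel with rfl | ⟨V, rfl, hV⟩
  · exact erel_expand (cevals_single (CStep.bindErr rfl)) (Nat.zero_le _) (erel_err _ _)
  · exact erel_expand (cevals_single CStep.bindRet) (Nat.zero_le _) (hN k' hk' V hV)

theorem erel_app {k : Nat} {A : VTy} {B : CTy} {M : Comp} {V : Val}
    (hM : ERel k (.arr A B) M) (hV : VRel k A V) : ERel k B (.app M V) := by
  refine erel_frame (f := .appF V) (B₁ := .arr A B) hM ?_
  intro k' hk' T hTrel
  simp only [TRel] at hTrel
  rcases hTrel with rfl | ⟨C, rfl, hC⟩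
  · exact erel_expand (cevals_single (CStep.appErr rfl)) (Nat.zero_le _) (erel_err _ _)
  · exact erel_expand (cevals_single CStep.appLam) (Nat.zero_le _)
      (hC k' (Nat.le_refl _) V (vrel_mono A hk' hV))

theorem erel_fst {k : Nat} {B₁ B₂ : CTy} {M : Comp} (hM : ERel k (.wth B₁ B₂) M) :
    ERel k B₁ (.fst M) := by
  refine erel_frame (f := .fstF) (B₁ := .wth B₁ B₂) hM ?_
  intro k' hk' T hTrel
  simp only [TRel] at hTrel
  rcases hTrel with rfl | ⟨M₁, M₂, rfl, h₁, _⟩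
  · exact erel_expand (cevals_single (CStep.fstErr rfl)) (Nat.zero_le _) (erel_err _ _)
  · exact erel_expand (cevals_single CStep.fstPair) (Nat.zero_le _) (h₁ k' (Nat.le_refl _))

theorem erel_snd {k : Nat} {B₁ B₂ : CTy} {M : Comp} (hM : ERel k (.wth B₁ B₂) M) :
    ERel k B₂ (.snd M) := by
  refine erel_frame (f := .sndF) (B₁ := .wth B₁ B₂) hM ?_
  intro k' hk' T hTrel
  simp only [TRel] at hTrel
  rcases hTrel with rfl | ⟨M₁, M₂, rfl, _, h₂⟩
  · exact erel_expand (cevals_single (CStep.sndErr rfl)) (Nat.zero_le _) (erel_err _ _)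
  · exact erel_expand (cevals_single CStep.sndPair) (Nat.zero_le _) (h₂ k' (Nat.le_refl _))

theorem erel_unrollC {k : Nat} {B₀ : CTy} {M : Comp} (hM : ERel k (.nu B₀) M) :
    ERel k (nuUnfold B₀) (.unrollC M) := by
  refine erel_frame (f := .unrF) (B₁ := .nu B₀) hM ?_
  intro k' hk' T hTrel
  simp only [TRel] at hTrel
  rcases hTrel with rfl | ⟨C, rfl, hC⟩
  · exact erel_expand (cevals_single (CStep.unrollErr rfl)) (Nat.zero_le _) (erel_err _ _)
  · rcases Nat.eq_zero_or_pos k' with rfl | hk0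
    · exact erel_zero _ _
    · exact erel_expand (cevals_single CStep.unrollRoll) hk0 (hC (k' - 1) (by omega))

/-! ### Semantic typing of substitutions and the fundamental lemma -/

def GRel (k : Nat) (Γ : Ctx) (σ : Nat → Val) : Prop :=
  ∀ n A, Γ[n]? = some A → VRel k A (σ n)

theorem grel_mono {k k' : Nat} {Γ : Ctx} {σ : Nat → Val} (hk : k' ≤ k)
    (h : GRel k Γ σ) : GRel k' Γ σ := fun n A hn => vrel_mono A hk (h n A hn)

theorem grel_cons {k : Nat} {Γ : Ctx} {σ : Nat → Val} {A : VTy} {V : Val}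
    (hG : GRel k Γ σ) (hV : VRel k A V) : GRel k (A :: Γ) (consSub V σ) := by
  intro n A' hn
  cases n with
  | zero =>
    simp only [List.getElem?_cons_zero] at hn
    cases hn
    exact hV
  | succ n =>
    simp only [List.getElem?_cons_succ] at hn
    exact hG n A' hn

mutual
theorem fundV : ∀ {Γ V A}, VTyping cbpvP Γ V A →
    ∀ k σ, GRel k Γ σ → VRel k A (subV σ V)
  | _, _, _, .var h => fun k σ hG => hG _ _ h
  | _, _, _, .up h _ => h.elim
  | _, _, _, .unit => fun k σ hG => by simp only [subV, VRel]
  | _, _, _, .inl h => fun k σ hG => by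
      simp only [subV, VRel]
      exact .inl ⟨_, rfl, fundV h k σ hG⟩
  | _, _, _, .inr h => fun k σ hG => by
      simp only [subV, VRel]
      exact .inr ⟨_, rfl, fundV h k σ hG⟩
  | _, _, _, .pair h₁ h₂ => fun k σ hG => by
      simp only [subV, VRel]
      exact ⟨_, _, rfl, fundV h₁ k σ hG, fundV h₂ k σ hG⟩
  | _, _, _, .abortV hcx _ => hcx.elim
  | _, _, _, .caseV hcx _ _ _ => hcx.elim
  | _, _, _, .splitPV hcx _ _ => hcx.elim
  | _, _, _, .splitUV hcx _ _ => hcx.elim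
  | _, _, _, .rollV hrec h => fun k σ hG => by
      simp only [subV, VRel]
      exact ⟨_, rfl, fun k' hk' => fundV h k' σ (grel_mono (Nat.le_of_lt hk') hG)⟩
  | _, _, _, .unrollPV hcx _ _ _ => hcx.elim
  | _, _, _, .thunk h => fun k σ hG => by
      simp only [subV, VRel]
      exact ⟨_, rfl, fun k' hk' => fundC h rfl k' σ (grel_mono hk' hG)⟩

theorem fundC : ∀ {Γ Δ M B}, CTyping cbpvP Γ Δ M B → Δ = none →
    ∀ k σ, GRel k Γ σ → ERel k B (subC σ M)
  | _, _, _, _, .hole, hΔ => nomatch hΔ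
  | _, _, _, _, .err, _ => fun k σ hG => by
      simp only [subC]; exact erel_err k _
  | _, _, _, _, .dn h _, _ => h.elim
  | _, _, _, _, .force h, _ => fun k σ hG => by
      simp only [subC]
      have hv := fundV h k σ hG
      simp only [VRel] at hv
      obtain ⟨M₀, hV, hM₀⟩ := hv
      rw [hV]
      exact erel_expand (cevals_single CStep.force) (Nat.zero_le k) (hM₀ k (Nat.le_refl k))
  | _, _, _, _, .ret h, _ => fun k σ hG => by
      simp only [subC, ERel]
      refine .inr ⟨0, Nat.zero_le k, _, .refl _, ?_⟩
      simp only [TRel]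
      exact .inr ⟨_, rfl, fundV h k σ hG⟩
  | _, _, _, _, .bind h₁ h₂, hΔ => fun k σ hG => by
      simp only [subC]
      refine erel_bind (fundC h₁ hΔ k σ hG) ?_
      intro k' hk' V hV
      rw [sub0C_subC]
      exact fundC h₂ rfl k' _ (grel_cons (grel_mono hk' hG) hV)
  | _, _, _, _, .lam _ h, hΔ => fun k σ hG => by
      simp only [subC, ERel]
      refine .inr ⟨0, Nat.zero_le k, _, .refl _, ?_⟩
      simp only [TRel]
      refine .inr ⟨_, rfl, ?_⟩
      intro k' hk' V hV
      rw [sub0C_subC]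
      exact fundC h hΔ k' _ (grel_cons (grel_mono hk' hG) hV)
  | _, _, _, _, .app h₁ h₂, hΔ => fun k σ hG => by
      simp only [subC]
      exact erel_app (fundC h₁ hΔ k σ hG) (fundV h₂ k σ hG)
  | _, _, _, _, .unitC _, _ => fun k σ hG => by
      simp only [subC, ERel]
      refine .inr ⟨0, Nat.zero_le k, _, .refl _, ?_⟩
      simp [TRel]
  | _, _, _, _, .pairC _ h₁ h₂, hΔ => fun k σ hG => by
      simp only [subC, ERel]
      refine .inr ⟨0, Nat.zero_le k, _, .refl _, ?_⟩
      simp only [TRel]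
      exact .inr ⟨_, _, rfl, fun k' hk' => fundC h₁ hΔ k' σ (grel_mono (by omega) hG),
        fun k' hk' => fundC h₂ hΔ k' σ (grel_mono (by omega) hG)⟩
  | _, _, _, _, .fst h, hΔ => fun k σ hG => by
      simp only [subC]
      exact erel_fst (fundC h hΔ k σ hG)
  | _, _, _, _, .snd h, hΔ => fun k σ hG => by
      simp only [subC]
      exact erel_snd (fundC h hΔ k σ hG)
  | _, _, _, _, .abortC _ h, _ => fun k σ hG => by
      have hv := fundV h k σ hG
      simp only [VRel] at hv
  | _, _, _, _, .caseC _ h h₁ h₂, hΔ => fun k σ hG => by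
      simp only [subC]
      have hv := fundV h k σ hG
      simp only [VRel] at hv
      rcases hv with ⟨W, hW, hrel⟩ | ⟨W, hW, hrel⟩
      · rw [hW]
        refine erel_expand (cevals_single CStep.caseL) (Nat.zero_le _) ?_
        rw [sub0C_subC]
        exact fundC h₁ hΔ k _ (grel_cons hG hrel)
      · rw [hW]
        refine erel_expand (cevals_single CStep.caseR) (Nat.zero_le _) ?_
        rw [sub0C_subC]
        exact fundC h₂ hΔ k _ (grel_cons hG hrel)
  | _, _, _, _, .splitPC _ h h₁, hΔ => fun k σ hG => by
      simp only [subC]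
      have hv := fundV h k σ hG
      simp only [VRel] at hv
      obtain ⟨W₁, W₂, hW, hr₁, hr₂⟩ := hv
      rw [hW]
      refine erel_expand (cevals_single CStep.splitP) (Nat.zero_le _) ?_
      rw [show sub2C W₁ W₂ (subC (liftSub (liftSub σ)) _) =
        subC (consSub W₂ (consSub W₁ σ)) _ from sub2C_subC W₁ W₂ σ _]
      exact fundC h₁ hΔ k _ (grel_cons (grel_cons hG hr₁) hr₂)
  | _, _, _, _, .splitUC _ h h₁, hΔ => fun k σ hG => by
      simp only [subC]
      have hv := fundV h k σ hG
      simp only [VRel] at hv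
      rw [hv]
      exact erel_expand (cevals_single CStep.splitU) (Nat.zero_le _) (fundC h₁ hΔ k σ hG)
  | _, _, _, _, .unrollPC _ _ h h₁, hΔ => fun k σ hG => by
      simp only [subC]
      have hv := fundV h k σ hG
      simp only [VRel] at hv
      obtain ⟨W, hW, hrel⟩ := hv
      rw [hW]
      rcases Nat.eq_zero_or_pos k with rfl | hk0
      · exact erel_zero _ _
      · refine erel_expand (cevals_single CStep.unrollP) hk0 ?_
        rw [sub0C_subC]
        exact fundC h₁ hΔ (k - 1) _
          (grel_cons (grel_mono (by omega) hG) (hrel (k - 1) (by omega)))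
  | _, _, _, _, .rollC _ h, hΔ => fun k σ hG => by
      simp only [subC, ERel]
      refine .inr ⟨0, Nat.zero_le k, _, .refl _, ?_⟩
      simp only [TRel]
      exact .inr ⟨_, rfl, fun k' hk' => fundC h hΔ k' σ (grel_mono (by omega) hG)⟩
  | _, _, _, _, .unrollC _ h, hΔ => fun k σ hG => by
      simp only [subC]
      exact erel_unrollC (fundC h hΔ k σ hG)
end

/-! ### Indexed parallel reduction -/

mutual
inductive PV : Val → Val → Prop
  | var : PV (.var n) (.var n)
  | up : PV V V' → PV (.up A A' V) (.up A A' V')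
  | unit : PV .unit .unit
  | inl : PV V V' → PV (.inl V) (.inl V')
  | inr : PV V V' → PV (.inr V) (.inr V')
  | pair : PV V V' → PV W W' → PV (.pair V W) (.pair V' W')
  | abortV : PV V V' → PV (.abortV V) (.abortV V')
  | caseV : PV V V' → PV W₁ W₁' → PV W₂ W₂' → PV (.caseV V W₁ W₂) (.caseV V' W₁' W₂')
  | splitPV : PV V V' → PV W W' → PV (.splitPV V W) (.splitPV V' W')
  | splitUV : PV V V' → PV W W' → PV (.splitUV V W) (.splitUV V' W')
  | rollV : PV V V' → PV (.rollV T V) (.rollV T V')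
  | unrollPV : PV V V' → PV W W' → PV (.unrollPV V W) (.unrollPV V' W')
  | thunk : PC n M M' → PV (.thunk M) (.thunk M')

inductive PC : Nat → Comp → Comp → Prop
  | hole : PC 0 .hole .hole
  | err : PC 0 .err .err
  | dn : PC n M M' → PC 0 (.dn B B' M) (.dn B B' M')
  | force : PV V V' → PC 0 (.force V) (.force V')
  | ret : PV V V' → PC 0 (.ret V) (.ret V')
  | bind : PC n M M' → PC m N N' → PC n (.bind M N) (.bind M' N')
  | lam : PC n M M' → PC 0 (.lam M) (.lam M')
  | app : PC n M M' → PV V V' → PC n (.app M V) (.app M' V')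
  | unitC : PC 0 .unitC .unitC
  | pairC : PC n M₁ M₁' → PC m M₂ M₂' → PC 0 (.pairC M₁ M₂) (.pairC M₁' M₂')
  | fst : PC n M M' → PC n (.fst M) (.fst M')
  | snd : PC n M M' → PC n (.snd M) (.snd M')
  | abortC : PV V V' → PC 0 (.abortC V) (.abortC V')
  | caseC : PV V V' → PC n M₁ M₁' → PC m M₂ M₂' → PC 0 (.caseC V M₁ M₂) (.caseC V' M₁' M₂')
  | splitPC : PV V V' → PC n M M' → PC 0 (.splitPC V M) (.splitPC V' M')
  | splitUC : PV V V' → PC n M M' → PC 0 (.splitUC V M) (.splitUC V' M')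
  | unrollPC : PV V V' → PC n M M' → PC 0 (.unrollPC V M) (.unrollPC V' M')
  | rollC : PC n M M' → PC 0 (.rollC T M) (.rollC T M')
  | unrollC : PC n M M' → PC n (.unrollC M) (.unrollC M')
  | rcaseL : PV V V' → PC n M₁ M₁' → PC (n+1) (.caseC (.inl V) M₁ M₂) (sub0C V' M₁')
  | rcaseR : PV V V' → PC n M₂ M₂' → PC (n+1) (.caseC (.inr V) M₁ M₂) (sub0C V' M₂')
  | rsplitP : PV V₁ V₁' → PV V₂ V₂' → PC n M M' →
      PC (n+1) (.splitPC (.pair V₁ V₂) M) (sub2C V₁' V₂' M')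
  | rsplitU : PC n M M' → PC (n+1) (.splitUC .unit M) M'
  | runrollP : PV V V' → PC n M M' → PC (n+1) (.unrollPC (.rollV T V) M) (sub0C V' M')
  | rforce : PC n M M' → PC (n+1) (.force (.thunk M)) M'
  | rbind : PV V V' → PC n N N' → PC (n+1) (.bind (.ret V) N) (sub0C V' N')
  | rapp : PC n M M' → PV V V' → PC (n+1) (.app (.lam M) V) (sub0C V' M')
  | rfst : PC n M₁ M₁' → PC (n+1) (.fst (.pairC M₁ M₂)) M₁'
  | rsnd : PC n M₂ M₂' → PC (n+1) (.snd (.pairC M₁ M₂)) M₂'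
  | runroll : PC n M M' → PC (n+1) (.unrollC (.rollC T M)) M'
end

def PC' (A B : Comp) : Prop := ∃ n, PC n A B

mutual
theorem pv_refl : ∀ V, PV V V
  | .var _ => .var
  | .up _ _ V => .up (pv_refl V)
  | .unit => .unit
  | .inl V => .inl (pv_refl V)
  | .inr V => .inr (pv_refl V)
  | .pair V W => .pair (pv_refl V) (pv_refl W)
  | .abortV V => .abortV (pv_refl V)
  | .caseV V W₁ W₂ => .caseV (pv_refl V) (pv_refl W₁) (pv_refl W₂)
  | .splitPV V W => .splitPV (pv_refl V) (pv_refl W)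
  | .splitUV V W => .splitUV (pv_refl V) (pv_refl W)
  | .rollV T V => .rollV (pv_refl V)
  | .unrollPV V W => .unrollPV (pv_refl V) (pv_refl W)
  | .thunk M => .thunk (pc_refl M).choose_spec

theorem pc_refl : ∀ M, ∃ n, PC n M M
  | .hole => ⟨0, .hole⟩
  | .err => ⟨0, .err⟩
  | .dn B B' M => ⟨0, .dn (pc_refl M).choose_spec⟩
  | .force V => ⟨0, .force (pv_refl V)⟩
  | .ret V => ⟨0, .ret (pv_refl V)⟩
  | .bind M N => ⟨(pc_refl M).choose, .bind (pc_refl M).choose_spec (pc_refl N).choose_spec⟩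
  | .lam M => ⟨0, .lam (pc_refl M).choose_spec⟩
  | .app M V => ⟨(pc_refl M).choose, .app (pc_refl M).choose_spec (pv_refl V)⟩
  | .unitC => ⟨0, .unitC⟩
  | .pairC M N => ⟨0, .pairC (pc_refl M).choose_spec (pc_refl N).choose_spec⟩
  | .fst M => ⟨(pc_refl M).choose, .fst (pc_refl M).choose_spec⟩
  | .snd M => ⟨(pc_refl M).choose, .snd (pc_refl M).choose_spec⟩
  | .abortC V => ⟨0, .abortC (pv_refl V)⟩
  | .caseC V M₁ M₂ => ⟨0, .caseC (pv_refl V) (pc_refl M₁).choose_spec (pc_refl M₂).choose_spec⟩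
  | .splitPC V M => ⟨0, .splitPC (pv_refl V) (pc_refl M).choose_spec⟩
  | .splitUC V M => ⟨0, .splitUC (pv_refl V) (pc_refl M).choose_spec⟩
  | .unrollPC V M => ⟨0, .unrollPC (pv_refl V) (pc_refl M).choose_spec⟩
  | .rollC T M => ⟨0, .rollC (pc_refl M).choose_spec⟩
  | .unrollC M => ⟨(pc_refl M).choose, .unrollC (pc_refl M).choose_spec⟩
end

mutual
theorem pv_ren : ∀ {V V'}, PV V V' → ∀ f, PV (renV f V) (renV f V')
  | _, _, .var, f => .var
  | _, _, .up h, f => .up (pv_ren h f)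
  | _, _, .unit, f => .unit
  | _, _, .inl h, f => .inl (pv_ren h f)
  | _, _, .inr h, f => .inr (pv_ren h f)
  | _, _, .pair h₁ h₂, f => .pair (pv_ren h₁ f) (pv_ren h₂ f)
  | _, _, .abortV h, f => .abortV (pv_ren h f)
  | _, _, .caseV h h₁ h₂, f =>
      .caseV (pv_ren h f) (pv_ren h₁ (liftN f)) (pv_ren h₂ (liftN f))
  | _, _, .splitPV h h₁, f => .splitPV (pv_ren h f) (pv_ren h₁ (liftN (liftN f)))
  | _, _, .splitUV h h₁, f => .splitUV (pv_ren h f) (pv_ren h₁ f)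
  | _, _, .rollV h, f => .rollV (pv_ren h f)
  | _, _, .unrollPV h h₁, f => .unrollPV (pv_ren h f) (pv_ren h₁ (liftN f))
  | _, _, .thunk h, f => .thunk (pc_ren h f)

theorem pc_ren : ∀ {n M M'}, PC n M M' → ∀ f, PC n (renC f M) (renC f M')
  | _, _, _, .hole, f => .hole
  | _, _, _, .err, f => .err
  | _, _, _, .dn h, f => .dn (pc_ren h f)
  | _, _, _, .force h, f => .force (pv_ren h f)
  | _, _, _, .ret h, f => .ret (pv_ren h f)
  | _, _, _, .bind h h₁, f => .bind (pc_ren h f) (pc_ren h₁ (liftN f))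
  | _, _, _, .lam h, f => .lam (pc_ren h (liftN f))
  | _, _, _, .app h h₁, f => .app (pc_ren h f) (pv_ren h₁ f)
  | _, _, _, .unitC, f => .unitC
  | _, _, _, .pairC h h₁, f => .pairC (pc_ren h f) (pc_ren h₁ f)
  | _, _, _, .fst h, f => .fst (pc_ren h f)
  | _, _, _, .snd h, f => .snd (pc_ren h f)
  | _, _, _, .abortC h, f => .abortC (pv_ren h f)
  | _, _, _, .caseC h h₁ h₂, f =>
      .caseC (pv_ren h f) (pc_ren h₁ (liftN f)) (pc_ren h₂ (liftN f))
  | _, _, _, .splitPC h h₁, f => .splitPC (pv_ren h f) (pc_ren h₁ (liftN (liftN f)))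
  | _, _, _, .splitUC h h₁, f => .splitUC (pv_ren h f) (pc_ren h₁ f)
  | _, _, _, .unrollPC h h₁, f => .unrollPC (pv_ren h f) (pc_ren h₁ (liftN f))
  | _, _, _, .rollC h, f => .rollC (pc_ren h f)
  | _, _, _, .unrollC h, f => .unrollC (pc_ren h f)
  | _, _, _, .rcaseL h h₁, f => by
      simp only [renC, renV, renC_sub0C]
      exact .rcaseL (pv_ren h f) (pc_ren h₁ (liftN f))
  | _, _, _, .rcaseR h h₂, f => by
      simp only [renC, renV, renC_sub0C]
      exact .rcaseR (pv_ren h f) (pc_ren h₂ (liftN f))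
  | _, _, _, .rsplitP h₁ h₂ h, f => by
      simp only [renC, renV, renC_sub2C]
      exact .rsplitP (pv_ren h₁ f) (pv_ren h₂ f) (pc_ren h (liftN (liftN f)))
  | _, _, _, .rsplitU h, f => by
      simp only [renC, renV]
      exact .rsplitU (pc_ren h f)
  | _, _, _, .runrollP h h₁, f => by
      simp only [renC, renV, renC_sub0C]
      exact .runrollP (pv_ren h f) (pc_ren h₁ (liftN f))
  | _, _, _, .rforce h, f => by
      simp only [renC, renV]
      exact .rforce (pc_ren h f)
  | _, _, _, .rbind h h₁, f => by
      simp only [renC, renV, renC_sub0C]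
      exact .rbind (pv_ren h f) (pc_ren h₁ (liftN f))
  | _, _, _, .rapp h h₁, f => by
      simp only [renC, renV, renC_sub0C]
      exact .rapp (pc_ren h (liftN f)) (pv_ren h₁ f)
  | _, _, _, .rfst h, f => by
      simp only [renC]
      exact .rfst (pc_ren h f)
  | _, _, _, .rsnd h, f => by
      simp only [renC]
      exact .rsnd (pc_ren h f)
  | _, _, _, .runroll h, f => by
      simp only [renC]
      exact .runroll (pc_ren h f)
end

theorem pv_liftSub {σ σ' : Nat → Val} (hσ : ∀ n, PV (σ n) (σ' n)) :
    ∀ n, PV (liftSub σ n) (liftSub σ' n)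
  | 0 => .var
  | n+1 => pv_ren (hσ n) Nat.succ

mutual
theorem pv_sub : ∀ {V V'}, PV V V' → ∀ {σ σ' : Nat → Val},
    (∀ n, PV (σ n) (σ' n)) → PV (subV σ V) (subV σ' V')
  | _, _, .var, _, _, hσ => hσ _
  | _, _, .up h, _, _, hσ => .up (pv_sub h hσ)
  | _, _, .unit, _, _, hσ => .unit
  | _, _, .inl h, _, _, hσ => .inl (pv_sub h hσ)
  | _, _, .inr h, _, _, hσ => .inr (pv_sub h hσ)
  | _, _, .pair h₁ h₂, _, _, hσ => .pair (pv_sub h₁ hσ) (pv_sub h₂ hσ)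
  | _, _, .abortV h, _, _, hσ => .abortV (pv_sub h hσ)
  | _, _, .caseV h h₁ h₂, _, _, hσ =>
      .caseV (pv_sub h hσ) (pv_sub h₁ (pv_liftSub hσ)) (pv_sub h₂ (pv_liftSub hσ))
  | _, _, .splitPV h h₁, _, _, hσ =>
      .splitPV (pv_sub h hσ) (pv_sub h₁ (pv_liftSub (pv_liftSub hσ)))
  | _, _, .splitUV h h₁, _, _, hσ => .splitUV (pv_sub h hσ) (pv_sub h₁ hσ)
  | _, _, .rollV h, _, _, hσ => .rollV (pv_sub h hσ)
  | _, _, .unrollPV h h₁, _, _, hσ => .unrollPV (pv_sub h hσ) (pv_sub h₁ (pv_liftSub hσ))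
  | _, _, .thunk h, _, _, hσ => .thunk (pc_sub h hσ)

theorem pc_sub : ∀ {n M M'}, PC n M M' → ∀ {σ σ' : Nat → Val},
    (∀ n, PV (σ n) (σ' n)) → PC n (subC σ M) (subC σ' M')
  | _, _, _, .hole, _, _, hσ => .hole
  | _, _, _, .err, _, _, hσ => .err
  | _, _, _, .dn h, _, _, hσ => .dn (pc_sub h hσ)
  | _, _, _, .force h, _, _, hσ => .force (pv_sub h hσ)
  | _, _, _, .ret h, _, _, hσ => .ret (pv_sub h hσ)
  | _, _, _, .bind h h₁, _, _, hσ => .bind (pc_sub h hσ) (pc_sub h₁ (pv_liftSub hσ))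
  | _, _, _, .lam h, _, _, hσ => .lam (pc_sub h (pv_liftSub hσ))
  | _, _, _, .app h h₁, _, _, hσ => .app (pc_sub h hσ) (pv_sub h₁ hσ)
  | _, _, _, .unitC, _, _, hσ => .unitC
  | _, _, _, .pairC h h₁, _, _, hσ => .pairC (pc_sub h hσ) (pc_sub h₁ hσ)
  | _, _, _, .fst h, _, _, hσ => .fst (pc_sub h hσ)
  | _, _, _, .snd h, _, _, hσ => .snd (pc_sub h hσ)
  | _, _, _, .abortC h, _, _, hσ => .abortC (pv_sub h hσ)
  | _, _, _, .caseC h h₁ h₂, _, _, hσ =>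
      .caseC (pv_sub h hσ) (pc_sub h₁ (pv_liftSub hσ)) (pc_sub h₂ (pv_liftSub hσ))
  | _, _, _, .splitPC h h₁, _, _, hσ =>
      .splitPC (pv_sub h hσ) (pc_sub h₁ (pv_liftSub (pv_liftSub hσ)))
  | _, _, _, .splitUC h h₁, _, _, hσ => .splitUC (pv_sub h hσ) (pc_sub h₁ hσ)
  | _, _, _, .unrollPC h h₁, _, _, hσ => .unrollPC (pv_sub h hσ) (pc_sub h₁ (pv_liftSub hσ))
  | _, _, _, .rollC h, _, _, hσ => .rollC (pc_sub h hσ)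
  | _, _, _, .unrollC h, _, _, hσ => .unrollC (pc_sub h hσ)
  | _, _, _, .rcaseL h h₁, σ, σ', hσ => by
      simp only [subC, subV, subC_sub0C]
      exact .rcaseL (pv_sub h hσ) (pc_sub h₁ (pv_liftSub hσ))
  | _, _, _, .rcaseR h h₂, σ, σ', hσ => by
      simp only [subC, subV, subC_sub0C]
      exact .rcaseR (pv_sub h hσ) (pc_sub h₂ (pv_liftSub hσ))
  | _, _, _, .rsplitP h₁ h₂ h, σ, σ', hσ => by
      simp only [subC, subV, subC_sub2C]
      exact .rsplitP (pv_sub h₁ hσ) (pv_sub h₂ hσ) (pc_sub h (pv_liftSub (pv_liftSub hσ)))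
  | _, _, _, .rsplitU h, σ, σ', hσ => by
      simp only [subC, subV]
      exact .rsplitU (pc_sub h hσ)
  | _, _, _, .runrollP h h₁, σ, σ', hσ => by
      simp only [subC, subV, subC_sub0C]
      exact .runrollP (pv_sub h hσ) (pc_sub h₁ (pv_liftSub hσ))
  | _, _, _, .rforce h, σ, σ', hσ => by
      simp only [subC, subV]
      exact .rforce (pc_sub h hσ)
  | _, _, _, .rbind h h₁, σ, σ', hσ => by
      simp only [subC, subV, subC_sub0C]
      exact .rbind (pv_sub h hσ) (pc_sub h₁ (pv_liftSub hσ))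
  | _, _, _, .rapp h h₁, σ, σ', hσ => by
      simp only [subC, subV, subC_sub0C]
      exact .rapp (pc_sub h (pv_liftSub hσ)) (pv_sub h₁ hσ)
  | _, _, _, .rfst h, σ, σ', hσ => by
      simp only [subC]
      exact .rfst (pc_sub h hσ)
  | _, _, _, .rsnd h, σ, σ', hσ => by
      simp only [subC]
      exact .rsnd (pc_sub h hσ)
  | _, _, _, .runroll h, σ, σ', hσ => by
      simp only [subC]
      exact .runroll (pc_sub h hσ)
end

theorem pv_sub0 {V V' : Val} (h : PV V V') : ∀ n, PV (sub0 V n) (sub0 V' n)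
  | 0 => h
  | n+1 => .var

theorem pv_sub2 {V₁ V₁' V₂ V₂' : Val} (h₁ : PV V₁ V₁') (h₂ : PV V₂ V₂') :
    ∀ n, PV (sub2 V₁ V₂ n) (sub2 V₁' V₂' n)
  | 0 => h₂
  | 1 => h₁
  | _+2 => .var

/-! ### Congruence layer and the dichotomy lemma -/

inductive PCc : Nat → Comp → Comp → Prop
  | hole : PCc 0 .hole .hole
  | err : PCc 0 .err .err
  | dn : PC n M M' → PCc 0 (.dn B B' M) (.dn B B' M')
  | force : PV V V' → PCc 0 (.force V) (.force V')
  | ret : PV V V' → PCc 0 (.ret V) (.ret V')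
  | bind : PC n M M' → PC m N N' → PCc n (.bind M N) (.bind M' N')
  | lam : PC n M M' → PCc 0 (.lam M) (.lam M')
  | app : PC n M M' → PV V V' → PCc n (.app M V) (.app M' V')
  | unitC : PCc 0 .unitC .unitC
  | pairC : PC n M₁ M₁' → PC m M₂ M₂' → PCc 0 (.pairC M₁ M₂) (.pairC M₁' M₂')
  | fst : PC n M M' → PCc n (.fst M) (.fst M')
  | snd : PC n M M' → PCc n (.snd M) (.snd M')
  | abortC : PV V V' → PCc 0 (.abortC V) (.abortC V')
  | caseC : PV V V' → PC n M₁ M₁' → PC m M₂ M₂' → PCc 0 (.caseC V M₁ M₂) (.caseC V' M₁' M₂')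
  | splitPC : PV V V' → PC n M M' → PCc 0 (.splitPC V M) (.splitPC V' M')
  | splitUC : PV V V' → PC n M M' → PCc 0 (.splitUC V M) (.splitUC V' M')
  | unrollPC : PV V V' → PC n M M' → PCc 0 (.unrollPC V M) (.unrollPC V' M')
  | rollC : PC n M M' → PCc 0 (.rollC T M) (.rollC T M')
  | unrollC : PC n M M' → PCc n (.unrollC M) (.unrollC M')

theorem pc_dichot {ν : Nat} {A B : Comp} (h : PC ν A B) :
    (∃ i₀ A' ν', CStep A i₀ A' ∧ PC ν' A' B ∧ ν' < ν ∧ errStk A = false) ∨ PCc ν A B := by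
  cases h with
  | hole => exact .inr .hole
  | err => exact .inr .err
  | dn h => exact .inr (.dn h)
  | force h => exact .inr (.force h)
  | ret h => exact .inr (.ret h)
  | bind h h₁ => exact .inr (.bind h h₁)
  | lam h => exact .inr (.lam h)
  | app h h₁ => exact .inr (.app h h₁)
  | unitC => exact .inr .unitC
  | pairC h h₁ => exact .inr (.pairC h h₁)
  | fst h => exact .inr (.fst h)
  | snd h => exact .inr (.snd h)
  | abortC h => exact .inr (.abortC h)
  | caseC h h₁ h₂ => exact .inr (.caseC h h₁ h₂)
  | splitPC h h₁ => exact .inr (.splitPC h h₁)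
  | splitUC h h₁ => exact .inr (.splitUC h h₁)
  | unrollPC h h₁ => exact .inr (.unrollPC h h₁)
  | rollC h => exact .inr (.rollC h)
  | unrollC h => exact .inr (.unrollC h)
  | @rcaseL V V' n M₁ M₁' M₂ h h₁ =>
    exact .inl ⟨0, _, _, .caseL, pc_sub h₁ (pv_sub0 h), by omega, by simp [errStk]⟩
  | @rcaseR V V' n M₂ M₂' M₁ h h₂ =>
    exact .inl ⟨0, _, _, .caseR, pc_sub h₂ (pv_sub0 h), by omega, by simp [errStk]⟩
  | rsplitP h₁ h₂ h =>
    exact .inl ⟨0, _, _, .splitP, pc_sub h (pv_sub2 h₁ h₂), by omega, by simp [errStk]⟩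
  | rsplitU h =>
    exact .inl ⟨0, _, _, .splitU, h, by omega, by simp [errStk]⟩
  | runrollP h h₁ =>
    exact .inl ⟨1, _, _, .unrollP, pc_sub h₁ (pv_sub0 h), by omega, by simp [errStk]⟩
  | rforce h =>
    exact .inl ⟨0, _, _, .force, h, by omega, by simp [errStk]⟩
  | rbind h h₁ =>
    exact .inl ⟨0, _, _, .bindRet, pc_sub h₁ (pv_sub0 h), by omega, by simp [errStk]⟩
  | rapp h h₁ =>
    exact .inl ⟨0, _, _, .appLam, pc_sub h (pv_sub0 h₁), by omega, by simp [errStk]⟩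
  | rfst h =>
    exact .inl ⟨0, _, _, .fstPair, h, by omega, by simp [errStk]⟩
  | rsnd h =>
    exact .inl ⟨0, _, _, .sndPair, h, by omega, by simp [errStk]⟩
  | runroll h =>
    exact .inl ⟨1, _, _, .unrollRoll, h, by omega, by simp [errStk]⟩

/-- Error spines are preserved by parallel reduction. -/
theorem errStk_pc : ∀ {n A B}, PC n A B → errStk A = true → errStk B = true
  | _, _, _, .err, _ => rfl
  | _, _, _, .bind h _, he => by
      simp only [errStk] at he ⊢; exact errStk_pc h he
  | _, _, _, .app h _, he => by
      simp only [errStk] at he ⊢; exact errStk_pc h he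
  | _, _, _, .fst h, he => by
      simp only [errStk] at he ⊢; exact errStk_pc h he
  | _, _, _, .snd h, he => by
      simp only [errStk] at he ⊢; exact errStk_pc h he
  | _, _, _, .unrollC h, he => by
      simp only [errStk] at he ⊢; exact errStk_pc h he
  | _, _, _, .hole, he => by simp [errStk] at he
  | _, _, _, .dn _, he => by simp [errStk] at he
  | _, _, _, .force _, he => by simp [errStk] at he
  | _, _, _, .ret _, he => by simp [errStk] at he
  | _, _, _, .lam _, he => by simp [errStk] at he
  | _, _, _, .unitC, he => by simp [errStk] at he
  | _, _, _, .pairC _ _, he => by simp [errStk] at he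
  | _, _, _, .abortC _, he => by simp [errStk] at he
  | _, _, _, .caseC _ _ _, he => by simp [errStk] at he
  | _, _, _, .splitPC _ _, he => by simp [errStk] at he
  | _, _, _, .splitUC _ _, he => by simp [errStk] at he
  | _, _, _, .unrollPC _ _, he => by simp [errStk] at he
  | _, _, _, .rollC _, he => by simp [errStk] at he
  | _, _, _, .rcaseL _ _, he => by simp [errStk] at he
  | _, _, _, .rcaseR _ _, he => by simp [errStk] at he
  | _, _, _, .rsplitP _ _ _, he => by simp [errStk] at he
  | _, _, _, .rsplitU _, he => by simp [errStk] at he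
  | _, _, _, .runrollP _ _, he => by simp [errStk] at he
  | _, _, _, .rforce _, he => by simp [errStk] at he
  | _, _, _, .rbind _ _, he => by simp [errStk] at he
  | _, _, _, .rapp _ _, he => by simp [errStk] at he
  | _, _, _, .rfst _, he => by simp [errStk] at he
  | _, _, _, .rsnd _, he => by simp [errStk] at he
  | _, _, _, .runroll _, he => by simp [errStk] at he

/-! ### Factoring arbitrary steps through canonical steps -/

mutual
theorem pplugV {n a b : _} (h : PC n a b) :
    ∀ (K : Val) (d : Nat), PV (plugV a d K) (plugV b d K)
  | .var m, _ => .var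
  | .up A A' K, d => .up (pplugV h K d)
  | .unit, _ => .unit
  | .inl K, d => .inl (pplugV h K d)
  | .inr K, d => .inr (pplugV h K d)
  | .pair K₁ K₂, d => .pair (pplugV h K₁ d) (pplugV h K₂ d)
  | .abortV K, d => .abortV (pplugV h K d)
  | .caseV K K₁ K₂, d =>
      .caseV (pplugV h K d) (pplugV h K₁ (d+1)) (pplugV h K₂ (d+1))
  | .splitPV K K₁, d => .splitPV (pplugV h K d) (pplugV h K₁ (d+2))
  | .splitUV K K₁, d => .splitUV (pplugV h K d) (pplugV h K₁ d)
  | .rollV T K, d => .rollV (pplugV h K d)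
  | .unrollPV K K₁, d => .unrollPV (pplugV h K d) (pplugV h K₁ (d+1))
  | .thunk K, d => .thunk (pplugC h K d).choose_spec

theorem pplugC {n a b : _} (h : PC n a b) :
    ∀ (K : Comp) (d : Nat), ∃ m, PC m (plugC a d K) (plugC b d K)
  | .hole, d => ⟨n, pc_ren h (· + d)⟩
  | .err, _ => ⟨0, .err⟩
  | .dn B B' K, d => ⟨0, .dn (pplugC h K d).choose_spec⟩
  | .force K, d => ⟨0, .force (pplugV h K d)⟩
  | .ret K, d => ⟨0, .ret (pplugV h K d)⟩
  | .bind K₁ K₂, d =>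
      ⟨_, .bind (pplugC h K₁ d).choose_spec (pplugC h K₂ (d+1)).choose_spec⟩
  | .lam K, d => ⟨0, .lam (pplugC h K (d+1)).choose_spec⟩
  | .app K₁ K₂, d => ⟨_, .app (pplugC h K₁ d).choose_spec (pplugV h K₂ d)⟩
  | .unitC, _ => ⟨0, .unitC⟩
  | .pairC K₁ K₂, d =>
      ⟨0, .pairC (pplugC h K₁ d).choose_spec (pplugC h K₂ d).choose_spec⟩
  | .fst K, d => ⟨_, .fst (pplugC h K d).choose_spec⟩
  | .snd K, d => ⟨_, .snd (pplugC h K d).choose_spec⟩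
  | .abortC K, d => ⟨0, .abortC (pplugV h K d)⟩
  | .caseC K K₁ K₂, d =>
      ⟨0, .caseC (pplugV h K d) (pplugC h K₁ (d+1)).choose_spec
        (pplugC h K₂ (d+1)).choose_spec⟩
  | .splitPC K K₁, d => ⟨0, .splitPC (pplugV h K d) (pplugC h K₁ (d+2)).choose_spec⟩
  | .splitUC K K₁, d => ⟨0, .splitUC (pplugV h K d) (pplugC h K₁ d).choose_spec⟩
  | .unrollPC K K₁, d => ⟨0, .unrollPC (pplugV h K d) (pplugC h K₁ (d+1)).choose_spec⟩
  | .rollC T K, d => ⟨0, .rollC (pplugC h K d).choose_spec⟩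
  | .unrollC K, d => ⟨_, .unrollC (pplugC h K d).choose_spec⟩
end

theorem hd_pc {ρ i ρ'} (h : Hd ρ i ρ') : ∃ m, PC m ρ ρ' := by
  cases h with
  | caseL => exact ⟨_, .rcaseL (pv_refl _) (pc_refl _).choose_spec⟩
  | caseR => exact ⟨_, .rcaseR (pv_refl _) (pc_refl _).choose_spec⟩
  | splitP => exact ⟨_, .rsplitP (pv_refl _) (pv_refl _) (pc_refl _).choose_spec⟩
  | splitU => exact ⟨_, .rsplitU (pc_refl _).choose_spec⟩
  | unrollP => exact ⟨_, .runrollP (pv_refl _) (pc_refl _).choose_spec⟩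
  | force => exact ⟨_, .rforce (pc_refl _).choose_spec⟩
  | bindRet => exact ⟨_, .rbind (pv_refl _) (pc_refl _).choose_spec⟩
  | appLam => exact ⟨_, .rapp (pc_refl _).choose_spec (pv_refl _)⟩
  | fstPair => exact ⟨_, .rfst (pc_refl _).choose_spec⟩
  | sndPair => exact ⟨_, .rsnd (pc_refl _).choose_spec⟩
  | unrollRoll => exact ⟨_, .runroll (pc_refl _).choose_spec⟩

theorem hd_cstep0 {ρ i ρ'} (h : Hd ρ i ρ') : CStep ρ i ρ' := by
  cases h with
  | caseL => exact .caseL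
  | caseR => exact .caseR
  | splitP => exact .splitP
  | splitU => exact .splitU
  | unrollP => exact .unrollP
  | force => exact .force
  | bindRet => exact .bindRet
  | appLam => exact .appLam
  | fstPair => exact .fstPair
  | sndPair => exact .sndPair
  | unrollRoll => exact .unrollRoll

theorem hd_cstep {S ρ i ρ'} (hS : IsStk S) (hρ : Hd ρ i ρ') :
    ∃ t, CStep (plug S ρ) i t ∧ ∃ m, PC m t (plug S ρ') := by
  induction hS with
  | hole =>
    rw [plug_hole, plug_hole]
    exact ⟨ρ', hd_cstep0 hρ, pc_refl ρ'⟩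
  | @bind S₀ N hS₀ ih =>
    obtain ⟨t₀, hc, m, hpc⟩ := ih
    rw [plug_bind, plug_bind]
    have he : errStk (plug S₀ ρ) = false := by
      rw [errStk_plug hS₀]; exact errStk_hd hρ
    obtain ⟨mρ, hρpc⟩ := hd_pc hρ
    obtain ⟨m₂, hY⟩ := pplugC hρpc N 1
    exact ⟨_, .bindStep he hc, _, .bind hpc hY⟩
  | @app S₀ V hS₀ ih =>
    obtain ⟨t₀, hc, m, hpc⟩ := ih
    rw [plug_app, plug_app]
    have he : errStk (plug S₀ ρ) = false := by
      rw [errStk_plug hS₀]; exact errStk_hd hρ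
    obtain ⟨mρ, hρpc⟩ := hd_pc hρ
    exact ⟨_, .appStep he hc, _, .app hpc (pplugV hρpc V 0)⟩
  | @fst S₀ hS₀ ih =>
    obtain ⟨t₀, hc, m, hpc⟩ := ih
    rw [plug_fst, plug_fst]
    have he : errStk (plug S₀ ρ) = false := by
      rw [errStk_plug hS₀]; exact errStk_hd hρ
    exact ⟨_, .fstStep he hc, _, .fst hpc⟩
  | @snd S₀ hS₀ ih =>
    obtain ⟨t₀, hc, m, hpc⟩ := ih
    rw [plug_snd, plug_snd]
    have he : errStk (plug S₀ ρ) = false := by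
      rw [errStk_plug hS₀]; exact errStk_hd hρ
    exact ⟨_, .sndStep he hc, _, .snd hpc⟩
  | @unrollC S₀ hS₀ ih =>
    obtain ⟨t₀, hc, m, hpc⟩ := ih
    rw [plug_unrollC, plug_unrollC]
    have he : errStk (plug S₀ ρ) = false := by
      rw [errStk_plug hS₀]; exact errStk_hd hρ
    exact ⟨_, .unrollStep he hc, _, .unrollC hpc⟩

theorem err_cstep {S} (hS : IsStk S) (hne : S ≠ .hole) : CStep (plug S .err) 0 .err := by
  cases hS with
  | hole => exact absurd rfl hne
  | bind hS₀ => rw [plug_bind]; exact .bindErr (by rw [errStk_plug hS₀]; rfl)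
  | app hS₀ => rw [plug_app]; exact .appErr (by rw [errStk_plug hS₀]; rfl)
  | fst hS₀ => rw [plug_fst]; exact .fstErr (by rw [errStk_plug hS₀]; rfl)
  | snd hS₀ => rw [plug_snd]; exact .sndErr (by rw [errStk_plug hS₀]; rfl)
  | unrollC hS₀ => rw [plug_unrollC]; exact .unrollErr (by rw [errStk_plug hS₀]; rfl)

/-- Every step factors as a canonical step followed by a parallel reduction. -/
theorem step_factor {N i N'} (h : Step N i N') :
    ∃ N₀, CEvals N i N₀ ∧ ∃ m, PC m N₀ N' := by
  rcases stepInv h with ⟨S, ρ, ρ', hS, hρ, rfl, rfl⟩ | ⟨S, hS, hne, rfl, rfl, rfl⟩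
  · obtain ⟨t, hc, hpc⟩ := hd_cstep hS hρ
    exact ⟨t, cevals_single hc, hpc⟩
  · exact ⟨.err, cevals_single (err_cstep hS hne), 0, .err⟩

/-! ### Catching up with parallel reduction along canonical evaluation -/

def PCE (A B : Comp) : Prop := (∃ m, PC m A B) ∨ (A = .err ∧ errStk B = true)

theorem cevals_frame_err {A : Comp} {j : Nat} (f : Frm) (h : CEvals A j .err) :
    CEvals (fapp f A) j .err := by
  rcases cevals_frame f h with h1 | ⟨_, h1⟩
  · have h2 := cevals_trans h1 (cevals_single (fapp_err f (by cases f <;> simp [fapp, errStk])))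
    simpa using h2
  · exact h1

theorem pc_err_inv {m X} (h : PC m .err X) : X = .err := by cases h; rfl

theorem pc_ret_inv {m V X} (h : PC m (.ret V) X) : ∃ V', X = .ret V' ∧ PV V V' := by
  cases h with | ret hV => exact ⟨_, rfl, hV⟩

theorem pc_lam_inv {m M X} (h : PC m (.lam M) X) : ∃ M', X = .lam M' ∧ ∃ n, PC n M M' := by
  cases h with | lam hM => exact ⟨_, rfl, _, hM⟩

theorem pc_pairC_inv {m M₁ M₂ X} (h : PC m (.pairC M₁ M₂) X) :
    ∃ M₁' M₂', X = .pairC M₁' M₂' ∧ (∃ n, PC n M₁ M₁') ∧ ∃ n, PC n M₂ M₂' := by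
  cases h with | pairC h₁ h₂ => exact ⟨_, _, rfl, ⟨_, h₁⟩, ⟨_, h₂⟩⟩

theorem pc_rollC_inv {m T M X} (h : PC m (.rollC T M) X) :
    ∃ M', X = .rollC T M' ∧ ∃ n, PC n M M' := by
  cases h with | rollC hM => exact ⟨_, rfl, _, hM⟩

theorem catchErr : ∀ s, ∀ B : Comp, sizeOf B < s → ∀ ν (A : Comp), PC ν A B →
    errStk B = true → ∃ j, CEvals A j .err := by
  intro s
  induction s using Nat.strong_induction_on with
  | _ s IHs =>
  intro B hB ν
  induction ν using Nat.strong_induction_on with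
  | _ ν IHν =>
  intro A hPC he
  rcases pc_dichot hPC with ⟨i₀, A₂, ν', hc, hPC₂, hν, _⟩ | hcc
  · obtain ⟨j, hj⟩ := IHν ν' hν A₂ hPC₂ he
    exact ⟨i₀ + j, .step hc hj⟩
  · cases hcc with
    | err => exact ⟨0, .refl _⟩
    | @bind n M M' m N N' h h₁ =>
      simp only [errStk] at he
      simp only [Comp.bind.sizeOf_spec] at hB
      obtain ⟨j, hj⟩ := IHs (sizeOf M' + 1) (by omega) M' (by omega) ν M h he
      exact ⟨j, cevals_frame_err (.bindF N) hj⟩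
    | @app n M M' V V' h hV =>
      simp only [errStk] at he
      simp only [Comp.app.sizeOf_spec] at hB
      obtain ⟨j, hj⟩ := IHs (sizeOf M' + 1) (by omega) M' (by omega) ν M h he
      exact ⟨j, cevals_frame_err (.appF V) hj⟩
    | @fst n M M' h =>
      simp only [errStk] at he
      simp only [Comp.fst.sizeOf_spec] at hB
      obtain ⟨j, hj⟩ := IHs (sizeOf M' + 1) (by omega) M' (by omega) ν M h he
      exact ⟨j, cevals_frame_err .fstF hj⟩
    | @snd n M M' h =>
      simp only [errStk] at he
      simp only [Comp.snd.sizeOf_spec] at hB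
      obtain ⟨j, hj⟩ := IHs (sizeOf M' + 1) (by omega) M' (by omega) ν M h he
      exact ⟨j, cevals_frame_err .sndF hj⟩
    | @unrollC n M M' h =>
      simp only [errStk] at he
      simp only [Comp.unrollC.sizeOf_spec] at hB
      obtain ⟨j, hj⟩ := IHs (sizeOf M' + 1) (by omega) M' (by omega) ν M h he
      exact ⟨j, cevals_frame_err .unrF hj⟩
    | hole => simp [errStk] at he
    | dn h => simp [errStk] at he
    | force h => simp [errStk] at he
    | ret h => simp [errStk] at he
    | lam h => simp [errStk] at he
    | unitC => simp [errStk] at he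
    | pairC h h₁ => simp [errStk] at he
    | abortC h => simp [errStk] at he
    | caseC h h₁ h₂ => simp [errStk] at he
    | splitPC h h₁ => simp [errStk] at he
    | splitUC h h₁ => simp [errStk] at he
    | unrollPC h h₁ => simp [errStk] at he
    | rollC h => simp [errStk] at he

theorem catchErr' {ν : Nat} {A B : Comp} (h : PC ν A B) (he : errStk B = true) :
    ∃ j, CEvals A j .err :=
  catchErr (sizeOf B + 1) B (by omega) ν A h he

theorem catchUp : ∀ s, ∀ B : Comp, sizeOf B < s → ∀ ν (A : Comp), PC ν A B →
    ∀ i B', CStep B i B' → ∃ j A', CEvals A j A' ∧ i ≤ j ∧ PCE A' B' := by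
  intro s
  induction s using Nat.strong_induction_on with
  | _ s IHs =>
  intro B hB ν
  induction ν using Nat.strong_induction_on with
  | _ ν IHν =>
  intro A hPC i B' hcs
  rcases pc_dichot hPC with ⟨i₀, A₂, ν', hc, hPC₂, hν, _⟩ | hcc
  · obtain ⟨j, A', hev, hij, hpce⟩ := IHν ν' hν A₂ hPC₂ i B' hcs
    exact ⟨i₀ + j, A', .step hc hev, by omega, hpce⟩
  · cases hcc with
    | @bind n M M' m N N' h h₁ =>
      cases hcs with
      | @bindRet V _ =>
        rcases pc_dichot h with ⟨i₀, M₂, n', hc, hPC₂, hn, herrM⟩ | hcc₂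
        · obtain ⟨j, A', hev, hij, hpce⟩ :=
            IHν n' hn (.bind M₂ N) (.bind hPC₂ h₁) 0 _ CStep.bindRet
          exact ⟨i₀ + j, A', .step (.bindStep herrM hc) hev, by omega, hpce⟩
        · cases hcc₂ with
          | ret hV =>
            exact ⟨0, _, cevals_single .bindRet, Nat.le_refl 0,
              .inl ⟨m, pc_sub h₁ (pv_sub0 hV)⟩⟩
      | bindErr he =>
        obtain ⟨j, hj⟩ := catchErr' h he
        exact ⟨j, .err, cevals_frame_err (.bindF N) hj, by omega, .inl ⟨0, .err⟩⟩
      | @bindStep _ _ M₁' _ hf hcM =>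
        simp only [Comp.bind.sizeOf_spec] at hB
        obtain ⟨j, A₁', hev, hij, hpce⟩ :=
          IHs (sizeOf M' + 1) (by omega) M' (by omega) ν M h _ M₁' hcM
        rcases hpce with ⟨m', hpc'⟩ | ⟨rfl, heB⟩
        · rcases cevals_frame (.bindF N) hev with hlift | ⟨rfl, hlift⟩
          · exact ⟨j, _, hlift, hij, .inl ⟨m', .bind hpc' h₁⟩⟩
          · have hM₁' := pc_err_inv hpc'
            subst hM₁'
            exact ⟨j, .err, hlift, hij, .inr ⟨rfl, by simp [errStk]⟩⟩
        · rcases cevals_frame (.bindF N) hev with hlift | ⟨_, hlift⟩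
          · have h2 := cevals_trans hlift (cevals_single (CStep.bindErr (by simp [errStk])))
            exact ⟨j, .err, by simpa [fapp] using h2, hij, .inr ⟨rfl, by simp [errStk, heB]⟩⟩
          · exact ⟨j, .err, hlift, hij, .inr ⟨rfl, by simp [errStk, heB]⟩⟩
    | @app n M M' V V' h hV =>
      cases hcs with
      | @appLam C _ =>
        rcases pc_dichot h with ⟨i₀, M₂, n', hc, hPC₂, hn, herrM⟩ | hcc₂
        · obtain ⟨j, A', hev, hij, hpce⟩ :=
            IHν n' hn (.app M₂ V) (.app hPC₂ hV) 0 _ CStep.appLam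
          exact ⟨i₀ + j, A', .step (.appStep herrM hc) hev, by omega, hpce⟩
        · cases hcc₂ with
          | lam hC =>
            exact ⟨0, _, cevals_single .appLam, Nat.le_refl 0,
              .inl ⟨_, pc_sub hC (pv_sub0 hV)⟩⟩
      | appErr he =>
        obtain ⟨j, hj⟩ := catchErr' h he
        exact ⟨j, .err, cevals_frame_err (.appF V) hj, by omega, .inl ⟨0, .err⟩⟩
      | @appStep _ _ M₁' _ hf hcM =>
        simp only [Comp.app.sizeOf_spec] at hB
        obtain ⟨j, A₁', hev, hij, hpce⟩ :=
          IHs (sizeOf M' + 1) (by omega) M' (by omega) ν M h _ M₁' hcM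
        rcases hpce with ⟨m', hpc'⟩ | ⟨rfl, heB⟩
        · rcases cevals_frame (.appF V) hev with hlift | ⟨rfl, hlift⟩
          · exact ⟨j, _, hlift, hij, .inl ⟨m', .app hpc' hV⟩⟩
          · have hM₁' := pc_err_inv hpc'
            subst hM₁'
            exact ⟨j, .err, hlift, hij, .inr ⟨rfl, by simp [errStk]⟩⟩
        · rcases cevals_frame (.appF V) hev with hlift | ⟨_, hlift⟩
          · have h2 := cevals_trans hlift (cevals_single (CStep.appErr (by simp [errStk])))
            exact ⟨j, .err, by simpa [fapp] using h2, hij, .inr ⟨rfl, by simp [errStk, heB]⟩⟩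
          · exact ⟨j, .err, hlift, hij, .inr ⟨rfl, by simp [errStk, heB]⟩⟩
    | @fst n M M' h =>
      cases hcs with
      | @fstPair C₁ C₂ =>
        rcases pc_dichot h with ⟨i₀, M₂, n', hc, hPC₂, hn, herrM⟩ | hcc₂
        · obtain ⟨j, A', hev, hij, hpce⟩ :=
            IHν n' hn (.fst M₂) (.fst hPC₂) 0 _ CStep.fstPair
          exact ⟨i₀ + j, A', .step (.fstStep herrM hc) hev, by omega, hpce⟩
        · cases hcc₂ with
          | pairC hc₁ hc₂ =>
            exact ⟨0, _, cevals_single .fstPair, Nat.le_refl 0, .inl ⟨_, hc₁⟩⟩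
      | fstErr he =>
        obtain ⟨j, hj⟩ := catchErr' h he
        exact ⟨j, .err, cevals_frame_err .fstF hj, by omega, .inl ⟨0, .err⟩⟩
      | @fstStep _ _ M₁' hf hcM =>
        simp only [Comp.fst.sizeOf_spec] at hB
        obtain ⟨j, A₁', hev, hij, hpce⟩ :=
          IHs (sizeOf M' + 1) (by omega) M' (by omega) ν M h _ M₁' hcM
        rcases hpce with ⟨m', hpc'⟩ | ⟨rfl, heB⟩
        · rcases cevals_frame .fstF hev with hlift | ⟨rfl, hlift⟩
          · exact ⟨j, _, hlift, hij, .inl ⟨m', .fst hpc'⟩⟩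
          · have hM₁' := pc_err_inv hpc'
            subst hM₁'
            exact ⟨j, .err, hlift, hij, .inr ⟨rfl, by simp [errStk]⟩⟩
        · rcases cevals_frame .fstF hev with hlift | ⟨_, hlift⟩
          · have h2 := cevals_trans hlift (cevals_single (CStep.fstErr (by simp [errStk])))
            exact ⟨j, .err, by simpa [fapp] using h2, hij, .inr ⟨rfl, by simp [errStk, heB]⟩⟩
          · exact ⟨j, .err, hlift, hij, .inr ⟨rfl, by simp [errStk, heB]⟩⟩
    | @snd n M M' h =>
      cases hcs with
      | @sndPair C₁ C₂ =>
        rcases pc_dichot h with ⟨i₀, M₂, n', hc, hPC₂, hn, herrM⟩ | hcc₂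
        · obtain ⟨j, A', hev, hij, hpce⟩ :=
            IHν n' hn (.snd M₂) (.snd hPC₂) 0 _ CStep.sndPair
          exact ⟨i₀ + j, A', .step (.sndStep herrM hc) hev, by omega, hpce⟩
        · cases hcc₂ with
          | pairC hc₁ hc₂ =>
            exact ⟨0, _, cevals_single .sndPair, Nat.le_refl 0, .inl ⟨_, hc₂⟩⟩
      | sndErr he =>
        obtain ⟨j, hj⟩ := catchErr' h he
        exact ⟨j, .err, cevals_frame_err .sndF hj, by omega, .inl ⟨0, .err⟩⟩
      | @sndStep _ _ M₁' hf hcM =>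
        simp only [Comp.snd.sizeOf_spec] at hB
        obtain ⟨j, A₁', hev, hij, hpce⟩ :=
          IHs (sizeOf M' + 1) (by omega) M' (by omega) ν M h _ M₁' hcM
        rcases hpce with ⟨m', hpc'⟩ | ⟨rfl, heB⟩
        · rcases cevals_frame .sndF hev with hlift | ⟨rfl, hlift⟩
          · exact ⟨j, _, hlift, hij, .inl ⟨m', .snd hpc'⟩⟩
          · have hM₁' := pc_err_inv hpc'
            subst hM₁'
            exact ⟨j, .err, hlift, hij, .inr ⟨rfl, by simp [errStk]⟩⟩
        · rcases cevals_frame .sndF hev with hlift | ⟨_, hlift⟩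
          · have h2 := cevals_trans hlift (cevals_single (CStep.sndErr (by simp [errStk])))
            exact ⟨j, .err, by simpa [fapp] using h2, hij, .inr ⟨rfl, by simp [errStk, heB]⟩⟩
          · exact ⟨j, .err, hlift, hij, .inr ⟨rfl, by simp [errStk, heB]⟩⟩
    | @unrollC n M M' h =>
      cases hcs with
      | @unrollRoll T C =>
        rcases pc_dichot h with ⟨i₀, M₂, n', hc, hPC₂, hn, herrM⟩ | hcc₂
        · obtain ⟨j, A', hev, hij, hpce⟩ :=
            IHν n' hn (.unrollC M₂) (.unrollC hPC₂) 1 _ CStep.unrollRoll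
          exact ⟨i₀ + j, A', .step (.unrollStep herrM hc) hev, by omega, hpce⟩
        · cases hcc₂ with
          | rollC hC =>
            exact ⟨1, _, cevals_single .unrollRoll, Nat.le_refl 1, .inl ⟨_, hC⟩⟩
      | unrollErr he =>
        obtain ⟨j, hj⟩ := catchErr' h he
        exact ⟨j, .err, cevals_frame_err .unrF hj, by omega, .inl ⟨0, .err⟩⟩
      | @unrollStep _ _ M₁' hf hcM =>
        simp only [Comp.unrollC.sizeOf_spec] at hB
        obtain ⟨j, A₁', hev, hij, hpce⟩ :=
          IHs (sizeOf M' + 1) (by omega) M' (by omega) ν M h _ M₁' hcM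
        rcases hpce with ⟨m', hpc'⟩ | ⟨rfl, heB⟩
        · rcases cevals_frame .unrF hev with hlift | ⟨rfl, hlift⟩
          · exact ⟨j, _, hlift, hij, .inl ⟨m', .unrollC hpc'⟩⟩
          · have hM₁' := pc_err_inv hpc'
            subst hM₁'
            exact ⟨j, .err, hlift, hij, .inr ⟨rfl, by simp [errStk]⟩⟩
        · rcases cevals_frame .unrF hev with hlift | ⟨_, hlift⟩
          · have h2 := cevals_trans hlift (cevals_single (CStep.unrollErr (by simp [errStk])))
            exact ⟨j, .err, by simpa [fapp] using h2, hij, .inr ⟨rfl, by simp [errStk, heB]⟩⟩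
          · exact ⟨j, .err, hlift, hij, .inr ⟨rfl, by simp [errStk, heB]⟩⟩
    | force hV =>
      cases hcs with
      | force =>
        cases hV with
        | thunk hC =>
          exact ⟨0, _, cevals_single .force, Nat.le_refl 0, .inl ⟨_, hC⟩⟩
    | caseC hV h₁ h₂ =>
      cases hcs with
      | caseL =>
        cases hV with
        | inl hW =>
          exact ⟨0, _, cevals_single .caseL, Nat.le_refl 0,
            .inl ⟨_, pc_sub h₁ (pv_sub0 hW)⟩⟩
      | caseR =>
        cases hV with
        | inr hW =>
          exact ⟨0, _, cevals_single .caseR, Nat.le_refl 0,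
            .inl ⟨_, pc_sub h₂ (pv_sub0 hW)⟩⟩
    | splitPC hV h =>
      cases hcs with
      | splitP =>
        cases hV with
        | pair hW₁ hW₂ =>
          exact ⟨0, _, cevals_single .splitP, Nat.le_refl 0,
            .inl ⟨_, pc_sub h (pv_sub2 hW₁ hW₂)⟩⟩
    | splitUC hV h =>
      cases hcs with
      | splitU =>
        cases hV with
        | unit =>
          exact ⟨0, _, cevals_single .splitU, Nat.le_refl 0, .inl ⟨_, h⟩⟩
    | unrollPC hV h =>
      cases hcs with
      | unrollP =>
        cases hV with
        | rollV hW =>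
          exact ⟨1, _, cevals_single .unrollP, Nat.le_refl 1,
            .inl ⟨_, pc_sub h (pv_sub0 hW)⟩⟩
    | hole => nomatch hcs
    | err => nomatch hcs
    | dn h => nomatch hcs
    | ret h => nomatch hcs
    | lam h => nomatch hcs
    | unitC => nomatch hcs
    | pairC h h₁ => nomatch hcs
    | abortC h => nomatch hcs
    | rollC h => nomatch hcs

theorem catchUp' {ν : Nat} {A B : Comp} (h : PC ν A B) {i : Nat} {B' : Comp}
    (hcs : CStep B i B') : ∃ j A', CEvals A j A' ∧ i ≤ j ∧ PCE A' B' :=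
  catchUp (sizeOf B + 1) B (by omega) ν A h i B' hcs

theorem catchStuck : ∀ s, ∀ B : Comp, sizeOf B < s → ∀ ν (A : Comp), PC ν A B →
    CNF B → ∃ j A', CEvals A j A' ∧ CNF A' ∧ ∃ m, PC m A' B := by
  intro s
  induction s using Nat.strong_induction_on with
  | _ s IHs =>
  intro B hsz ν
  induction ν using Nat.strong_induction_on with
  | _ ν IHν =>
  intro A hPC hnf
  rcases pc_dichot hPC with ⟨i₀, A₂, ν', hc, hPC₂, hν, _⟩ | hcc
  · obtain ⟨j, A', hev, hnf', hpc⟩ := IHν ν' hν A₂ hPC₂ hnf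
    exact ⟨i₀ + j, A', .step hc hev, hnf', hpc⟩
  · cases hcc with
    | hole =>
      refine ⟨0, _, .refl _, ?_, ⟨0, .hole⟩⟩
      intro i N₂ hstep
      nomatch hstep
    | err =>
      refine ⟨0, _, .refl _, ?_, ⟨0, .err⟩⟩
      intro i N₂ hstep
      nomatch hstep
    | dn h =>
      refine ⟨0, _, .refl _, ?_, ⟨0, .dn h⟩⟩
      intro i N₂ hstep
      nomatch hstep
    | ret hV =>
      refine ⟨0, _, .refl _, ?_, ⟨0, .ret hV⟩⟩
      intro i N₂ hstep
      nomatch hstep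
    | lam h =>
      refine ⟨0, _, .refl _, ?_, ⟨0, .lam h⟩⟩
      intro i N₂ hstep
      nomatch hstep
    | unitC =>
      refine ⟨0, _, .refl _, ?_, ⟨0, .unitC⟩⟩
      intro i N₂ hstep
      nomatch hstep
    | pairC h h₁ =>
      refine ⟨0, _, .refl _, ?_, ⟨0, .pairC h h₁⟩⟩
      intro i N₂ hstep
      nomatch hstep
    | abortC hV =>
      refine ⟨0, _, .refl _, ?_, ⟨0, .abortC hV⟩⟩
      intro i N₂ hstep
      nomatch hstep
    | rollC h =>
      refine ⟨0, _, .refl _, ?_, ⟨0, .rollC h⟩⟩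
      intro i N₂ hstep
      nomatch hstep
    | force hV =>
      refine ⟨0, _, .refl _, ?_, ⟨0, .force hV⟩⟩
      intro i N hstep
      cases hstep with
      | force => cases hV with | thunk hC => exact hnf _ _ CStep.force
    | caseC hV h₁ h₂ =>
      refine ⟨0, _, .refl _, ?_, ⟨0, .caseC hV h₁ h₂⟩⟩
      intro i N hstep
      cases hstep with
      | caseL => cases hV with | inl hW => exact hnf _ _ CStep.caseL
      | caseR => cases hV with | inr hW => exact hnf _ _ CStep.caseR
    | splitPC hV h =>
      refine ⟨0, _, .refl _, ?_, ⟨0, .splitPC hV h⟩⟩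
      intro i N hstep
      cases hstep with
      | splitP => cases hV with | pair hW₁ hW₂ => exact hnf _ _ CStep.splitP
    | splitUC hV h =>
      refine ⟨0, _, .refl _, ?_, ⟨0, .splitUC hV h⟩⟩
      intro i N hstep
      cases hstep with
      | splitU => cases hV with | unit => exact hnf _ _ CStep.splitU
    | unrollPC hV h =>
      refine ⟨0, _, .refl _, ?_, ⟨0, .unrollPC hV h⟩⟩
      intro i N hstep
      cases hstep with
      | unrollP => cases hV with | rollV hW => exact hnf _ _ CStep.unrollP
    | @bind n M M' m N N' h h₁ =>
      have herr : errStk M' = false := by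
        cases h' : errStk M' with
        | true => exact absurd (CStep.bindErr h') (hnf _ _)
        | false => rfl
      have hnfM : CNF M' := fun i N₂ hstep => hnf _ _ (CStep.bindStep herr hstep)
      simp only [Comp.bind.sizeOf_spec] at hsz
      obtain ⟨j, A₁', hev, hnf₁, m', hpc'⟩ :=
        IHs (sizeOf M' + 1) (by omega) M' (by omega) ν M h hnfM
      have herrA : errStk A₁' = false := by
        cases h' : errStk A₁' with
        | true => exact absurd (errStk_pc hpc' h') (by simp [herr])
        | false => rfl
      rcases cevals_frame (.bindF N) hev with hlift | ⟨rfl, hlift⟩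
      · refine ⟨j, _, hlift, ?_, ⟨m', .bind hpc' h₁⟩⟩
        intro i N₂ hstep
        cases hstep with
        | bindRet =>
          obtain ⟨V', hM', -⟩ := pc_ret_inv hpc'
          subst hM'
          exact hnf _ _ CStep.bindRet
        | bindErr he2 => exact absurd he2 (by simp [herrA])
        | bindStep _ hstep2 => exact hnf₁ _ _ hstep2
      · have hM' := pc_err_inv hpc'
        rw [hM'] at herr
        simp [errStk] at herr
    | @app n M M' V V' h hV =>
      have herr : errStk M' = false := by
        cases h' : errStk M' with
        | true => exact absurd (CStep.appErr h') (hnf _ _)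
        | false => rfl
      have hnfM : CNF M' := fun i N₂ hstep => hnf _ _ (CStep.appStep herr hstep)
      simp only [Comp.app.sizeOf_spec] at hsz
      obtain ⟨j, A₁', hev, hnf₁, m', hpc'⟩ :=
        IHs (sizeOf M' + 1) (by omega) M' (by omega) ν M h hnfM
      have herrA : errStk A₁' = false := by
        cases h' : errStk A₁' with
        | true => exact absurd (errStk_pc hpc' h') (by simp [herr])
        | false => rfl
      rcases cevals_frame (.appF V) hev with hlift | ⟨rfl, hlift⟩
      · refine ⟨j, _, hlift, ?_, ⟨m', .app hpc' hV⟩⟩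
        intro i N₂ hstep
        cases hstep with
        | appLam =>
          obtain ⟨C', hM', -⟩ := pc_lam_inv hpc'
          subst hM'
          exact hnf _ _ CStep.appLam
        | appErr he2 => exact absurd he2 (by simp [herrA])
        | appStep _ hstep2 => exact hnf₁ _ _ hstep2
      · have hM' := pc_err_inv hpc'
        rw [hM'] at herr
        simp [errStk] at herr
    | @fst n M M' h =>
      have herr : errStk M' = false := by
        cases h' : errStk M' with
        | true => exact absurd (CStep.fstErr h') (hnf _ _)
        | false => rfl
      have hnfM : CNF M' := fun i N₂ hstep => hnf _ _ (CStep.fstStep herr hstep)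
      simp only [Comp.fst.sizeOf_spec] at hsz
      obtain ⟨j, A₁', hev, hnf₁, m', hpc'⟩ :=
        IHs (sizeOf M' + 1) (by omega) M' (by omega) ν M h hnfM
      have herrA : errStk A₁' = false := by
        cases h' : errStk A₁' with
        | true => exact absurd (errStk_pc hpc' h') (by simp [herr])
        | false => rfl
      rcases cevals_frame .fstF hev with hlift | ⟨rfl, hlift⟩
      · refine ⟨j, _, hlift, ?_, ⟨m', .fst hpc'⟩⟩
        intro i N₂ hstep
        cases hstep with
        | fstPair =>
          obtain ⟨C₁', C₂', hM', -, -⟩ := pc_pairC_inv hpc'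
          subst hM'
          exact hnf _ _ CStep.fstPair
        | fstErr he2 => exact absurd he2 (by simp [herrA])
        | fstStep _ hstep2 => exact hnf₁ _ _ hstep2
      · have hM' := pc_err_inv hpc'
        rw [hM'] at herr
        simp [errStk] at herr
    | @snd n M M' h =>
      have herr : errStk M' = false := by
        cases h' : errStk M' with
        | true => exact absurd (CStep.sndErr h') (hnf _ _)
        | false => rfl
      have hnfM : CNF M' := fun i N₂ hstep => hnf _ _ (CStep.sndStep herr hstep)
      simp only [Comp.snd.sizeOf_spec] at hsz
      obtain ⟨j, A₁', hev, hnf₁, m', hpc'⟩ :=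
        IHs (sizeOf M' + 1) (by omega) M' (by omega) ν M h hnfM
      have herrA : errStk A₁' = false := by
        cases h' : errStk A₁' with
        | true => exact absurd (errStk_pc hpc' h') (by simp [herr])
        | false => rfl
      rcases cevals_frame .sndF hev with hlift | ⟨rfl, hlift⟩
      · refine ⟨j, _, hlift, ?_, ⟨m', .snd hpc'⟩⟩
        intro i N₂ hstep
        cases hstep with
        | sndPair =>
          obtain ⟨C₁', C₂', hM', -, -⟩ := pc_pairC_inv hpc'
          subst hM'
          exact hnf _ _ CStep.sndPair
        | sndErr he2 => exact absurd he2 (by simp [herrA])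
        | sndStep _ hstep2 => exact hnf₁ _ _ hstep2
      · have hM' := pc_err_inv hpc'
        rw [hM'] at herr
        simp [errStk] at herr
    | @unrollC n M M' h =>
      have herr : errStk M' = false := by
        cases h' : errStk M' with
        | true => exact absurd (CStep.unrollErr h') (hnf _ _)
        | false => rfl
      have hnfM : CNF M' := fun i N₂ hstep => hnf _ _ (CStep.unrollStep herr hstep)
      simp only [Comp.unrollC.sizeOf_spec] at hsz
      obtain ⟨j, A₁', hev, hnf₁, m', hpc'⟩ :=
        IHs (sizeOf M' + 1) (by omega) M' (by omega) ν M h hnfM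
      have herrA : errStk A₁' = false := by
        cases h' : errStk A₁' with
        | true => exact absurd (errStk_pc hpc' h') (by simp [herr])
        | false => rfl
      rcases cevals_frame .unrF hev with hlift | ⟨rfl, hlift⟩
      · refine ⟨j, _, hlift, ?_, ⟨m', .unrollC hpc'⟩⟩
        intro i N₂ hstep
        cases hstep with
        | unrollRoll =>
          obtain ⟨C', hM', -⟩ := pc_rollC_inv hpc'
          subst hM'
          exact hnf _ _ CStep.unrollRoll
        | unrollErr he2 => exact absurd he2 (by simp [herrA])
        | unrollStep _ hstep2 => exact hnf₁ _ _ hstep2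
      · have hM' := pc_err_inv hpc'
        rw [hM'] at herr
        simp [errStk] at herr

theorem catchStuck' {ν : Nat} {A B : Comp} (h : PC ν A B) (hnf : CNF B) :
    ∃ j A', CEvals A j A' ∧ CNF A' ∧ ∃ m, PC m A' B :=
  catchStuck (sizeOf B + 1) B (by omega) ν A h hnf

/-! ### Chains of parallel reductions and the simulation -/

def PCs : Comp → Comp → Prop := Relation.ReflTransGen PCE

theorem catchUpE {A B B' : Comp} {i : Nat} (h : PCE A B) (hcs : CStep B i B') :
    ∃ j A', CEvals A j A' ∧ i ≤ j ∧ PCE A' B' := by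
  rcases h with ⟨ν, hpc⟩ | ⟨rfl, heB⟩
  · exact catchUp' hpc hcs
  · obtain ⟨rfl, rfl⟩ := cstep_errStk heB hcs
    exact ⟨0, .err, .refl _, Nat.le_refl 0, .inl ⟨0, .err⟩⟩

theorem errStk_cnf : ∀ B, errStk B = true → CNF B → B = .err
  | .err, _, _ => rfl
  | .bind M N, he, hnf =>
      absurd (CStep.bindErr (by simpa [errStk] using he)) (hnf _ _)
  | .app M V, he, hnf =>
      absurd (CStep.appErr (by simpa [errStk] using he)) (hnf _ _)
  | .fst M, he, hnf =>
      absurd (CStep.fstErr (by simpa [errStk] using he)) (hnf _ _)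
  | .snd M, he, hnf =>
      absurd (CStep.sndErr (by simpa [errStk] using he)) (hnf _ _)
  | .unrollC M, he, hnf =>
      absurd (CStep.unrollErr (by simpa [errStk] using he)) (hnf _ _)
  | .hole, he, _ => by simp [errStk] at he
  | .dn _ _ _, he, _ => by simp [errStk] at he
  | .force _, he, _ => by simp [errStk] at he
  | .ret _, he, _ => by simp [errStk] at he
  | .lam _, he, _ => by simp [errStk] at he
  | .unitC, he, _ => by simp [errStk] at he
  | .pairC _ _, he, _ => by simp [errStk] at he
  | .abortC _, he, _ => by simp [errStk] at he
  | .caseC _ _ _, he, _ => by simp [errStk] at he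
  | .splitPC _ _, he, _ => by simp [errStk] at he
  | .splitUC _ _, he, _ => by simp [errStk] at he
  | .unrollPC _ _, he, _ => by simp [errStk] at he
  | .rollC _ _, he, _ => by simp [errStk] at he

theorem catchStuckE {A B : Comp} (h : PCE A B) (hnf : CNF B) :
    ∃ j A', CEvals A j A' ∧ CNF A' ∧ PCE A' B := by
  rcases h with ⟨ν, hpc⟩ | ⟨rfl, heB⟩
  · obtain ⟨j, A', hev, hnf', m, hpc'⟩ := catchStuck' hpc hnf
    exact ⟨j, A', hev, hnf', .inl ⟨m, hpc'⟩⟩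
  · have hB := errStk_cnf B heB hnf
    subst hB
    exact ⟨0, .err, .refl _, cnf_err, .inl ⟨0, .err⟩⟩

theorem catchUpCEvals {A B B₀ : Comp} {j : Nat} (h : PCE A B) (hev : CEvals B j B₀) :
    ∃ j' A₀, CEvals A j' A₀ ∧ j ≤ j' ∧ PCE A₀ B₀ := by
  induction hev generalizing A with
  | refl => exact ⟨0, _, .refl _, Nat.le_refl 0, h⟩
  | step hcs hrest ih =>
    obtain ⟨j₁, A₁, hev₁, hi₁, hpce₁⟩ := catchUpE h hcs
    obtain ⟨j₂, A₀, hev₂, hle₂, hpce⟩ := ih hpce₁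
    exact ⟨j₁ + j₂, A₀, cevals_trans hev₁ hev₂, by omega, hpce⟩

theorem catchChainEvals {A B B₀ : Comp} {j : Nat} (hch : PCs A B) (hev : CEvals B j B₀) :
    ∃ j' A₀, CEvals A j' A₀ ∧ j ≤ j' ∧ PCs A₀ B₀ := by
  induction hch using Relation.ReflTransGen.head_induction_on with
  | refl => exact ⟨j, B₀, hev, Nat.le_refl j, .refl⟩
  | head hAC hCB ih =>
    obtain ⟨j₁, C₀, hevC, hle, hchain⟩ := ih
    obtain ⟨j₂, A₀, hevA, hle₂, hpce₂⟩ := catchUpCEvals hAC hevC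
    exact ⟨j₂, A₀, hevA, by omega, Relation.ReflTransGen.head hpce₂ hchain⟩

theorem sim {B B' : Comp} {w : Nat} (hev : Evals B w B') :
    ∀ {A : Comp}, PCs A B → ∃ j A', CEvals A j A' ∧ w ≤ j ∧ PCs A' B' := by
  induction hev with
  | refl => exact fun hch => ⟨0, _, .refl _, Nat.le_refl 0, hch⟩
  | step hstep hrest ih =>
    intro A hch
    obtain ⟨B₁₀, hevB, m, hpcB⟩ := step_factor hstep
    obtain ⟨j₁, A₁, hevA, hle₁, hch₁⟩ := catchChainEvals hch hevB
    have hch₂ : PCs A₁ _ := Relation.ReflTransGen.tail hch₁ (.inl ⟨m, hpcB⟩)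
    obtain ⟨j₂, A', hev₂, hle₂, hch'⟩ := ih hch₂
    exact ⟨j₁ + j₂, A', cevals_trans hevA hev₂, by omega, hch'⟩

theorem simStuck {A B : Comp} (hch : PCs A B) (hnf : CNF B) :
    ∃ j A', CEvals A j A' ∧ CNF A' ∧ PCs A' B := by
  induction hch using Relation.ReflTransGen.head_induction_on with
  | refl => exact ⟨0, _, .refl _, hnf, .refl⟩
  | head hAC hCB ih =>
    obtain ⟨j₁, C', hevC, hnfC, hchC⟩ := ih
    obtain ⟨j₂, A₁, hevA, _, hpce₁⟩ := catchUpCEvals hAC hevC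
    obtain ⟨j₃, A', hevA₂, hnfA, hpce₂⟩ := catchStuckE hpce₁ hnfC
    exact ⟨j₂ + j₃, A', cevals_trans hevA hevA₂, hnfA,
      Relation.ReflTransGen.head hpce₂ hchC⟩

/-! ### Chains out of terminal results -/

theorem pce_errStk {A B : Comp} (h : PCE A B) (he : errStk A = true) : errStk B = true := by
  rcases h with ⟨m, hpc⟩ | ⟨rfl, heB⟩
  · exact errStk_pc hpc he
  · exact heB

theorem pcs_errStk {A B : Comp} (h : PCs A B) (he : errStk A = true) : errStk B = true := by
  induction h with
  | refl => exact he
  | tail _ hlast ih => exact pce_errStk hlast ih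

theorem pce_ret_inl {B : Comp} (h : PCE (.ret (.inl .unit)) B) : B = .ret (.inl .unit) := by
  rcases h with ⟨m, hpc⟩ | ⟨habs, -⟩
  · obtain ⟨V', rfl, hV⟩ := pc_ret_inv hpc
    cases hV with | inl hW => cases hW with | unit => rfl
  · nomatch habs

theorem pcs_ret_inl {B : Comp} (h : PCs (.ret (.inl .unit)) B) : B = .ret (.inl .unit) := by
  induction h with
  | refl => rfl
  | tail _ hlast ih => rw [ih] at hlast; exact pce_ret_inl hlast

theorem pce_ret_inr {B : Comp} (h : PCE (.ret (.inr .unit)) B) : B = .ret (.inr .unit) := by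
  rcases h with ⟨m, hpc⟩ | ⟨habs, -⟩
  · obtain ⟨V', rfl, hV⟩ := pc_ret_inv hpc
    cases hV with | inr hW => cases hW with | unit => rfl
  · nomatch habs

theorem pcs_ret_inr {B : Comp} (h : PCs (.ret (.inr .unit)) B) : B = .ret (.inr .unit) := by
  induction h with
  | refl => rfl
  | tail _ hlast ih => rw [ih] at hlast; exact pce_ret_inr hlast

/-- A canonical result chained to a syntactic result determines it. -/
theorem pcs_res {X : Comp} {Rm : Res}
    (hX : X = .err ∨ X = .ret (.inl .unit) ∨ X = .ret (.inr .unit))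
    (hch : PCs X (resComp Rm)) (hne : Rm ≠ .omega) : resComp Rm = X := by
  rcases hX with rfl | rfl | rfl
  · have he := pcs_errStk hch rfl
    cases Rm with
    | omega => exact absurd rfl hne
    | err => rfl
    | rtrue => simp [resComp, errStk] at he
    | rfalse => simp [resComp, errStk] at he
  · have := pcs_ret_inl hch
    exact this
  · have := pcs_ret_inr hch
    exact this

theorem res_inj {Rm Rm' : Res} (h1 : Rm ≠ .omega) (h2 : Rm' ≠ .omega)
    (h : resComp Rm = resComp Rm') : Rm = Rm' := by
  cases Rm <;> cases Rm' <;> simp_all [resComp]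

/-- Limit Lemma.  For any divergence preorder `⊴` on
results, any closed CBPV program `⊢ M : F(1+1)` (with result `result(M)`),
and any result `R`:  `result(M) ⊴ R` if and only if `M ⊴ⁱ R` for every
natural number `i`. -/
theorem limit_lemma (r : Res → Res → Prop) (hr : DivPreorder r)
    (M : Comp) (hty : CTyping cbpvP [] none M (.F boolTy))
    (Rm : Res) (hres : ResultIs M Rm) (R : Res) :
    r Rm R ↔ ∀ i : Nat, dle r i M R := by
  obtain ⟨hrefl, htrans, homega⟩ := hr
  have hnh : nhC M = true := cty_nh hty rfl
  have hsem : ∀ k, ERel k (.F boolTy) M := by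
    intro k
    have h := fundC hty rfl k (fun n => .var n) (fun n A h => by simp at h)
    rwa [sc_id] at h
  constructor
  · -- forward direction
    intro hrRm i
    rcases hres with ⟨hΩ, hdiv⟩ | ⟨hne, n, hev⟩
    · subst hΩ
      left
      have h := hsem i
      simp only [ERel] at h
      rcases h with ⟨M', hev⟩ | ⟨j, hj, T, hev, hT⟩
      · exact ⟨M', cevals_sound hnh hev⟩
      · exfalso
        have hevS : Evals M j T := cevals_sound hnh hev
        obtain ⟨N', i', hstep⟩ := hdiv T j hevS
        simp only [TRel] at hT
        rcases hT with rfl | ⟨V, rfl, -⟩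
        · exact err_no_step hstep
        · exact ret_no_step hstep
    · rcases le_or_gt i n with hin | hin
      · obtain ⟨X, hX⟩ := evals_prefix hev i hin
        exact .inl ⟨X, hX⟩
      · exact .inr ⟨n, hin, Rm, hne, hev, hrRm⟩
  · -- reverse direction
    intro hall
    rcases hres with ⟨hΩ, -⟩ | ⟨hne, n, hev⟩
    · subst hΩ; exact homega R
    · have hTnf : CNF (resComp Rm) := by
        cases Rm with
        | omega => exact absurd rfl hne
        | err => exact cnf_err
        | rtrue => exact cnf_ret _
        | rfalse => exact cnf_ret _
      obtain ⟨j₁, X₁, hev₁, hn₁, hch₁⟩ := sim hev Relation.ReflTransGen.refl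
      obtain ⟨j₂, X₂, hev₂, hnf₂, hch₂⟩ := simStuck hch₁ hTnf
      have hevX : CEvals M (j₁ + j₂) X₂ := cevals_trans hev₁ hev₂
      have hbound : ∀ {b : Nat} {Y : Comp}, CEvals M b Y → b ≤ j₁ + j₂ :=
        fun h => cevals_bound hevX hnf₂ h
      have hJ := hsem (j₁ + j₂ + 1)
      simp only [ERel] at hJ
      rcases hJ with ⟨M', hev'⟩ | ⟨j₃, hj₃, T₃, hev₃, hT₃⟩
      · exact absurd (hbound hev') (by omega)
      · simp only [TRel] at hT₃
        have hnf₃ : CNF T₃ := by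
          rcases hT₃ with rfl | ⟨V, rfl, -⟩
          · exact cnf_err
          · exact cnf_ret _
        have hX₂T₃ : X₂ = T₃ := cevals_cnf_unique hevX hnf₂ hev₃ hnf₃
        -- the canonical result is a syntactic result
        have hXshape : X₂ = .err ∨ X₂ = .ret (.inl .unit) ∨ X₂ = .ret (.inr .unit) := by
          rcases hT₃ with rfl | ⟨V, rfl, hV⟩
          · exact .inl hX₂T₃
          · simp only [boolTy, VRel] at hV
            rcases hV with ⟨W, rfl, hW⟩ | ⟨W, rfl, hW⟩
            · subst hW
              exact .inr (.inl hX₂T₃)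
            · subst hW
              exact .inr (.inr hX₂T₃)
        have hRmX : resComp Rm = X₂ := pcs_res hXshape hch₂ hne
        rcases hall (j₁ + j₂ + 1) with ⟨M₂, hev₂'⟩ | ⟨j', hj', Rm', hne', hev', hr'⟩
        · obtain ⟨c, Z, hevZ, hcge, -⟩ := sim hev₂' Relation.ReflTransGen.refl
          exact absurd (hbound hevZ) (by omega)
        · have hT'nf : CNF (resComp Rm') := by
            cases Rm' with
            | omega => exact absurd rfl hne'
            | err => exact cnf_err
            | rtrue => exact cnf_ret _
            | rfalse => exact cnf_ret _
          obtain ⟨a₁, W₁, hevW₁, ha₁, hchW₁⟩ := sim hev' Relation.ReflTransGen.refl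
          obtain ⟨a₂, W₂, hevW₂, hnfW₂, hchW₂⟩ := simStuck hchW₁ hT'nf
          have hevW : CEvals M (a₁ + a₂) W₂ := cevals_trans hevW₁ hevW₂
          have hW₂X₂ : W₂ = X₂ := cevals_cnf_unique hevW hnfW₂ hevX hnf₂
          have hRm'X : resComp Rm' = X₂ := by
            rw [← hW₂X₂]
            exact pcs_res (hW₂X₂ ▸ hXshape) hchW₂ hne'
          have : Rm = Rm' := res_inj hne hne' (by rw [hRmX, hRm'X])
          rw [this]
          exact hr'

end GTTPaper
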